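/- arXiv:2310.08013 — 8 statements merged into one kernel-verified Lean document; each statement's English description precedes it below -/
import Mathlib

section
/- Define g : ℝ² → ℂ by g(x,y) = x·e^{iy} and σ : ℝ² → ℝ² by σ(x,y) = (−x, y+π). Let γ : ℝ² → ℂ be a smooth function with γ∘σ = γ that vanishes to infinite order on Z := {0}×ℝ. Then there exists a (unique) smooth function h : ℂ → ℂ with h∘g = γ, and h vanishes to infinite order at 0 ∈ ℂ. -/
/-!
STATEMENT 2. With `g(x,y) = x·e^{iy}` and `σ(x,y) = (−x, y+π)`: if `γ : ℝ² → ℂ` is smooth,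
`σ`-invariant and vanishes to infinite order on `Z = {0}×ℝ`, then there is a unique smooth
`h : ℂ → ℂ` with `h∘g = γ`, and `h` vanishes to infinite order at `0`.
-/

/-- The singular polar coordinate change `g(x,y) = x·e^{iy}`. -/
noncomputable def polarG : ℝ × ℝ → ℂ := fun p => (p.1 : ℂ) * Complex.exp (Complex.I * (p.2 : ℂ))

/-- `σ(x,y) = (−x, y + π)`. -/
noncomputable def sigmaMap : ℝ × ℝ → ℝ × ℝ := fun p => (-p.1, p.2 + Real.pi)

open Complex Set Filter

namespace Stmt2Aux

lemma nat_le_inftop (m : ℕ) : (m : WithTop ℕ∞) ≤ ((⊤ : ℕ∞) : WithTop ℕ∞) := by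
  exact_mod_cast (le_top : (m : ℕ∞) ≤ ⊤)

/-- Differentiability at `0` with derivative `0` from a quadratic bound. -/
lemma hasfd {F : Type} [NormedAddCommGroup F] [NormedSpace ℝ F] (f : ℂ → F)
    (h0 : f 0 = 0) (C : ℝ)
    (hest : ∀ z : ℂ, z ≠ 0 → ‖z‖ ≤ 1 → ‖f z‖ ≤ C * ‖z‖ ^ 2) :
    HasFDerivAt f (0 : ℂ →L[ℝ] F) 0 := by
  rw [hasFDerivAt_iff_isLittleO_nhds_zero]
  simp only [h0, ContinuousLinearMap.zero_apply, zero_add, sub_zero]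
  rw [Asymptotics.isLittleO_iff]
  intro c hc
  have hC1 : (0:ℝ) < max C 1 := lt_of_lt_of_le one_pos (le_max_right _ _)
  have hδ : (0:ℝ) < min 1 (c / max C 1) := lt_min one_pos (by positivity)
  filter_upwards [Metric.closedBall_mem_nhds (0:ℂ) hδ] with z hz
  simp only [Metric.mem_closedBall, dist_zero_right] at hz
  rcases eq_or_ne z 0 with rfl | hz0
  · simp [h0]
  · have h1 : ‖z‖ ≤ 1 := le_trans hz (min_le_left _ _)
    have h2 : ‖z‖ ≤ c / max C 1 := le_trans hz (min_le_right _ _)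
    have hn : (0:ℝ) ≤ ‖z‖ := norm_nonneg z
    calc ‖f z‖ ≤ C * ‖z‖ ^ 2 := hest z hz0 h1
      _ ≤ max C 1 * (‖z‖ * ‖z‖) := by
          rw [sq]; nlinarith [le_max_left C 1]
      _ ≤ max C 1 * ((c / max C 1) * ‖z‖) := by
          apply mul_le_mul_of_nonneg_left _ (le_of_lt hC1)
          exact mul_le_mul_of_nonneg_right h2 hn
      _ = c * ‖z‖ := by field_simp

/-- Key extension lemma: a function smooth away from `0`, vanishing at `0`, all of whose
iterated derivatives satisfy a quadratic bound near `0`, is `Cⁿ` with vanishing `n`-th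
derivative at `0`. -/
lemma flat_ext : ∀ (n : ℕ) (F : Type) [NormedAddCommGroup F] [NormedSpace ℝ F] (f : ℂ → F),
    (∀ (m : ℕ) (z : ℂ), z ≠ 0 → ContDiffAt ℝ (m : ℕ∞) f z) → f 0 = 0 →
    (∀ k : ℕ, ∃ C : ℝ, ∀ z : ℂ, z ≠ 0 → ‖z‖ ≤ 1 → ‖iteratedFDeriv ℝ k f z‖ ≤ C * ‖z‖ ^ 2) →
    ContDiff ℝ (n : ℕ∞) f ∧ iteratedFDeriv ℝ n f 0 = 0 := by
  intro n
  induction n with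
  | zero =>
    intro F _ _ f hsm h0 hest
    constructor
    · rw [show (((0:ℕ):ℕ∞) : WithTop ℕ∞) = 0 by norm_cast, contDiff_zero]
      rw [continuous_iff_continuousAt]
      intro z
      rcases eq_or_ne z 0 with rfl | hz
      · obtain ⟨C, hC⟩ := hest 0
        have hCb : ∀ᶠ w : ℂ in nhds 0, ‖f w‖ ≤ (max C 0) * ‖w‖ ^ 2 := by
          filter_upwards [Metric.closedBall_mem_nhds (0:ℂ) one_pos] with w hw
          simp only [Metric.mem_closedBall, dist_zero_right] at hw
          rcases eq_or_ne w 0 with rfl | hw0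
          · simp [h0]
          · have := hC w hw0 hw
            rw [norm_iteratedFDeriv_zero] at this
            have h2 : (0:ℝ) ≤ ‖w‖ ^ 2 := by positivity
            nlinarith [le_max_left C 0]
        have htend : Tendsto (fun w : ℂ => (max C 0) * ‖w‖ ^ 2) (nhds 0) (nhds 0) := by
          have : Continuous fun w : ℂ => (max C 0) * ‖w‖ ^ 2 := by continuity
          simpa using this.tendsto' 0 0 (by simp)
        unfold ContinuousAt
        rw [h0]
        exact squeeze_zero_norm' hCb htend
      · exact (hsm 0 z hz).continuousAt
    · ext m
      simp [h0]
  | succ n IH =>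
    intro F _ _ f hsm h0 hest
    have hd0 : HasFDerivAt f (0 : ℂ →L[ℝ] F) 0 := by
      obtain ⟨C, hC⟩ := hest 0
      refine hasfd f h0 C (fun z hz h1 => ?_)
      have := hC z hz h1
      simpa [norm_iteratedFDeriv_zero] using this
    have hdiff : Differentiable ℝ f := by
      intro z
      rcases eq_or_ne z 0 with rfl | hz
      · exact hd0.differentiableAt
      · exact (hsm 1 z hz).differentiableAt (by norm_cast)
    have IH' := IH (ℂ →L[ℝ] F) (fderiv ℝ f)
      (fun m z hz => (hsm (m+1) z hz).fderiv_right (by norm_cast))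
      hd0.fderiv
      (fun k => by
        obtain ⟨C, hC⟩ := hest (k+1)
        exact ⟨C, fun z hz h1 => by
          rw [norm_iteratedFDeriv_fderiv]; exact hC z hz h1⟩)
    constructor
    · have hcast : (((n+1:ℕ):ℕ∞) : WithTop ℕ∞) = ((n:ℕ∞) : WithTop ℕ∞) + 1 := by push_cast; rfl
      rw [hcast, contDiff_succ_iff_fderiv]
      refine ⟨hdiff, ?_, IH'.1⟩
      intro htop
      exfalso
      exact (by simp : ((n:ℕ∞) : WithTop ℕ∞) ≠ ⊤) htop
    · have hnorm : ‖iteratedFDeriv ℝ (n+1) f 0‖ = 0 := by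
        rw [← norm_iteratedFDeriv_fderiv, IH'.2, norm_zero]
      exact norm_eq_zero.1 hnorm

section Gamma

variable (γ : ℝ × ℝ → ℂ)

lemma gamma_zero (hvan : ∀ p : ℝ × ℝ, p.1 = 0 → ∀ n : ℕ, iteratedFDeriv ℝ n γ p = 0)
    (p : ℝ × ℝ) (hp : p.1 = 0) : γ p = 0 := by
  have h := congrArg norm (hvan p hp 0)
  rw [norm_iteratedFDeriv_zero, norm_zero] at h
  exact norm_eq_zero.1 h

lemma gamma_sigma (hinv : γ ∘ sigmaMap = γ) (x y : ℝ) :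
    γ (-x, y + Real.pi) = γ (x, y) := by
  have := congrFun hinv (x, y)
  simpa [sigmaMap] using this

lemma gamma_per (hinv : γ ∘ sigmaMap = γ) (x y : ℝ) (k : ℤ) :
    γ (x, y + k * (2 * Real.pi)) = γ (x, y) := by
  have hper : Function.Periodic (fun t => γ (x, t)) (2 * Real.pi) := by
    intro t
    have h1 := gamma_sigma γ hinv x t
    have h2 := gamma_sigma γ hinv (-x) (t + Real.pi)
    simp only [neg_neg] at h2
    calc γ (x, t + 2 * Real.pi) = γ (x, t + Real.pi + Real.pi) := by ring_nf
      _ = γ (-x, t + Real.pi) := h2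
      _ = γ (x, t) := h1
  exact (hper.int_mul k) y

lemma gamma_fiber (hinv : γ ∘ sigmaMap = γ) (p q : ℝ × ℝ) (hq : q.1 ≠ 0)
    (heq : polarG p = polarG q) : γ p = γ q := by
  obtain ⟨x₁, y₁⟩ := p
  obtain ⟨x₂, y₂⟩ := q
  simp only [polarG] at heq
  simp only at hq
  have habs : |x₁| = |x₂| := by
    have := congrArg norm heq
    simpa [norm_mul, Complex.norm_real, Complex.norm_exp] using this
  have hx1 : x₁ ≠ 0 := by
    intro h; rw [h, abs_zero] at habs; exact hq (abs_eq_zero.1 habs.symm)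
  have hx1' : (x₁ : ℂ) ≠ 0 := Complex.ofReal_ne_zero.2 hx1
  rcases abs_eq_abs.1 habs with h | h
  · -- x₁ = x₂
    rw [← h] at heq
    have hexp : Complex.exp (Complex.I * y₁) = Complex.exp (Complex.I * y₂) :=
      mul_left_cancel₀ hx1' heq
    obtain ⟨k, hk⟩ := Complex.exp_eq_exp_iff_exists_int.1 hexp
    have hy : y₁ = y₂ + k * (2 * Real.pi) := by
      have := congrArg Complex.im hk
      simpa [Complex.mul_im, Complex.mul_re] using this
    rw [hy, ← h]
    exact gamma_per γ hinv x₁ y₂ k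
  · -- x₁ = -x₂
    have hx2' : (x₂ : ℂ) ≠ 0 := Complex.ofReal_ne_zero.2 hq
    have heq2 : Complex.exp (Complex.I * y₁) = Complex.exp (Complex.I * (y₂ + Real.pi)) := by
      have hmm : Complex.exp (Complex.I * (y₂ + Real.pi)) =
          -Complex.exp (Complex.I * y₂) := by
        rw [mul_add, Complex.exp_add, mul_comm Complex.I (Real.pi:ℂ),
          Complex.exp_pi_mul_I]
        ring
      rw [hmm]
      have hcast : (x₁ : ℂ) = -(x₂ : ℂ) := by rw [h]; push_cast; ring
      rw [hcast] at heq
      have h3 : (x₂:ℂ) * Complex.exp (Complex.I * y₁) =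
          (x₂:ℂ) * (-Complex.exp (Complex.I * y₂)) := by linear_combination -heq
      exact mul_left_cancel₀ hx2' h3
    obtain ⟨k, hk⟩ := Complex.exp_eq_exp_iff_exists_int.1 heq2
    have hy : y₁ = (y₂ + Real.pi) + k * (2 * Real.pi) := by
      have := congrArg Complex.im hk
      simpa [Complex.mul_im, Complex.mul_re] using this
    rw [hy, h]
    rw [gamma_per γ hinv (-x₂) (y₂ + Real.pi) k]
    exact gamma_sigma γ hinv x₂ y₂

lemma gamma_flat (hγ : ContDiff ℝ (⊤ : ℕ∞) γ)
    (hvan : ∀ p : ℝ × ℝ, p.1 = 0 → ∀ n : ℕ, iteratedFDeriv ℝ n γ p = 0) :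
    ∀ (N k : ℕ), ∃ C : ℝ, 0 ≤ C ∧ ∀ p : ℝ × ℝ, |p.1| ≤ 1 → |p.2| ≤ 4 →
      ‖iteratedFDeriv ℝ k γ p‖ ≤ C * |p.1| ^ N := by
  intro N
  induction N with
  | zero =>
    intro k
    obtain ⟨C, hC⟩ := (isCompact_Icc (a := ((-1,-4):ℝ×ℝ)) (b := ((1,4):ℝ×ℝ))).exists_bound_of_continuousOn
      ((hγ.continuous_iteratedFDeriv (nat_le_inftop k)).continuousOn)
    refine ⟨max C 0, le_max_right _ _, fun p h1 h2 => ?_⟩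
    simp only [pow_zero, mul_one]
    refine le_trans (hC p ?_) (le_max_left _ _)
    rw [abs_le] at h1 h2
    constructor <;> rw [Prod.le_def] <;> constructor <;> simp [h1.1, h1.2, h2.1, h2.2]
  | succ N IHN =>
    intro k
    obtain ⟨C, hC0, hC⟩ := IHN (k+1)
    refine ⟨C, hC0, fun p h1 h2 => ?_⟩
    have hseg : ∀ q ∈ segment ℝ ((0:ℝ), p.2) p, |q.1| ≤ |p.1| ∧ q.2 = p.2 := by
      intro q hq
      rw [segment_eq_image] at hq
      obtain ⟨t, ht, rfl⟩ := hq
      simp only [Set.mem_Icc] at ht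
      constructor
      · simp only [Prod.fst_add, Prod.smul_fst, smul_eq_mul, mul_zero, zero_add]
        rw [abs_mul]
        calc |t| * |p.1| ≤ 1 * |p.1| := by
              apply mul_le_mul_of_nonneg_right _ (abs_nonneg _)
              rw [abs_le]; exact ⟨le_trans (by norm_num) ht.1, ht.2⟩
          _ = |p.1| := one_mul _
      · simp only [Prod.snd_add, Prod.smul_snd, smul_eq_mul]
        ring
    have hdiffable : ∀ q ∈ segment ℝ ((0:ℝ), p.2) p,
        DifferentiableAt ℝ (iteratedFDeriv ℝ k γ) q := by
      intro q _
      have : ContDiff ℝ (1 : ℕ∞) (iteratedFDeriv ℝ k γ) :=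
        hγ.iteratedFDeriv_right (by exact_mod_cast (le_top : ((1+k:ℕ) : ℕ∞) ≤ ⊤))
      exact (this.differentiable (by norm_cast)).differentiableAt
    have hbound : ∀ q ∈ segment ℝ ((0:ℝ), p.2) p,
        ‖fderiv ℝ (iteratedFDeriv ℝ k γ) q‖ ≤ C * |p.1| ^ N := by
      intro q hq
      obtain ⟨hq1, hq2⟩ := hseg q hq
      rw [norm_fderiv_iteratedFDeriv]
      calc ‖iteratedFDeriv ℝ (k+1) γ q‖ ≤ C * |q.1| ^ N :=
            hC q (le_trans hq1 h1) (by rw [hq2]; exact h2)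
        _ ≤ C * |p.1| ^ N := by
            apply mul_le_mul_of_nonneg_left _ hC0
            exact pow_le_pow_left₀ (abs_nonneg _) hq1 N
    have key := Convex.norm_image_sub_le_of_norm_fderiv_le hdiffable hbound
      (convex_segment _ _) (left_mem_segment ℝ _ _) (right_mem_segment ℝ _ _)
    have hzero : iteratedFDeriv ℝ k γ ((0:ℝ), p.2) = 0 := hvan _ rfl k
    rw [hzero, sub_zero] at key
    have hdist : ‖p - ((0:ℝ), p.2)‖ = |p.1| := by
      have : p - ((0:ℝ), p.2) = (p.1, (0:ℝ)) := by
        ext <;> simp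
      rw [this, Prod.norm_def]
      simp [Real.norm_eq_abs]
    rw [hdist] at key
    calc ‖iteratedFDeriv ℝ k γ p‖ ≤ C * |p.1| ^ N * |p.1| := key
      _ = C * |p.1| ^ (N + 1) := by ring
end Gamma

set_option maxHeartbeats 1000000 in
/-- Scaling bound: if `s` is smooth on a dilation-invariant open set `U ∌ 0` and
`s(r·w) = (r·(s w).1, (s w).2)` for `r > 0`, then iterated derivatives of `s` at `z`
are controlled by `(M/‖z‖)^i`, where `M` comes from a compact set of directions. -/

lemma section_bound (s : ℂ → ℝ × ℝ) (U : Set ℂ) (hUo : IsOpen U) (h0U : (0:ℂ) ∉ U)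
    (hs : ContDiffOn ℝ (⊤ : ℕ∞) s U)
    (hUsc : ∀ r : ℝ, 0 < r → ∀ z : ℂ, z ∈ U → (r : ℂ) * z ∈ U)
    (hhom : ∀ r : ℝ, 0 < r → ∀ w ∈ U, s ((r : ℂ) * w) = (r * (s w).1, (s w).2))
    (K : Set ℂ) (hK : IsCompact K) (hKU : K ⊆ U) (n : ℕ) :
    ∃ M : ℝ, 1 ≤ M ∧ ∀ i : ℕ, 1 ≤ i → i ≤ n → ∀ z ∈ U, ‖z‖ ≤ 1 →
      ((‖z‖⁻¹ : ℝ) : ℂ) * z ∈ K → ‖iteratedFDerivWithin ℝ i s U z‖ ≤ (M / ‖z‖) ^ i := by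
  have hUD : UniqueDiffOn ℝ U := hUo.uniqueDiffOn
  have hMs : ∀ i : ℕ, ∃ Mi : ℝ, ∀ w ∈ K, ‖iteratedFDerivWithin ℝ i s U w‖ ≤ Mi := fun i =>
    hK.exists_bound_of_continuousOn
      ((hs.continuousOn_iteratedFDerivWithin (nat_le_inftop i) hUD).mono hKU)
  choose Mf hMf using hMs
  have hsum : (0:ℝ) ≤ ∑ j ∈ Finset.range (n+1), max (Mf j) 0 :=
    Finset.sum_nonneg fun j _ => le_max_right _ _
  refine ⟨1 + ∑ j ∈ Finset.range (n+1), max (Mf j) 0, by linarith, ?_⟩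
  intro i hi1 hin z hzU hz1 hwK
  set M : ℝ := 1 + ∑ j ∈ Finset.range (n+1), max (Mf j) 0 with hM
  have hM1 : 1 ≤ M := by rw [hM]; linarith
  have hMfi : Mf i ≤ M := by
    have h1 : max (Mf i) 0 ≤ ∑ j ∈ Finset.range (n+1), max (Mf j) 0 :=
      Finset.single_le_sum (fun j _ => le_max_right (Mf j) 0)
        (Finset.mem_range.2 (Nat.lt_succ_of_le hin))
    calc Mf i ≤ max (Mf i) 0 := le_max_left _ _
      _ ≤ M := by rw [hM]; linarith
  have hz0 : z ≠ 0 := fun h => h0U (h ▸ hzU)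
  have hr0 : 0 < ‖z‖ := norm_pos_iff.2 hz0
  set r : ℝ := ‖z‖ with hr
  have hri : 0 < r⁻¹ := inv_pos.2 hr0
  set w : ℂ := ((r⁻¹ : ℝ) : ℂ) * z with hwdef
  have hwU : w ∈ U := hKU hwK
  set g : ℂ →L[ℝ] ℂ := (r⁻¹ : ℝ) • ContinuousLinearMap.id ℝ ℂ with hgdef
  set A : (ℝ × ℝ) →L[ℝ] (ℝ × ℝ) :=
    ((r⁻¹ : ℝ) • ContinuousLinearMap.fst ℝ ℝ ℝ).prod (ContinuousLinearMap.snd ℝ ℝ ℝ) with hAdef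
  have hgapp : ∀ v : ℂ, g v = ((r⁻¹ : ℝ) : ℂ) * v := by
    intro v; simp [hgdef, Complex.real_smul]
  have hAapp : ∀ v : ℝ × ℝ, A v = (r⁻¹ * v.1, v.2) := by
    intro v; simp [hAdef]
  have hgU : g ⁻¹' U = U := by
    ext v
    simp only [Set.mem_preimage, hgapp]
    constructor
    · intro hv
      have h2 := hUsc r hr0 _ hv
      rwa [show ((r:ℝ):ℂ) * (((r⁻¹:ℝ):ℂ) * v) = v by
        rw [← mul_assoc, ← Complex.ofReal_mul, mul_inv_cancel₀ (ne_of_gt hr0)]; simp] at h2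
    · intro hv
      exact hUsc r⁻¹ hri v hv
  have hgz : g z = w := by rw [hgapp]
  have hcr := ContinuousLinearMap.iteratedFDerivWithin_comp_right (f := s) g hs hUD
    (by rw [hgU]; exact hUD) (x := z) (by rw [hgz]; exact hwU) (i := i) (nat_le_inftop i)
  rw [hgU] at hcr
  have hEq : Set.EqOn (s ∘ g) (A ∘ s) U := by
    intro v hv
    simp only [Function.comp_apply, hgapp, hAapp]
    rw [hhom r⁻¹ hri v hv]
  have hcongr : iteratedFDerivWithin ℝ i (s ∘ g) U z
      = iteratedFDerivWithin ℝ i (A ∘ s) U z :=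
    iteratedFDerivWithin_congr hEq hzU i
  have hcl := A.iteratedFDerivWithin_comp_left (f := s) (hs z hzU) hUD hzU (i := i) (nat_le_inftop i)
  have hAB : A.compContinuousMultilinearMap (iteratedFDerivWithin ℝ i s U z)
      = (iteratedFDerivWithin ℝ i s U w).compContinuousLinearMap (fun _ => g) := by
    rw [← hcl, ← hcongr, hcr, hgz]
  have hkey : ∀ m : Fin i → ℂ,
      A (iteratedFDerivWithin ℝ i s U z m) =
        iteratedFDerivWithin ℝ i s U w (fun j => g (m j)) := by
    intro m
    have h2 := DFunLike.congr_fun hAB m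
    simpa using h2
  -- now bound the norm
  have hMpow : Mf i ≤ M ^ i := le_trans hMfi (le_self_pow₀ hM1 (by omega))
  have hpos : (0:ℝ) ≤ (M / r) ^ i := by positivity
  refine ContinuousMultilinearMap.opNorm_le_bound hpos ?_
  intro m
  set v := iteratedFDerivWithin ℝ i s U z m with hv
  set u := iteratedFDerivWithin ℝ i s U w (fun j => g (m j)) with hu
  have hAv : A v = u := hkey m
  have hv1 : v.1 = r * u.1 := by
    have h2 := congrArg Prod.fst hAv
    rw [hAapp] at h2
    simp only at h2
    rw [← h2, ← mul_assoc, mul_inv_cancel₀ (ne_of_gt hr0), one_mul]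
  have hv2 : v.2 = u.2 := by
    have := congrArg Prod.snd hAv
    rw [hAapp] at this
    exact this
  have hnv : ‖v‖ ≤ ‖u‖ := by
    rw [Prod.norm_def, Prod.norm_def, hv1, hv2]
    apply sup_le_sup_right
    rw [Real.norm_eq_abs, Real.norm_eq_abs, abs_mul, abs_of_pos hr0]
    calc r * |u.1| ≤ 1 * |u.1| := by
          apply mul_le_mul_of_nonneg_right hz1 (abs_nonneg _)
      _ = |u.1| := one_mul _
  have hng : ∀ j : Fin i, ‖g (m j)‖ = r⁻¹ * ‖m j‖ := by
    intro j
    rw [hgapp, norm_mul, Complex.norm_real, Real.norm_eq_abs, abs_of_pos hri]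
  have hprod : ∏ j : Fin i, (r⁻¹ * ‖m j‖) = r⁻¹ ^ i * ∏ j : Fin i, ‖m j‖ := by
    rw [Finset.prod_mul_distrib, Finset.prod_const]
    simp
  have hnu : ‖u‖ ≤ Mf i * (r⁻¹ ^ i * ∏ j : Fin i, ‖m j‖) := by
    calc ‖u‖ ≤ ‖iteratedFDerivWithin ℝ i s U w‖ * ∏ j : Fin i, ‖g (m j)‖ :=
          ContinuousMultilinearMap.le_opNorm _ _
      _ = ‖iteratedFDerivWithin ℝ i s U w‖ * (r⁻¹ ^ i * ∏ j : Fin i, ‖m j‖) := by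
          rw [show (∏ j : Fin i, ‖g (m j)‖) = ∏ j : Fin i, (r⁻¹ * ‖m j‖) from
            Finset.prod_congr rfl (fun j _ => hng j), hprod]
      _ ≤ Mf i * (r⁻¹ ^ i * ∏ j : Fin i, ‖m j‖) := by
          apply mul_le_mul_of_nonneg_right (hMf i w hwK)
          positivity
  have h4 : (0:ℝ) ≤ ∏ j : Fin i, ‖m j‖ := Finset.prod_nonneg fun j _ => norm_nonneg _
  have h5 : Mf i * r⁻¹ ^ i ≤ M ^ i / r ^ i := by
    rw [div_eq_mul_inv, ← inv_pow]
    exact mul_le_mul_of_nonneg_right hMpow (by positivity)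
  calc ‖v‖ ≤ ‖u‖ := hnv
    _ ≤ Mf i * (r⁻¹ ^ i * ∏ j : Fin i, ‖m j‖) := hnu
    _ = (Mf i * r⁻¹ ^ i) * ∏ j : Fin i, ‖m j‖ := by ring
    _ ≤ (M ^ i / r ^ i) * ∏ j : Fin i, ‖m j‖ := mul_le_mul_of_nonneg_right h5 h4
    _ = (M / r) ^ i * ∏ j : Fin i, ‖m j‖ := by rw [div_pow]

set_option maxHeartbeats 1000000 in
/-- On a scaling-invariant region with a polar-type section `s`, the iterated derivatives of
`γ ∘ s` are bounded by `c·‖z‖²` thanks to the flatness of `γ`. -/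
lemma region_est (γ : ℝ × ℝ → ℂ) (hγ : ContDiff ℝ (⊤ : ℕ∞) γ)
    (hvan : ∀ p : ℝ × ℝ, p.1 = 0 → ∀ n : ℕ, iteratedFDeriv ℝ n γ p = 0)
    (s : ℂ → ℝ × ℝ) (U : Set ℂ) (hUo : IsOpen U) (h0U : (0:ℂ) ∉ U)
    (hs : ContDiffOn ℝ (⊤ : ℕ∞) s U)
    (hUsc : ∀ r : ℝ, 0 < r → ∀ z : ℂ, z ∈ U → (r : ℂ) * z ∈ U)
    (hhom : ∀ r : ℝ, 0 < r → ∀ w ∈ U, s ((r : ℂ) * w) = (r * (s w).1, (s w).2))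
    (hfix : ∀ z ∈ U, |(s z).1| = ‖z‖ ∧ |(s z).2| ≤ 4)
    (K : Set ℂ) (hK : IsCompact K) (hKU : K ⊆ U) (n : ℕ) :
    ∃ c : ℝ, ∀ z ∈ U, ‖z‖ ≤ 1 → ((‖z‖⁻¹ : ℝ) : ℂ) * z ∈ K →
      ‖iteratedFDerivWithin ℝ n (γ ∘ s) U z‖ ≤ c * ‖z‖ ^ 2 := by
  obtain ⟨M, hM1, hMb⟩ := section_bound s U hUo h0U hs hUsc hhom K hK hKU n
  have hflat := fun k => gamma_flat γ hγ hvan (n+2) k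
  choose Cf hCf0 hCf using hflat
  have hsumC : (0:ℝ) ≤ ∑ j ∈ Finset.range (n+1), Cf j :=
    Finset.sum_nonneg fun j _ => hCf0 j
  obtain ⟨Cmax, hCmax0, hCfle⟩ : ∃ Cm : ℝ, 0 ≤ Cm ∧ ∀ k ≤ n, Cf k ≤ Cm := by
    refine ⟨1 + ∑ j ∈ Finset.range (n+1), Cf j, by linarith, ?_⟩
    intro k hk
    have h1 : Cf k ≤ ∑ j ∈ Finset.range (n+1), Cf j :=
      Finset.single_le_sum (fun j _ => hCf0 j) (Finset.mem_range.2 (Nat.lt_succ_of_le hk))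
    linarith
  refine ⟨n.factorial * Cmax * M ^ n, ?_⟩
  intro z hzU hz1 hwK
  have hz0 : z ≠ 0 := fun h => h0U (h ▸ hzU)
  have hr0 : 0 < ‖z‖ := norm_pos_iff.2 hz0
  have hC : ∀ i, i ≤ n →
      ‖iteratedFDerivWithin ℝ i γ Set.univ (s z)‖ ≤ Cmax * ‖z‖ ^ (n+2) := by
    intro i hi
    rw [iteratedFDerivWithin_univ]
    obtain ⟨hf1, hf2⟩ := hfix z hzU
    have h2 := hCf i (s z) (by rw [hf1]; exact hz1) hf2
    rw [hf1] at h2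
    calc ‖iteratedFDeriv ℝ i γ (s z)‖ ≤ Cf i * ‖z‖ ^ (n+2) := h2
      _ ≤ Cmax * ‖z‖ ^ (n+2) := by
          apply mul_le_mul_of_nonneg_right (hCfle i hi) (by positivity)
  have hD : ∀ i, 1 ≤ i → i ≤ n →
      ‖iteratedFDerivWithin ℝ i s U z‖ ≤ (M / ‖z‖) ^ i := fun i h1 h2 =>
    hMb i h1 h2 z hzU hz1 hwK
  have hcomp := norm_iteratedFDerivWithin_comp_le (g := γ) (f := s) (n := n)
    (s := U) (t := Set.univ) hγ.contDiffOn hs (nat_le_inftop n) uniqueDiffOn_univ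
    hUo.uniqueDiffOn (Set.mapsTo_univ s U) hzU hC hD
  calc ‖iteratedFDerivWithin ℝ n (γ ∘ s) U z‖
      ≤ n.factorial * (Cmax * ‖z‖ ^ (n+2)) * (M / ‖z‖) ^ n := hcomp
    _ = n.factorial * Cmax * M ^ n * ‖z‖ ^ 2 := by
        have hrn : (‖z‖:ℝ) ^ n ≠ 0 := by positivity
        rw [div_pow, pow_add, div_eq_mul_inv]
        calc (n.factorial : ℝ) * (Cmax * (‖z‖ ^ n * ‖z‖ ^ 2)) * (M ^ n * (‖z‖ ^ n)⁻¹)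
            = (n.factorial : ℝ) * Cmax * M ^ n * ‖z‖ ^ 2 * (‖z‖ ^ n * (‖z‖ ^ n)⁻¹) := by ring
          _ = (n.factorial : ℝ) * Cmax * M ^ n * ‖z‖ ^ 2 := by
              rw [mul_inv_cancel₀ hrn, mul_one]

noncomputable def s1 : ℂ → ℝ × ℝ :=
  fun z => (Real.exp ((Complex.log z).re), (Complex.log z).im)

noncomputable def s2 : ℂ → ℝ × ℝ :=
  fun z => (-Real.exp ((Complex.log (-z)).re), (Complex.log (-z)).im)

def U2 : Set ℂ := {z | -z ∈ Complex.slitPlane}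

lemma hU2o : IsOpen U2 := Complex.isOpen_slitPlane.preimage continuous_neg

lemma h0U1 : (0:ℂ) ∉ Complex.slitPlane := fun h => Complex.slitPlane_ne_zero h rfl

lemma h0U2 : (0:ℂ) ∉ U2 := fun h => Complex.slitPlane_ne_zero h (by simp)

lemma slit_scale : ∀ r : ℝ, 0 < r → ∀ z : ℂ, z ∈ Complex.slitPlane →
    (r : ℂ) * z ∈ Complex.slitPlane := by
  intro r hr z hz
  rw [Complex.mem_slitPlane_iff] at hz ⊢
  rcases hz with h | h
  · left
    simp only [Complex.mul_re, Complex.ofReal_re, Complex.ofReal_im, zero_mul, sub_zero]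
    positivity
  · right
    simp only [Complex.mul_im, Complex.ofReal_re, Complex.ofReal_im, zero_mul, add_zero]
    exact mul_ne_zero (ne_of_gt hr) h

lemma U2_scale : ∀ r : ℝ, 0 < r → ∀ z : ℂ, z ∈ U2 → (r : ℂ) * z ∈ U2 := by
  intro r hr z hz
  have : -((r:ℂ) * z) = (r:ℂ) * (-z) := by ring
  show -((r:ℂ) * z) ∈ Complex.slitPlane
  rw [this]
  exact slit_scale r hr _ hz

lemma s1_eq {z : ℂ} (hz : z ∈ Complex.slitPlane) :
    s1 z = (‖z‖, Complex.arg z) := by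
  have h0 : z ≠ 0 := Complex.slitPlane_ne_zero hz
  simp only [s1, Complex.log_re, Complex.log_im]
  rw [Real.exp_log (norm_pos_iff.2 h0)]

lemma s2_eq {z : ℂ} (hz : z ∈ U2) :
    s2 z = (-‖z‖, Complex.arg (-z)) := by
  have h0 : -z ≠ 0 := Complex.slitPlane_ne_zero hz
  simp only [s2, Complex.log_re, Complex.log_im]
  rw [Real.exp_log (norm_pos_iff.2 h0), norm_neg]

lemma hs1 : ContDiffOn ℝ (⊤ : ℕ∞) s1 Complex.slitPlane := by
  have hlog : ContDiffOn ℝ (⊤ : ℕ∞) Complex.log Complex.slitPlane := fun z hz =>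
    ((Complex.contDiffAt_log hz).restrict_scalars ℝ).contDiffWithinAt
  exact ContDiffOn.prodMk (Real.contDiff_exp.comp_contDiffOn
      (Complex.reCLM.contDiff.comp_contDiffOn hlog))
    (Complex.imCLM.contDiff.comp_contDiffOn hlog)

lemma hs2 : ContDiffOn ℝ (⊤ : ℕ∞) s2 U2 := by
  have hlog : ContDiffOn ℝ (⊤ : ℕ∞) (fun z => Complex.log (-z)) U2 := fun z hz =>
    (((Complex.contDiffAt_log hz).restrict_scalars ℝ).comp z
      (contDiff_neg.contDiffAt)).contDiffWithinAt
  exact ContDiffOn.prodMk ((Real.contDiff_exp.comp_contDiffOn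
      (Complex.reCLM.contDiff.comp_contDiffOn hlog)).neg)
    (Complex.imCLM.contDiff.comp_contDiffOn hlog)

lemma hhom1 : ∀ r : ℝ, 0 < r → ∀ w ∈ Complex.slitPlane,
    s1 ((r : ℂ) * w) = (r * (s1 w).1, (s1 w).2) := by
  intro r hr w hw
  rw [s1_eq (slit_scale r hr w hw), s1_eq hw]
  simp only [norm_mul, Complex.norm_real, Real.norm_eq_abs, Complex.arg_real_mul w hr, abs_of_pos hr]

lemma hhom2 : ∀ r : ℝ, 0 < r → ∀ w ∈ U2,
    s2 ((r : ℂ) * w) = (r * (s2 w).1, (s2 w).2) := by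
  intro r hr w hw
  rw [s2_eq (U2_scale r hr w hw), s2_eq hw]
  have hneg : -((r:ℂ) * w) = (r:ℂ) * (-w) := by ring
  rw [hneg, Complex.arg_real_mul (-w) hr]
  simp only [norm_mul, Complex.norm_real, Real.norm_eq_abs, norm_neg, abs_of_pos hr]
  rw [Prod.mk.injEq]
  exact ⟨by ring, rfl⟩

lemma hfix1 : ∀ z ∈ Complex.slitPlane, |(s1 z).1| = ‖z‖ ∧ |(s1 z).2| ≤ 4 := by
  intro z hz
  rw [s1_eq hz]
  constructor
  · exact abs_of_nonneg (norm_nonneg _)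
  · exact le_trans (Complex.abs_arg_le_pi z) (by linarith [Real.pi_le_four])

lemma hfix2 : ∀ z ∈ U2, |(s2 z).1| = ‖z‖ ∧ |(s2 z).2| ≤ 4 := by
  intro z hz
  rw [s2_eq hz]
  constructor
  · simp only [abs_neg]
    exact abs_of_nonneg (norm_nonneg _)
  · exact le_trans (Complex.abs_arg_le_pi (-z)) (by linarith [Real.pi_le_four])

def K1 : Set ℂ := Metric.sphere 0 1 ∩ {z | 0 ≤ z.re}
def K2 : Set ℂ := Metric.sphere 0 1 ∩ {z | z.re ≤ 0}

lemma hK1c : IsCompact K1 :=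
  (isCompact_sphere 0 1).inter_right (isClosed_le continuous_const Complex.continuous_re)

lemma hK2c : IsCompact K2 :=
  (isCompact_sphere 0 1).inter_right (isClosed_le Complex.continuous_re continuous_const)

lemma hK1U : K1 ⊆ Complex.slitPlane := by
  rintro z ⟨hs, hre⟩
  rw [mem_sphere_zero_iff_norm] at hs
  rw [Complex.mem_slitPlane_iff]
  have hre' : (0:ℝ) ≤ z.re := hre
  rcases lt_or_eq_of_le hre' with h | h
  · exact Or.inl h
  · right
    intro him
    have : z = 0 := by
      apply Complex.ext <;> simp [← h, him]
    rw [this] at hs; simp at hs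

lemma hK2U : K2 ⊆ U2 := by
  rintro z ⟨hs, hre⟩
  rw [mem_sphere_zero_iff_norm] at hs
  show -z ∈ Complex.slitPlane
  rw [Complex.mem_slitPlane_iff]
  simp only [Complex.neg_re, Complex.neg_im]
  have hre' : z.re ≤ (0:ℝ) := hre
  rcases lt_or_eq_of_le hre' with h | h
  · exact Or.inl (by linarith)
  · right
    intro him
    have : z = 0 := by
      apply Complex.ext <;> simp [h, neg_eq_zero.1 him]
    rw [this] at hs; simp at hs

lemma polar_eq (z : ℂ) : polarG (‖z‖, Complex.arg z) = z := by
  simp only [polarG]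
  rw [mul_comm Complex.I]
  exact Complex.norm_mul_exp_arg_mul_I z

lemma polar_eq_neg (z : ℂ) : polarG (-‖z‖, Complex.arg (-z)) = z := by
  simp only [polarG]
  push_cast
  rw [mul_comm Complex.I]
  have h := Complex.norm_mul_exp_arg_mul_I (-z)
  rw [norm_neg] at h
  linear_combination -h

end Stmt2Aux

open Stmt2Aux in
theorem stmt_2 (γ : ℝ × ℝ → ℂ) (hγ : ContDiff ℝ (⊤ : ℕ∞) γ)
    (hinv : γ ∘ sigmaMap = γ)
    (hvan : ∀ p : ℝ × ℝ, p.1 = 0 → ∀ n : ℕ, iteratedFDeriv ℝ n γ p = 0) :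
    ∃! h : ℂ → ℂ, ContDiff ℝ (⊤ : ℕ∞) h ∧ (∀ p : ℝ × ℝ, h (polarG p) = γ p) ∧
      (∀ n : ℕ, iteratedFDeriv ℝ n h 0 = 0) := by
  set h : ℂ → ℂ := fun z => γ (‖z‖, Complex.arg z) with hhdef
  have h0 : h 0 = 0 := by
    simp only [hhdef, map_zero, norm_zero, Complex.arg_zero]
    exact gamma_zero γ hvan (0, 0) rfl
  -- membership helpers
  have hmem1 : ∀ z : ℂ, z ≠ 0 → 0 ≤ z.re → z ∈ Complex.slitPlane := by
    intro z hz0 hre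
    rw [Complex.mem_slitPlane_iff]
    rcases lt_or_eq_of_le hre with hlt | heq
    · exact Or.inl hlt
    · right
      intro him
      exact hz0 (Complex.ext (by simp [← heq]) (by simp [him]))
  have hmem2 : ∀ z : ℂ, z ≠ 0 → z.re < 0 → z ∈ U2 := by
    intro z _ hre
    show -z ∈ Complex.slitPlane
    rw [Complex.mem_slitPlane_iff]
    left
    simp only [Complex.neg_re]
    linarith
  -- equality on regions
  have hEq1 : Set.EqOn h (γ ∘ s1) Complex.slitPlane := by
    intro z hz
    simp only [hhdef, Function.comp_apply, s1_eq hz]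
  have hEq2 : Set.EqOn h (γ ∘ s2) U2 := by
    intro z hz
    have hz0 : z ≠ 0 := fun hzz => h0U2 (hzz ▸ hz)
    simp only [hhdef, Function.comp_apply, s2_eq hz]
    refine gamma_fiber γ hinv (‖z‖, Complex.arg z)
      (-‖z‖, Complex.arg (-z)) ?_ ?_
    · simp only [ne_eq, neg_eq_zero]
      exact fun habs => hz0 (norm_eq_zero.1 habs)
    · rw [polar_eq z, polar_eq_neg z]
  -- smoothness away from zero
  have hsm : ∀ (m : ℕ) (z : ℂ), z ≠ 0 → ContDiffAt ℝ (m : ℕ∞) h z := by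
    intro m z hz0
    rcases le_or_gt 0 z.re with hre | hre
    · have hzU := hmem1 z hz0 hre
      have hcd : ContDiffAt ℝ (⊤ : ℕ∞) (γ ∘ s1) z :=
        (hγ.comp_contDiffOn hs1).contDiffAt (Complex.isOpen_slitPlane.mem_nhds hzU)
      exact (hcd.of_le (nat_le_inftop m)).congr_of_eventuallyEq
        (Filter.eventuallyEq_of_mem (Complex.isOpen_slitPlane.mem_nhds hzU) hEq1)
    · have hzU := hmem2 z hz0 hre
      have hcd : ContDiffAt ℝ (⊤ : ℕ∞) (γ ∘ s2) z :=
        (hγ.comp_contDiffOn hs2).contDiffAt (hU2o.mem_nhds hzU)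
      exact (hcd.of_le (nat_le_inftop m)).congr_of_eventuallyEq
        (Filter.eventuallyEq_of_mem (hU2o.mem_nhds hzU) hEq2)
  -- quadratic estimates near zero
  have hest : ∀ k : ℕ, ∃ C : ℝ, ∀ z : ℂ, z ≠ 0 → ‖z‖ ≤ 1 →
      ‖iteratedFDeriv ℝ k h z‖ ≤ C * ‖z‖ ^ 2 := by
    intro k
    obtain ⟨c₁, hc₁⟩ := region_est γ hγ hvan s1 Complex.slitPlane Complex.isOpen_slitPlane
      h0U1 hs1 slit_scale hhom1 hfix1 K1 hK1c hK1U k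
    obtain ⟨c₂, hc₂⟩ := region_est γ hγ hvan s2 U2 hU2o h0U2 hs2 U2_scale hhom2 hfix2
      K2 hK2c hK2U k
    refine ⟨max c₁ c₂, ?_⟩
    intro z hz0 hz1
    have hr0 : 0 < ‖z‖ := norm_pos_iff.2 hz0
    have hw1 : ‖((‖z‖⁻¹ : ℝ) : ℂ) * z‖ = 1 := by
      rw [norm_mul, Complex.norm_real, Real.norm_eq_abs, abs_of_pos (inv_pos.2 hr0)]
      field_simp
    have hwre : (((‖z‖⁻¹ : ℝ) : ℂ) * z).re = ‖z‖⁻¹ * z.re := by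
      simp [Complex.mul_re]
    have hsq : (0:ℝ) ≤ ‖z‖ ^ 2 := by positivity
    rcases le_or_gt 0 z.re with hre | hre
    · have hzU := hmem1 z hz0 hre
      have hwK : ((‖z‖⁻¹ : ℝ) : ℂ) * z ∈ K1 := by
        constructor
        · rw [mem_sphere_zero_iff_norm]; exact hw1
        · show (0:ℝ) ≤ _
          rw [hwre]
          exact mul_nonneg (by positivity) hre
      have heq : iteratedFDeriv ℝ k h z
          = iteratedFDerivWithin ℝ k (γ ∘ s1) Complex.slitPlane z := by
        rw [← iteratedFDerivWithin_of_isOpen k Complex.isOpen_slitPlane hzU]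
        exact (iteratedFDerivWithin_congr hEq1 hzU k)
      rw [heq]
      exact le_trans (hc₁ z hzU hz1 hwK)
        (mul_le_mul_of_nonneg_right (le_max_left _ _) hsq)
    · have hzU := hmem2 z hz0 hre
      have hwK : ((‖z‖⁻¹ : ℝ) : ℂ) * z ∈ K2 := by
        constructor
        · rw [mem_sphere_zero_iff_norm]; exact hw1
        · show _ ≤ (0:ℝ)
          rw [hwre]
          exact mul_nonpos_of_nonneg_of_nonpos (by positivity) (le_of_lt hre)
      have heq : iteratedFDeriv ℝ k h z = iteratedFDerivWithin ℝ k (γ ∘ s2) U2 z := by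
        rw [← iteratedFDerivWithin_of_isOpen k hU2o hzU]
        exact (iteratedFDerivWithin_congr hEq2 hzU k)
      rw [heq]
      exact le_trans (hc₂ z hzU hz1 hwK)
        (mul_le_mul_of_nonneg_right (le_max_right _ _) hsq)
  have main := fun n => flat_ext n ℂ h hsm h0 hest
  have hcomp : ∀ p : ℝ × ℝ, h (polarG p) = γ p := by
    intro p
    rcases eq_or_ne p.1 0 with hp | hp
    · have hpg : polarG p = 0 := by simp [polarG, hp]
      rw [hpg, h0, gamma_zero γ hvan p hp]
    · show γ (‖polarG p‖, Complex.arg (polarG p)) = γ p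
      exact gamma_fiber γ hinv _ p hp (polar_eq (polarG p))
  refine ⟨h, ⟨contDiff_infty.2 (fun n => (main n).1), hcomp, fun n => (main n).2⟩, ?_⟩
  rintro h' ⟨_, h'c, _⟩
  funext z
  have h1 := h'c (‖z‖, Complex.arg z)
  rw [polar_eq z] at h1
  exact h1
end

section
/- Let γ : ℂ → ℂ be smooth (as a function on ℝ² = ℂ) and vanish to infinite order at 0. Then there exist smooth functions γ₁, γ₂ : ℂ → ℂ, each vanishing to infinite order at 0, such that γ(z) = z·γ₁(z) and γ(z) = conj(z)·γ₂(z) for all z ∈ ℂ. -/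
/-!
STATEMENT 3. If `γ : ℂ → ℂ` is smooth (as a function on `ℝ² = ℂ`) and vanishes to infinite
order at `0`, then `γ = z·γ₁ = conj(z)·γ₂` with `γ₁, γ₂` smooth and vanishing to infinite
order at `0`.
-/

open Complex


lemma hasDerivAt_pow_inv (k : ℕ) (z : ℂ) (hz : z ≠ 0) :
    HasDerivAt (fun w : ℂ => (w ^ k)⁻¹) (-(k:ℂ) * (z ^ (k+1))⁻¹) z := by
  have h1 : HasDerivAt (fun w : ℂ => w ^ k) ((k:ℂ) * z ^ (k-1)) z := by
    simpa using hasDerivAt_pow k z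
  have h2 : HasDerivAt (fun w : ℂ => (w ^ k)⁻¹) _ z := h1.inv (pow_ne_zero k hz)
  convert h2 using 1
  rcases Nat.eq_zero_or_pos k with hk | hk
  · subst hk; simp
  · have e1 : (z ^ k) ^ 2 = z ^ (2*k) := by rw [← pow_mul, mul_comm]
    have e2 : z ^ (k-1) * z ^ (k+1) = z ^ (2*k) := by
      rw [← pow_add]; congr 1; omega
    rw [e1, ← e2]
    field_simp

variable {E F : Type} [NormedAddCommGroup E] [NormedSpace ℝ E]
  [NormedAddCommGroup F] [NormedSpace ℝ F]

def Flat (f : ℂ → E) : Prop :=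
  ContDiff ℝ (⊤:ℕ∞) f ∧ ∀ n : ℕ, iteratedFDeriv ℝ n f 0 = 0

lemma flat_zero_eval {f : ℂ → E} (hf : Flat f) : f 0 = 0 := by
  have h : ‖f 0‖ = 0 := by rw [← norm_iteratedFDeriv_zero (𝕜 := ℝ), hf.2 0, norm_zero]
  exact norm_eq_zero.mp h

lemma flat_fderiv {f : ℂ → E} (hf : Flat f) : Flat (fderiv ℝ f) := by
  constructor
  · exact (contDiff_infty_iff_fderiv.mp hf.1).2
  · intro n
    have h : ‖iteratedFDeriv ℝ n (fderiv ℝ f) 0‖ = ‖iteratedFDeriv ℝ (n+1) f 0‖ :=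
      norm_iteratedFDeriv_fderiv
    rw [hf.2 (n+1), norm_zero] at h
    exact norm_eq_zero.mp h

lemma flat_diff {f : ℂ → E} (hf : Flat f) : Differentiable ℝ f :=
  (contDiff_infty_iff_fderiv.mp hf.1).1

lemma flat_clm_comp {f : ℂ → E} (L : E →L[ℝ] F) (hf : Flat f) : Flat (fun z => L (f z)) := by
  refine ⟨L.contDiff.comp hf.1, fun n => ?_⟩
  have h := L.iteratedFDeriv_comp_left (x := (0:ℂ)) hf.1.contDiffAt (i := n) (by exact_mod_cast le_top)
  show iteratedFDeriv ℝ n (⇑L ∘ f) 0 = 0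
  rw [h, hf.2 n]
  ext m
  simp

lemma flat_add {f g : ℂ → E} (hf : Flat f) (hg : Flat g) : Flat (fun z => f z + g z) := by
  refine ⟨hf.1.add hg.1, fun n => ?_⟩
  have : (fun z => f z + g z) = f + g := rfl
  rw [this, iteratedFDeriv_add_apply (hf.1.of_le (by exact_mod_cast le_top)).contDiffAt
    (hg.1.of_le (by exact_mod_cast le_top)).contDiffAt, hf.2 n, hg.2 n, add_zero]

lemma flat_est : ∀ (k : ℕ) (E : Type) (_ : NormedAddCommGroup E) (_ : @NormedSpace ℝ E _ _)
    (f : ℂ → E), Flat f → ∀ ε : ℝ, 0 < ε → ∃ δ : ℝ, 0 < δ ∧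
      ∀ z : ℂ, ‖z‖ ≤ δ → ‖f z‖ ≤ ε * ‖z‖ ^ k := by
  intro k
  induction k with
  | zero =>
    intro E _ _ f hf ε hε
    have hc : ContinuousAt f 0 := hf.1.continuous.continuousAt
    rw [Metric.continuousAt_iff] at hc
    obtain ⟨δ, hδ, h⟩ := hc ε hε
    refine ⟨δ/2, by positivity, fun z hz => ?_⟩
    rcases eq_or_ne z 0 with rfl | hz0
    · simp [flat_zero_eval hf]; positivity
    · have := h (x := z) (by simpa [dist_eq_norm] using lt_of_le_of_lt hz (by linarith))
      rw [dist_eq_norm, flat_zero_eval hf, sub_zero] at this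
      simpa using this.le
  | succ k ih =>
    intro E _ _ f hf ε hε
    obtain ⟨δ, hδ, h⟩ := ih (ℂ →L[ℝ] E) inferInstance inferInstance (fderiv ℝ f)
      (flat_fderiv hf) ε hε
    refine ⟨δ, hδ, fun z hz => ?_⟩
    have key : ‖f z - f 0‖ ≤ (ε * ‖z‖ ^ k) * ‖z - 0‖ := by
      refine (convex_closedBall (0:ℂ) ‖z‖).norm_image_sub_le_of_norm_fderiv_le
        (fun x _ => (flat_diff hf).differentiableAt) (fun x hx => ?_) ?_ ?_
      · have hxz : ‖x‖ ≤ ‖z‖ := by simpa [Metric.mem_closedBall, dist_eq_norm] using hx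
        calc ‖fderiv ℝ f x‖ ≤ ε * ‖x‖ ^ k := h x (hxz.trans hz)
          _ ≤ ε * ‖z‖ ^ k := by
            gcongr
      · simp [Metric.mem_closedBall]
      · simp [Metric.mem_closedBall]
    rw [flat_zero_eval hf, sub_zero, sub_zero] at key
    calc ‖f z‖ ≤ (ε * ‖z‖ ^ k) * ‖z‖ := key
      _ = ε * ‖z‖ ^ (k+1) := by ring

section main
variable {E' : Type} [NormedAddCommGroup E'] [NormedSpace ℂ E']

noncomputable def LLaux (k : ℕ) : E' →ₗ[ℝ] (ℂ →L[ℝ] E') where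
  toFun v := (-(k:ℂ)) • ((1 : ℂ →L[ℝ] ℂ).smulRight v)
  map_add' v w := by
    ext u
    simp only [ContinuousLinearMap.smul_apply, ContinuousLinearMap.smulRight_apply,
      ContinuousLinearMap.one_apply, ContinuousLinearMap.add_apply]
    rw [smul_add, smul_add]
  map_smul' r v := by
    ext u
    simp only [ContinuousLinearMap.smul_apply, ContinuousLinearMap.smulRight_apply,
      ContinuousLinearMap.one_apply, RingHom.id_apply]
    module

noncomputable def LL (k : ℕ) : E' →L[ℝ] (ℂ →L[ℝ] E') :=
  LinearMap.mkContinuous (LLaux k) (k:ℝ) (by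
    intro v
    show ‖(-(k:ℂ)) • ((1 : ℂ →L[ℝ] ℂ).smulRight v)‖ ≤ _
    refine ContinuousLinearMap.opNorm_le_bound _ (by positivity) (fun u => ?_)
    simp only [ContinuousLinearMap.smul_apply, ContinuousLinearMap.smulRight_apply,
      ContinuousLinearMap.one_apply]
    rw [norm_smul, norm_smul]
    simp only [norm_neg, Complex.norm_natCast]
    calc (k:ℝ) * (‖u‖ * ‖v‖) = (k:ℝ) * ‖v‖ * ‖u‖ := by ring
      _ ≤ _ := le_refl _)

lemma LL_apply (k : ℕ) (v : E') : LL (E' := E') k v = (-(k:ℂ)) • ((1 : ℂ →L[ℝ] ℂ).smulRight v) := rfl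

lemma hasFDerivAt_gk (k : ℕ) (f : ℂ → E') (hf : Flat f) (z : ℂ) :
    HasFDerivAt (fun w => (w^k)⁻¹ • f w)
      ((z^k)⁻¹ • fderiv ℝ f z + (z^(k+1))⁻¹ • (LL k (f z))) z := by
  rcases eq_or_ne z 0 with rfl | hz
  · have hval : (0:ℂ)^k = if k = 0 then 1 else 0 := by split <;> simp_all
    have h0 : ((0:ℂ)^k)⁻¹ • fderiv ℝ f 0 + ((0:ℂ)^(k+1))⁻¹ • (LL k (f 0)) = 0 := by
      rw [flat_zero_eval hf, flat_fderiv hf |> flat_zero_eval]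
      have : LL (E' := E') k 0 = 0 := by ext u; simp [LL_apply]
      rw [this]
      simp
    rw [h0]
    rw [hasFDerivAt_iff_isLittleO_nhds_zero]
    rw [Asymptotics.isLittleO_iff]
    intro c hc
    obtain ⟨δ, hδ, hest⟩ := flat_est (k+1) E' inferInstance inferInstance f hf c hc
    rw [Metric.eventually_nhds_iff]
    refine ⟨δ, hδ, fun w hw => ?_⟩
    rw [dist_zero_right] at hw
    simp only [zero_add, ContinuousLinearMap.zero_apply, sub_zero, flat_zero_eval hf, smul_zero]
    rcases eq_or_ne w 0 with rfl | hw0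
    · simp [flat_zero_eval hf]
    · rw [norm_smul, norm_inv, norm_pow]
      have h1 : ‖f w‖ ≤ c * ‖w‖^(k+1) := hest w hw.le
      have h2 : (0:ℝ) < ‖w‖ := by simpa using hw0
      rw [pow_succ] at h1
      calc (‖w‖^k)⁻¹ * ‖f w‖ ≤ (‖w‖^k)⁻¹ * (c * ‖w‖^k * ‖w‖) := by
            gcongr
            linarith [h1]
        _ = c * ‖w‖ := by
            rw [show (‖w‖^k)⁻¹ * (c*‖w‖^k*‖w‖) = c*‖w‖*(‖w‖^k*(‖w‖^k)⁻¹) from by ring,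
              mul_inv_cancel₀ (by positivity), mul_one]
  · have hc := (hasDerivAt_pow_inv k z hz).complexToReal_fderiv
    have h : HasFDerivAt (fun w => (w^k)⁻¹ • f w) _ z := hc.smul ((flat_diff hf z).hasFDerivAt)
    convert h using 1
    congr 1
    ext w
    simp [LL_apply, ContinuousLinearMap.smulRight_apply, smul_smul]
    ring_nf

lemma gk_diff (k : ℕ) (f : ℂ → E') (hf : Flat f) :
    Differentiable ℝ (fun z : ℂ => (z^k)⁻¹ • f z) :=
  fun z => (hasFDerivAt_gk k f hf z).differentiableAt

lemma gk_fderiv (k : ℕ) (f : ℂ → E') (hf : Flat f) :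
    fderiv ℝ (fun z : ℂ => (z^k)⁻¹ • f z) = fun z =>
      (z^k)⁻¹ • fderiv ℝ f z + (z^(k+1))⁻¹ • (LL k (f z)) :=
  funext fun z => (hasFDerivAt_gk k f hf z).fderiv

lemma flat_LL_comp (k : ℕ) (f : ℂ → E') (hf : Flat f) : Flat (fun z => LL (E' := E') k (f z)) :=
  flat_clm_comp (LL k) hf

lemma main_ind : ∀ (m : ℕ) (E' : Type) (_ : NormedAddCommGroup E') (_ : @NormedSpace ℂ E' _ _)
    (k : ℕ) (f : ℂ → E'), Flat f →
    ContDiff ℝ (m:ℕ∞) (fun z : ℂ => (z^k)⁻¹ • f z) ∧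
      iteratedFDeriv ℝ m (fun z : ℂ => (z^k)⁻¹ • f z) 0 = 0 := by
  intro m
  induction m with
  | zero =>
    intro E' _ _ k f hf
    constructor
    · rw [show ((0:ℕ):ℕ∞) = 0 from rfl]
      exact contDiff_zero.2 (gk_diff k f hf).continuous
    · have h0 : (fun z : ℂ => (z^k)⁻¹ • f z) 0 = 0 := by simp [flat_zero_eval hf]
      ext m
      simp [iteratedFDeriv_zero_apply, h0]
  | succ m ih =>
    intro E' _ _ k f hf
    have hA := ih (ℂ →L[ℝ] E') inferInstance inferInstance k (fderiv ℝ f) (flat_fderiv hf)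
    have hB := ih (ℂ →L[ℝ] E') inferInstance inferInstance (k+1) (fun z => LL k (f z))
      (flat_LL_comp k f hf)
    have hd : fderiv ℝ (fun z : ℂ => (z^k)⁻¹ • f z) =
        fun z => (fun z : ℂ => (z^k)⁻¹ • fderiv ℝ f z) z
          + (fun z : ℂ => (z^(k+1))⁻¹ • (LL k (f z))) z := gk_fderiv k f hf
    have hCD : ContDiff ℝ (m:ℕ∞) (fderiv ℝ (fun z : ℂ => (z^k)⁻¹ • f z)) := by
      rw [hd]; exact hA.1.add hB.1
    constructor
    · have : ContDiff ℝ ((m:ℕ∞)+1) (fun z : ℂ => (z^k)⁻¹ • f z) := by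
        rw [contDiff_succ_iff_fderiv]
        exact ⟨gk_diff k f hf, by simp, hCD⟩
      exact_mod_cast this
    · have hnorm : ‖iteratedFDeriv ℝ (m+1) (fun z : ℂ => (z^k)⁻¹ • f z) 0‖
          = ‖iteratedFDeriv ℝ m (fderiv ℝ (fun z : ℂ => (z^k)⁻¹ • f z)) 0‖ :=
        norm_iteratedFDeriv_fderiv.symm
      have hB1 : ContDiff ℝ (m:ℕ∞) (fun z : ℂ => (z^(k+1))⁻¹ • LL k (f z)) := hB.1
      have hB2 : iteratedFDeriv ℝ m (fun z : ℂ => (z^(k+1))⁻¹ • LL k (f z)) 0 = 0 := hB.2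
      have : iteratedFDeriv ℝ m (fderiv ℝ (fun z : ℂ => (z^k)⁻¹ • f z)) 0 = 0 := by
        rw [hd]
        have h2 := iteratedFDeriv_add_apply (i := m) (x := (0:ℂ)) hA.1.contDiffAt hB1.contDiffAt
        exact h2.trans (by rw [hA.2, hB2, add_zero])
      rw [this, norm_zero] at hnorm
      exact norm_eq_zero.mp hnorm

lemma flat_gk (k : ℕ) (f : ℂ → E') (hf : Flat f) : Flat (fun z : ℂ => (z^k)⁻¹ • f z) := by
  constructor
  · exact contDiff_infty.2 fun n => (main_ind n E' inferInstance inferInstance k f hf).1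
  · exact fun n => (main_ind n E' inferInstance inferInstance k f hf).2

end main

lemma flat_div_z {f : ℂ → ℂ} (hf : Flat f) :
    Flat (fun z : ℂ => (z^1)⁻¹ • f z) ∧ ∀ z : ℂ, f z = z * ((z^1)⁻¹ • f z) := by
  refine ⟨flat_gk 1 f hf, fun z => ?_⟩
  rcases eq_or_ne z 0 with rfl | hz
  · simp [flat_zero_eval hf]
  · simp only [pow_one, smul_eq_mul]
    field_simp

lemma flat_conj {f : ℂ → ℂ} (hf : Flat f) : Flat (fun z => (starRingEnd ℂ) (f z)) := by
  exact flat_clm_comp (Complex.conjCLE.toContinuousLinearMap) hf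

theorem stmt_3 (γ : ℂ → ℂ) (hγ : ContDiff ℝ (⊤ : ℕ∞) γ)
    (hvan : ∀ n : ℕ, iteratedFDeriv ℝ n γ 0 = 0) :
    ∃ γ₁ γ₂ : ℂ → ℂ,
      ContDiff ℝ (⊤ : ℕ∞) γ₁ ∧ ContDiff ℝ (⊤ : ℕ∞) γ₂ ∧
      (∀ n : ℕ, iteratedFDeriv ℝ n γ₁ 0 = 0) ∧
      (∀ n : ℕ, iteratedFDeriv ℝ n γ₂ 0 = 0) ∧
      (∀ z : ℂ, γ z = z * γ₁ z) ∧
      (∀ z : ℂ, γ z = (starRingEnd ℂ) z * γ₂ z) := by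
  have hγf : Flat γ := ⟨hγ, hvan⟩
  obtain ⟨h1, h1eq⟩ := flat_div_z hγf
  have hconj : Flat (fun z => (starRingEnd ℂ) (γ z)) := flat_conj hγf
  obtain ⟨h2, h2eq⟩ := flat_div_z hconj
  have h2' : Flat (fun z : ℂ => (starRingEnd ℂ) ((z^1)⁻¹ • (starRingEnd ℂ) (γ z))) :=
    flat_conj h2
  refine ⟨fun z : ℂ => (z^1)⁻¹ • γ z,
    fun z : ℂ => (starRingEnd ℂ) ((z^1)⁻¹ • (starRingEnd ℂ) (γ z)),
    h1.1, h2'.1, h1.2, h2'.2, h1eq, fun z => ?_⟩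
  have := h2eq z
  calc γ z = (starRingEnd ℂ) ((starRingEnd ℂ) (γ z)) := by simp
    _ = (starRingEnd ℂ) (z * ((z^1)⁻¹ • (starRingEnd ℂ) (γ z))) := by rw [← this]
    _ = (starRingEnd ℂ) z * (starRingEnd ℂ) ((z^1)⁻¹ • (starRingEnd ℂ) (γ z)) := by
      rw [map_mul]
end

section
/- Let γ : ℝ² → ℂ be smooth and vanish to infinite order on Z := {0}×ℝ, let U₀ ⊆ ℝ² be an open neighbourhood of (0,0), and let f : U₀ → ℂ be smooth with: (i) (1/2)(x·∂_x f + i·∂_y f)(x,y) + γ(x,y)·(1/2)(x·∂_x f − i·∂_y f)(x,y) = 0 on U₀; (ii) f = 0 on U₀ ∩ Z; (iii) ∂_x f(0,0) = 1. Then there exist an open set U with (0,0) ∈ U ⊆ U₀ and smooth functions a, b : U → ℝ such that f(x,y) = x·(a(x,y) + i·b(x,y)) on U, a is nowhere vanishing on U, and the map F : U → ℝ², F(x,y) = (x·a(x,y), b(x,y)/a(x,y)), is a smooth diffeomorphism onto an open set F(U) ⊆ ℝ² satisfying F(0,0) = (0,0), F(U ∩ Z) = F(U) ∩ Z, and f =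 κ∘F on U, where κ : ℝ² → ℝ² = ℂ is κ(x,y) = (x, x·y). -/
open MeasureTheory intervalIntegral


set_option synthInstance.maxHeartbeats 1000000 in
set_option maxHeartbeats 1000000 in
lemma paramInt (n : ℕ) {E : Type*} [NormedAddCommGroup E] [NormedSpace ℝ E] [CompleteSpace E]
    (h : (ℝ × ℝ) × ℝ → E) (hh : ContDiff ℝ (⊤ : ℕ∞) h) :
    ContDiff ℝ (n : ℕ∞) (fun p : ℝ × ℝ => ∫ t in (0:ℝ)..1, h (p, t)) := by
  induction n generalizing E with
  | zero =>
    refine contDiff_zero.2 ?_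
    exact continuous_parametric_intervalIntegral_of_continuous'
      (by exact hh.continuous.comp (by fun_prop) : Continuous (Function.uncurry fun p t => h (p,t))) 0 1
  | succ n ih =>
    set h' : (ℝ × ℝ) × ℝ → (ℝ × ℝ) →L[ℝ] E :=
      fun q => (fderiv ℝ h q).comp (ContinuousLinearMap.inl ℝ (ℝ × ℝ) ℝ) with hh'def
    have hh' : ContDiff ℝ (⊤ : ℕ∞) h' :=
      (hh.fderiv_right (by simp)).clm_comp contDiff_const
    have key : ∀ p₀ : ℝ × ℝ, HasFDerivAt (fun p : ℝ × ℝ => ∫ t in (0:ℝ)..1, h (p, t))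
        (∫ t in (0:ℝ)..1, h' (p₀, t)) p₀ := by
      intro p₀
      obtain ⟨C, hC⟩ : ∃ C, ∀ q ∈ (Metric.closedBall p₀ 1) ×ˢ Set.Icc (0:ℝ) 1, ‖h' q‖ ≤ C := by
        rcases ((isCompact_closedBall p₀ 1).prod isCompact_Icc).exists_bound_of_continuousOn
          hh'.continuous.continuousOn with ⟨C, hC⟩
        exact ⟨C, hC⟩
      have hdiff : ∀ (x : ℝ × ℝ) (t : ℝ), HasFDerivAt (fun y : ℝ × ℝ => h (y, t)) (h' (x, t)) x := by
        intro x t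
        exact ((hh.differentiable (by simp)) (x,t)).hasFDerivAt.comp x (hasFDerivAt_prodMk_left x t)
      have := intervalIntegral.hasFDerivAt_integral_of_dominated_loc_of_lip
        (F := fun (x : ℝ × ℝ) (t : ℝ) => h (x, t)) (F' := fun t => h' (p₀, t)) (x₀ := p₀)
        (a := 0) (b := 1) (μ := volume) (bound := fun _ => max C 0) (s := Metric.ball p₀ 1) (Metric.ball_mem_nhds p₀ one_pos)
        (Filter.Eventually.of_forall fun x =>
          (hh.continuous.comp (by fun_prop : Continuous fun t : ℝ => ((x, t) : (ℝ×ℝ)×ℝ))).aestronglyMeasurable)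
        ((hh.continuous.comp (by fun_prop : Continuous fun t : ℝ => ((p₀, t) : (ℝ×ℝ)×ℝ))).intervalIntegrable 0 1)
        ((hh'.continuous.comp (by fun_prop : Continuous fun t : ℝ => ((p₀, t) : (ℝ×ℝ)×ℝ))).aestronglyMeasurable)
        (Filter.Eventually.of_forall ?_) (intervalIntegrable_const) (Filter.Eventually.of_forall ?_)
      · exact this.2
      · intro t ht
        have hsub : Metric.ball p₀ 1 ⊆ Metric.closedBall p₀ 1 := Metric.ball_subset_closedBall
        have ht' : t ∈ Set.Icc (0:ℝ) 1 := Set.mem_Icc_of_Ioc (by simpa [Set.uIoc_of_le (zero_le_one' ℝ)] using ht)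
        have : LipschitzOnWith (Real.nnabs (max C 0)) (fun y : ℝ × ℝ => h (y, t)) (Metric.ball p₀ 1) := by
          apply (convex_ball p₀ 1).lipschitzOnWith_of_nnnorm_fderiv_le (fun x _ => (hdiff x t).differentiableAt) ?_
          intro x hx
          have : fderiv ℝ (fun y : ℝ × ℝ => h (y, t)) x = h' (x, t) := (hdiff x t).fderiv
          rw [this, ← NNReal.coe_le_coe]
          simp only [coe_nnnorm, Real.coe_nnabs, abs_of_nonneg (le_max_right C 0)]
          exact le_trans (hC _ ⟨hsub hx, ht'⟩) (le_max_left _ _)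
        exact this
      · intro t ht
        exact hdiff p₀ t
    rw [show ((n+1 : ℕ) : ℕ∞) = (n : ℕ∞) + 1 by push_cast; rfl]
    rw [show (((n:ℕ∞) + 1 : ℕ∞) : WithTop ℕ∞) = ((n:ℕ∞) : WithTop ℕ∞) + 1 by push_cast; rfl]
    rw [contDiff_succ_iff_fderiv]
    refine ⟨fun p => (key p).differentiableAt, by simp, ?_⟩
    have : fderiv ℝ (fun p : ℝ × ℝ => ∫ t in (0:ℝ)..1, h (p, t)) = fun p => ∫ t in (0:ℝ)..1, h' (p, t) := by
      funext p; exact (key p).fderiv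
    rw [this]
    exact ih h' hh'


lemma toEquiv (M : (ℝ×ℝ) →L[ℝ] (ℝ×ℝ))
    (hδ : (M (1,0)).1 * (M (0,1)).2 - (M (0,1)).1 * (M (1,0)).2 ≠ 0) :
    ∃ e : (ℝ×ℝ) ≃L[ℝ] (ℝ×ℝ), (e : (ℝ×ℝ) →L[ℝ] (ℝ×ℝ)) = M := by
  set A := (M (1,0)).1; set B := (M (0,1)).1; set C := (M (1,0)).2; set D := (M (0,1)).2
  set δ := A * D - B * C with hδdef
  have hδ' : δ ≠ 0 := hδ
  have hM : ∀ v : ℝ × ℝ, M v = (A * v.1 + B * v.2, C * v.1 + D * v.2) := by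
    intro v
    have : v = v.1 • ((1,0) : ℝ×ℝ) + v.2 • ((0,1) : ℝ×ℝ) := by
      simp [Prod.ext_iff]
    rw [this, map_add, M.map_smul, M.map_smul]
    simp [Prod.ext_iff, A, B, C, D]; constructor <;> ring
  set N : (ℝ×ℝ) →L[ℝ] (ℝ×ℝ) :=
    (((D/δ) • ContinuousLinearMap.fst ℝ ℝ ℝ - (B/δ) • ContinuousLinearMap.snd ℝ ℝ ℝ).prod
      (((-C/δ) • ContinuousLinearMap.fst ℝ ℝ ℝ + (A/δ) • ContinuousLinearMap.snd ℝ ℝ ℝ))) with hN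
  have hNv : ∀ v : ℝ × ℝ, N v = ((D/δ) * v.1 - (B/δ) * v.2, (-C/δ) * v.1 + (A/δ) * v.2) := by
    intro v; simp [hN]
  refine ⟨ContinuousLinearEquiv.equivOfInverse M N ?_ ?_, rfl⟩
  · intro v; rw [hM, hNv]; simp only [Prod.ext_iff]
    constructor <;> (field_simp; ring)
  · intro v; rw [hNv, hM]; simp only [Prod.ext_iff]
    constructor <;> (field_simp; ring)



/-!
STATEMENT 5. Given `γ` smooth vanishing to infinite order on `Z = {0}×ℝ`, an open
`U₀ ∋ (0,0)` and a smooth `f : U₀ → ℂ` with `Lf = 0`, `f = 0` on `U₀ ∩ Z`, `∂ₓf(0,0) = 1`,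
there is a smaller neighbourhood `U` and smooth real `a, b` with `f = x(a + ib)`, `a ≠ 0`
on `U`, such that `F = (x·a, b/a)` is a smooth diffeomorphism of `U` onto an open set,
`F(0,0) = (0,0)`, `F(U ∩ Z) = F(U) ∩ Z`, and `f = κ∘F` where `κ(x,y) = (x, xy)`.
-/

/-- The deformed operator `L = ᵇ∂_z̄ + γ·ᵇ∂_z` applied to `f` at `p`. -/
noncomputable def Lop (γ f : ℝ × ℝ → ℂ) (p : ℝ × ℝ) : ℂ :=
  (1 / 2 : ℂ) * ((p.1 : ℂ) * fderiv ℝ f p ((1, 0) : ℝ × ℝ)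
      + Complex.I * fderiv ℝ f p ((0, 1) : ℝ × ℝ))
    + γ p * ((1 / 2 : ℂ) * ((p.1 : ℂ) * fderiv ℝ f p ((1, 0) : ℝ × ℝ)
      - Complex.I * fderiv ℝ f p ((0, 1) : ℝ × ℝ)))

/-- `κ(x,y) = (x, x·y)`. -/
def kappa : ℝ × ℝ → ℝ × ℝ := fun p => (p.1, p.1 * p.2)

theorem stmt_5 (γ : ℝ × ℝ → ℂ) (hγ : ContDiff ℝ (⊤ : ℕ∞) γ)
    (hγvan : ∀ p : ℝ × ℝ, p.1 = 0 → ∀ n : ℕ, iteratedFDeriv ℝ n γ p = 0)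
    (U₀ : Set (ℝ × ℝ)) (hU₀ : IsOpen U₀) (h0U₀ : ((0 : ℝ), (0 : ℝ)) ∈ U₀)
    (f : ℝ × ℝ → ℂ) (hf : ContDiffOn ℝ (⊤ : ℕ∞) f U₀)
    (hpde : ∀ p ∈ U₀, Lop γ f p = 0)
    (hfZ : ∀ p ∈ U₀, p.1 = 0 → f p = 0)
    (hfx : fderiv ℝ f ((0 : ℝ), (0 : ℝ)) ((1, 0) : ℝ × ℝ) = 1) :
    ∃ U : Set (ℝ × ℝ), IsOpen U ∧ ((0 : ℝ), (0 : ℝ)) ∈ U ∧ U ⊆ U₀ ∧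
      ∃ a b : ℝ × ℝ → ℝ, ContDiffOn ℝ (⊤ : ℕ∞) a U ∧ ContDiffOn ℝ (⊤ : ℕ∞) b U ∧
        (∀ p ∈ U, f p = (p.1 : ℂ) * ((a p : ℂ) + Complex.I * (b p : ℂ))) ∧
        (∀ p ∈ U, a p ≠ 0) ∧
        ∃ F : ℝ × ℝ → ℝ × ℝ,
          (∀ p : ℝ × ℝ, F p = (p.1 * a p, b p / a p)) ∧
          ContDiffOn ℝ (⊤ : ℕ∞) F U ∧ Set.InjOn F U ∧ IsOpen (F '' U) ∧
          (∃ Finv : ℝ × ℝ → ℝ × ℝ, ContDiffOn ℝ (⊤ : ℕ∞) Finv (F '' U) ∧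
            ∀ p ∈ U, Finv (F p) = p) ∧
          F ((0 : ℝ), (0 : ℝ)) = ((0 : ℝ), (0 : ℝ)) ∧
          F '' (U ∩ {p : ℝ × ℝ | p.1 = 0}) = (F '' U) ∩ {p : ℝ × ℝ | p.1 = 0} ∧
          (∀ p ∈ U, f p = ((kappa (F p)).1 : ℂ) + Complex.I * ((kappa (F p)).2 : ℂ)) := by
  -- Step 0: a ball inside U₀, bump function, global extension ft of f
  obtain ⟨ε, hε, hball⟩ := Metric.isOpen_iff.1 hU₀ _ h0U₀
  set c₀ : ℝ × ℝ := ((0:ℝ), (0:ℝ)) with hc₀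
  have hε2 : (0:ℝ) < ε/2 := by linarith
  set χ : ContDiffBump c₀ := ⟨ε/2, 3*ε/4, by linarith, by linarith⟩ with hχ
  set ft : ℝ × ℝ → ℂ := fun p => χ p • f p with hftdef
  have htsupp : tsupport (χ : (ℝ×ℝ) → ℝ) ⊆ U₀ := by
    rw [χ.tsupport_eq]
    refine (Metric.closedBall_subset_ball ?_).trans hball
    show (3*ε/4) < ε
    linarith
  have hft : ContDiff ℝ (⊤ : ℕ∞) ft := by
    rw [contDiff_iff_contDiffAt]
    intro p
    by_cases hp : p ∈ U₀
    · exact χ.contDiff.contDiffAt.smul (hf.contDiffAt (hU₀.mem_nhds hp))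
    · have hp' : p ∉ tsupport (χ : (ℝ×ℝ) → ℝ) := fun hc => hp (htsupp hc)
      rw [notMem_tsupport_iff_eventuallyEq] at hp'
      apply ContDiffAt.congr_of_eventuallyEq (contDiffAt_const (c := (0:ℂ)))
      filter_upwards [hp'] with q hq
      have hq' : (χ : (ℝ×ℝ) → ℝ) q = 0 := hq
      simp [hftdef, hq']
  have hball2 : Metric.ball c₀ (ε/2) ⊆ U₀ :=
    (Metric.ball_subset_ball (by linarith)).trans hball
  have hfteq : ∀ p ∈ Metric.ball c₀ (ε/2), ft p = f p := by
    intro p hp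
    have : χ p = 1 := χ.one_of_mem_closedBall (Metric.ball_subset_closedBall hp)
    simp [hftdef, this]
  have hfteq' : ∀ p ∈ Metric.ball c₀ (ε/2), ft =ᶠ[nhds p] f := fun p hp =>
    Filter.eventuallyEq_of_mem (Metric.isOpen_ball.mem_nhds hp) hfteq
  have hftZ : ∀ p : ℝ × ℝ, p.1 = 0 → ft p = 0 := by
    intro p hp1
    by_cases hp : p ∈ U₀
    · simp [hftdef, hfZ p hp hp1]
    · have hp' : p ∉ tsupport (χ : (ℝ×ℝ) → ℝ) := fun hc => hp (htsupp hc)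
      have := image_eq_zero_of_notMem_tsupport hp'
      simp [hftdef, this]
  -- Step 1: the function g with ft = x * g
  have htop : (1:WithTop ℕ∞) ≤ ((⊤:ℕ∞) : WithTop ℕ∞) := by
    exact_mod_cast le_top
  set D1 : ℝ × ℝ → ℂ := fun q => fderiv ℝ ft q ((1,0) : ℝ×ℝ) with hD1def
  have hD1 : ContDiff ℝ (⊤ : ℕ∞) D1 :=
    (hft.fderiv_right (by simp)).clm_apply contDiff_const
  set hfun : (ℝ × ℝ) × ℝ → ℂ := fun q => D1 (q.2 * q.1.1, q.1.2) with hhdef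
  have hhsm : ContDiff ℝ (⊤ : ℕ∞) hfun := by
    apply hD1.comp
    fun_prop
  set g : ℝ × ℝ → ℂ := fun p => ∫ t in (0:ℝ)..1, hfun (p, t) with hgdef
  have hg : ContDiff ℝ (⊤ : ℕ∞) g := by
    rw [show ((⊤:ℕ∞) : WithTop ℕ∞) = (⊤ : ℕ∞) from rfl]
    exact contDiff_infty.2 fun n => paramInt n hfun hhsm
  have hxg : ∀ p : ℝ × ℝ, ft p = p.1 • g p := by
    intro p
    obtain ⟨x, y⟩ := p
    have hD : ∀ t : ℝ, HasDerivAt (fun s : ℝ => ft (s*x, y)) (x • D1 (t*x, y)) t := by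
      intro t
      have h1 : HasDerivAt (fun s : ℝ => ((s*x, y) : ℝ×ℝ)) (((x,0)) : ℝ×ℝ) t := by
        simpa using ((hasDerivAt_id t).mul_const x).prodMk (hasDerivAt_const t y)
      have h2 : HasFDerivAt ft (fderiv ℝ ft (t*x,y)) (t*x,y) :=
        ((hft.differentiable (by simp)) (t*x,y)).hasFDerivAt
      have h3 := h2.comp_hasDerivAt t h1
      have h4 : ((x,(0:ℝ)) : ℝ×ℝ) = x • ((1,0) : ℝ×ℝ) := by simp
      rw [h4, ContinuousLinearMap.map_smul] at h3
      exact h3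
    have hint : ∫ t in (0:ℝ)..1, x • D1 (t*x, y) = ft (1*x, y) - ft (0*x, y) := by
      apply intervalIntegral.integral_eq_sub_of_hasDerivAt (fun t _ => hD t)
      apply Continuous.intervalIntegrable
      have : Continuous fun t : ℝ => D1 (t*x, y) := by
        apply hD1.continuous.comp; fun_prop
      exact this.const_smul x
    rw [intervalIntegral.integral_smul] at hint
    have h0 : ft (0*x, y) = 0 := hftZ _ (by simp)
    rw [h0, sub_zero, one_mul] at hint
    rw [← hint]
  -- Step 2: value and derivative of g at the origin
  have hg00 : g c₀ = 1 := by
    have : ∀ t : ℝ, hfun (c₀, t) = D1 c₀ := by intro t; simp [hhdef, hc₀]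
    have hD1c : D1 c₀ = 1 := by
      show (fderiv ℝ ft c₀) (1,0) = 1
      have := Filter.EventuallyEq.fderiv_eq (𝕜 := ℝ) (hfteq' c₀ (Metric.mem_ball_self hε2))
      rw [this, hfx]
    have : g c₀ = ∫ t in (0:ℝ)..1, D1 c₀ :=
      intervalIntegral.integral_congr (fun t _ => this t)
    rw [this, intervalIntegral.integral_const, hD1c]
    simp
  have hfdc₀ : fderiv ℝ ft c₀ = fderiv ℝ f c₀ :=
    Filter.EventuallyEq.fderiv_eq (𝕜 := ℝ) (hfteq' c₀ (Metric.mem_ball_self hε2))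
  -- Step 3: differentiate the PDE in x at the origin
  set A : ℝ → ℂ := fun x => D1 (x, 0) with hAdef
  set D2 : ℝ × ℝ → ℂ := fun q => fderiv ℝ ft q ((0,1) : ℝ×ℝ) with hD2def
  have hD2 : ContDiff ℝ (⊤ : ℕ∞) D2 :=
    (hft.fderiv_right (by simp)).clm_apply contDiff_const
  set B : ℝ → ℂ := fun x => D2 (x, 0) with hBdef
  set Γ : ℝ → ℂ := fun x => γ (x, 0) with hΓdef
  have hmem : ∀ x : ℝ, |x| < ε/2 → ((x, (0:ℝ)) : ℝ×ℝ) ∈ Metric.ball c₀ (ε/2) := by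
    intro x hx
    rw [Metric.mem_ball, hc₀, Prod.dist_eq]
    simp [Real.dist_eq, hx, hε2]
  have hEzero : ∀ x : ℝ, |x| < ε/2 →
      (1/2 : ℂ) * ((x:ℂ) * A x + Complex.I * B x)
        + Γ x * ((1/2 : ℂ) * ((x:ℂ) * A x - Complex.I * B x)) = 0 := by
    intro x hx
    have hmem' := hmem x hx
    have hU : ((x, (0:ℝ)) : ℝ×ℝ) ∈ U₀ := hball2 hmem'
    have hfd := Filter.EventuallyEq.fderiv_eq (𝕜 := ℝ) (hfteq' _ hmem')
    have hL := hpde _ hU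
    rw [Lop] at hL
    show (1/2 : ℂ) * ((x:ℂ) * fderiv ℝ ft (x,0) ((1,0):ℝ×ℝ) + Complex.I * fderiv ℝ ft (x,0) ((0,1):ℝ×ℝ))
        + γ (x,0) * ((1/2 : ℂ) * ((x:ℂ) * fderiv ℝ ft (x,0) ((1,0):ℝ×ℝ) - Complex.I * fderiv ℝ ft (x,0) ((0,1):ℝ×ℝ))) = 0
    rw [hfd]
    exact hL
  -- smoothness of the 1-d slices
  have hA : ContDiff ℝ (⊤ : ℕ∞) A := hD1.comp (by fun_prop)
  have hB : ContDiff ℝ (⊤ : ℕ∞) B := hD2.comp (by fun_prop)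
  have hA0 : HasDerivAt A (deriv A 0) 0 := ((hA.differentiable (by simp)) 0).hasDerivAt
  have hB0 : HasDerivAt B (deriv B 0) 0 := ((hB.differentiable (by simp)) 0).hasDerivAt
  set a' := deriv A 0
  set b' := deriv B 0
  have hΓ0 : Γ 0 = 0 := by
    have h0 := hγvan ((0:ℝ),(0:ℝ)) rfl 0
    have h1 : γ ((0:ℝ),(0:ℝ)) = iteratedFDeriv ℝ 0 γ ((0:ℝ),(0:ℝ)) 0 :=
      (iteratedFDeriv_zero_apply _).symm
    rw [hΓdef]
    show γ ((0:ℝ),(0:ℝ)) = 0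
    rw [h1, h0]
    rfl
  have hγfd : ∀ v : ℝ × ℝ, fderiv ℝ γ ((0:ℝ),(0:ℝ)) v = 0 := by
    intro v
    have h1 := iteratedFDeriv_one_apply (𝕜 := ℝ) (f := γ) (x := ((0:ℝ),(0:ℝ))) (fun _ => v)
    rw [hγvan ((0:ℝ),(0:ℝ)) rfl 1] at h1
    simpa using h1.symm
  have hΓ' : HasDerivAt Γ 0 0 := by
    have inner : HasDerivAt (fun x : ℝ => ((x, 0) : ℝ×ℝ)) (((1,0)) : ℝ×ℝ) 0 := by
      simpa using ((hasDerivAt_id (0:ℝ)).prodMk (hasDerivAt_const (0:ℝ) (0:ℝ)))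
    have hγdiff : HasFDerivAt γ (fderiv ℝ γ ((0:ℝ),(0:ℝ))) ((fun x : ℝ => ((x,0):ℝ×ℝ)) 0) :=
      ((hγ.differentiable (by simp)) _).hasFDerivAt
    have h2 : HasDerivAt (γ ∘ fun x : ℝ => ((x,0):ℝ×ℝ))
        (fderiv ℝ γ ((0:ℝ),(0:ℝ)) ((1,0):ℝ×ℝ)) 0 :=
      HasFDerivAt.comp_hasDerivAt (l := γ) (f := fun x : ℝ => ((x,0):ℝ×ℝ)) (0:ℝ) hγdiff inner
    rw [hγfd ((1,0) : ℝ×ℝ)] at h2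
    exact h2
  have hA0val : A 0 = 1 := by
    show fderiv ℝ ft ((0:ℝ),(0:ℝ)) ((1,0) : ℝ×ℝ) = 1
    rw [show ((0:ℝ),(0:ℝ)) = c₀ from rfl, hfdc₀, hfx]
  have hxC : HasDerivAt (fun x : ℝ => ((x:ℝ):ℂ)) 1 0 := by
    simpa using! Complex.ofRealCLM.hasDerivAt (x := (0:ℝ))
  have t1 := hxC.mul hA0
  have t2 := hB0.const_mul Complex.I
  have hEd := ((t1.add t2).const_mul (1/2 : ℂ)).add (hΓ'.mul ((t1.sub t2).const_mul (1/2 : ℂ)))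
  have hev : ∀ᶠ x in nhds (0:ℝ), |x| < ε/2 := by
    filter_upwards [Metric.ball_mem_nhds (0:ℝ) hε2] with x hx
    simpa [Real.dist_eq] using hx
  have hEeq : (fun x : ℝ => (1/2 : ℂ) * ((x:ℂ) * A x + Complex.I * B x)
        + Γ x * ((1/2 : ℂ) * ((x:ℂ) * A x - Complex.I * B x))) =ᶠ[nhds (0:ℝ)]
        (fun _ => (0:ℂ)) := by
    filter_upwards [hev] with x hx
    exact hEzero x hx
  have hEd0 : HasDerivAt (fun x : ℝ => (1/2 : ℂ) * ((x:ℂ) * A x + Complex.I * B x)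
        + Γ x * ((1/2 : ℂ) * ((x:ℂ) * A x - Complex.I * B x))) 0 0 :=
    (hasDerivAt_const (0:ℝ) (0:ℂ)).congr_of_eventuallyEq hEeq
  have hDv0 := hEd.unique hEd0
  rw [hA0val, hΓ0] at hDv0
  have h2 : (1:ℂ) + Complex.I * b' = 0 := by
    have := hDv0
    push_cast at this
    ring_nf at this ⊢
    linear_combination 2 * this
  have hb' : b' = Complex.I := by
    have h3 : Complex.I * b' = -1 := by linear_combination h2
    calc b' = -Complex.I * (Complex.I * b') := by
              rw [← mul_assoc, neg_mul, Complex.I_mul_I]; ring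
      _ = Complex.I := by rw [h3]; ring
  -- transfer to g : fderiv g (0,0) (0,1) = I
  set D2g : ℝ × ℝ → ℂ := fun q => fderiv ℝ g q ((0,1) : ℝ×ℝ) with hD2gdef
  have hD2g : ContDiff ℝ (⊤ : ℕ∞) D2g :=
    (hg.fderiv_right (by simp)).clm_apply contDiff_const
  set Cc : ℝ → ℂ := fun x => D2g (x, 0) with hCcdef
  have hCc : ContDiff ℝ (⊤ : ℕ∞) Cc := hD2g.comp (by fun_prop)
  have hftprod : ∀ q : ℝ×ℝ, fderiv ℝ ft q
      = q.1 • fderiv ℝ g q + (ContinuousLinearMap.fst ℝ ℝ ℝ).smulRight (g q) := by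
    intro q
    have h1 : HasFDerivAt (fun p : ℝ×ℝ => p.1 • g p)
        (q.1 • fderiv ℝ g q + (ContinuousLinearMap.fst ℝ ℝ ℝ).smulRight (g q)) q :=
      (hasFDerivAt_fst).smul ((hg.differentiable (by simp)) q).hasFDerivAt
    have h2 : ft = fun p : ℝ×ℝ => p.1 • g p := funext hxg
    rw [h2]
    exact h1.fderiv
  have hBx : ∀ x : ℝ, B x = x • Cc x := by
    intro x
    show fderiv ℝ ft (x,0) ((0,1):ℝ×ℝ) = x • Cc x
    rw [hftprod (x,0)]
    simp
    exact Or.inl rfl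
  have hB0' : HasDerivAt B (Cc 0) 0 := by
    have hCc0 : HasDerivAt Cc (deriv Cc 0) 0 := ((hCc.differentiable (by simp)) 0).hasDerivAt
    have h1 := (hasDerivAt_id (0:ℝ)).smul hCc0
    simp only [id_eq, zero_smul, one_smul, smul_zero, zero_add, add_zero] at h1
    have h2 : B =ᶠ[nhds (0:ℝ)] fun x : ℝ => x • Cc x := Filter.Eventually.of_forall hBx
    replace h1 := h1.congr_of_eventuallyEq h2
    simpa using h1
  have hgy : fderiv ℝ g c₀ ((0,1) : ℝ×ℝ) = Complex.I := by
    have := hB0.unique hB0'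
    rw [← hb']
    exact this.symm
  -- Step 4: a, b and their basic values
  set a : ℝ × ℝ → ℝ := fun p => (g p).re with hadef
  set b : ℝ × ℝ → ℝ := fun p => (g p).im with hbdef
  have hsa : ContDiff ℝ (⊤ : ℕ∞) a := Complex.reCLM.contDiff.comp hg
  have hsb : ContDiff ℝ (⊤ : ℕ∞) b := Complex.imCLM.contDiff.comp hg
  have hgab : ∀ p, g p = (a p : ℂ) + Complex.I * (b p : ℂ) := by
    intro p
    rw [hadef, hbdef]
    simp only [Complex.ext_iff]
    constructor <;> simp
  have ha00 : a c₀ = 1 := by rw [hadef]; simp [hg00]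
  have hb00 : b c₀ = 0 := by rw [hbdef]; simp [hg00]
  have hfa : ∀ q : ℝ×ℝ, fderiv ℝ a q = Complex.reCLM.comp (fderiv ℝ g q) := by
    intro q
    exact (Complex.reCLM.hasFDerivAt.comp q ((hg.differentiable (by simp)) q).hasFDerivAt).fderiv
  have hfb : ∀ q : ℝ×ℝ, fderiv ℝ b q = Complex.imCLM.comp (fderiv ℝ g q) := by
    intro q
    exact (Complex.imCLM.hasFDerivAt.comp q ((hg.differentiable (by simp)) q).hasFDerivAt).fderiv
  have hadiff : ∀ q : ℝ×ℝ, HasFDerivAt a (fderiv ℝ a q) q :=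
    fun q => ((hsa.differentiable (by simp)) q).hasFDerivAt
  have hbdiff : ∀ q : ℝ×ℝ, HasFDerivAt b (fderiv ℝ b q) q :=
    fun q => ((hsb.differentiable (by simp)) q).hasFDerivAt
  -- the map F and the set V₁
  set F : ℝ × ℝ → ℝ × ℝ := fun p => (p.1 * a p, b p / a p) with hFdef
  set V₁ : Set (ℝ×ℝ) := Metric.ball c₀ (ε/2) ∩ {p | a p ≠ 0} with hV₁def
  have hV₁open : IsOpen V₁ :=
    Metric.isOpen_ball.inter (isOpen_ne.preimage hsa.continuous)
  have h0V₁ : c₀ ∈ V₁ := ⟨Metric.mem_ball_self hε2, by show a c₀ ≠ 0; rw [ha00]; norm_num⟩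
  have hFca : ∀ p ∈ V₁, ContDiffAt ℝ (⊤:ℕ∞) F p := by
    intro p hp
    exact (contDiff_fst.contDiffAt.mul hsa.contDiffAt).prodMk
      (hsb.contDiffAt.div hsa.contDiffAt hp.2)
  have hFsm : ContDiffOn ℝ (⊤:ℕ∞) F V₁ := fun p hp => (hFca p hp).contDiffWithinAt
  -- derivative of F at the origin
  have hF1d : HasFDerivAt (fun p : ℝ×ℝ => p.1 * a p)
      (c₀.1 • fderiv ℝ a c₀ + a c₀ • ContinuousLinearMap.fst ℝ ℝ ℝ) c₀ :=
    hasFDerivAt_fst.mul (hadiff c₀)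
  have hF2d : HasFDerivAt (fun p : ℝ×ℝ => b p / a p)
      (b c₀ • ((-((a c₀)^2)⁻¹) • fderiv ℝ a c₀) + (a c₀)⁻¹ • fderiv ℝ b c₀) c₀ := by
    have hane : a c₀ ≠ 0 := by rw [ha00]; norm_num
    have hinv : HasFDerivAt (fun p : ℝ×ℝ => (a p)⁻¹) ((-((a c₀)^2)⁻¹) • fderiv ℝ a c₀) c₀ := by
      have h1 : HasDerivAt (fun y : ℝ => y⁻¹) (-((a c₀)^2)⁻¹) (a c₀) := hasDerivAt_inv hane
      exact h1.comp_hasFDerivAt c₀ (hadiff c₀)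
    have h2 := (hbdiff c₀).mul hinv
    have h3 : (fun p : ℝ×ℝ => b p / a p) = fun p => b p * (a p)⁻¹ := by
      funext p; rw [div_eq_mul_inv]
    rw [h3]
    exact h2
  have hFd0 : HasFDerivAt F
      ((c₀.1 • fderiv ℝ a c₀ + a c₀ • ContinuousLinearMap.fst ℝ ℝ ℝ).prod
        (b c₀ • ((-((a c₀)^2)⁻¹) • fderiv ℝ a c₀) + (a c₀)⁻¹ • fderiv ℝ b c₀)) c₀ :=
    hF1d.prodMk hF2d
  have hM0 := hFd0.fderiv
  have hDb01 : fderiv ℝ b c₀ ((0,1):ℝ×ℝ) = 1 := by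
    rw [hfb c₀]
    simp [hgy]
  have hc₀1 : c₀.1 = 0 := rfl
  have hM010 : fderiv ℝ F c₀ ((1,0):ℝ×ℝ)
      = (1, fderiv ℝ b c₀ ((1,0):ℝ×ℝ)) := by
    rw [hM0]
    simp [hc₀1, ha00, hb00]
  have hM001 : fderiv ℝ F c₀ ((0,1):ℝ×ℝ) = (0, 1) := by
    rw [hM0]
    simp [hc₀1, ha00, hb00, hDb01]
  -- the determinant function
  set δf : ℝ×ℝ → ℝ := fun p => (fderiv ℝ F p ((1,0):ℝ×ℝ)).1 * (fderiv ℝ F p ((0,1):ℝ×ℝ)).2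
      - (fderiv ℝ F p ((0,1):ℝ×ℝ)).1 * (fderiv ℝ F p ((1,0):ℝ×ℝ)).2 with hδfdef
  have hδ0 : δf c₀ = 1 := by
    rw [hδfdef]
    simp only [hM010, hM001]
    norm_num
  have hδcont : ContinuousOn δf V₁ := by
    have hfdcont : ContinuousOn (fderiv ℝ F) V₁ :=
      hFsm.continuousOn_fderiv_of_isOpen hV₁open (by simp)
    have hev : ∀ v : ℝ×ℝ, Continuous fun M : (ℝ×ℝ) →L[ℝ] (ℝ×ℝ) => M v :=
      fun v => (ContinuousLinearMap.apply ℝ (ℝ×ℝ) v).continuous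
    have c1 : ContinuousOn (fun p => fderiv ℝ F p ((1,0):ℝ×ℝ)) V₁ :=
      (hev ((1,0):ℝ×ℝ)).comp_continuousOn hfdcont
    have c2 : ContinuousOn (fun p => fderiv ℝ F p ((0,1):ℝ×ℝ)) V₁ :=
      (hev ((0,1):ℝ×ℝ)).comp_continuousOn hfdcont
    exact ((continuous_fst.comp_continuousOn c1).mul
        (continuous_snd.comp_continuousOn c2)).sub
      ((continuous_fst.comp_continuousOn c2).mul
        (continuous_snd.comp_continuousOn c1))
  -- inverse function theorem at the origin
  have hδ0' : (fderiv ℝ F c₀ ((1,0):ℝ×ℝ)).1 * (fderiv ℝ F c₀ ((0,1):ℝ×ℝ)).2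
      - (fderiv ℝ F c₀ ((0,1):ℝ×ℝ)).1 * (fderiv ℝ F c₀ ((1,0):ℝ×ℝ)).2 ≠ 0 := by
    have : δf c₀ ≠ 0 := by rw [hδ0]; norm_num
    exact this
  obtain ⟨e₀, he₀⟩ := toEquiv (fderiv ℝ F c₀) hδ0'
  have hFstrict : HasStrictFDerivAt F ((e₀ : (ℝ×ℝ) →L[ℝ] (ℝ×ℝ))) c₀ := by
    rw [he₀]
    exact (hFca c₀ h0V₁).hasStrictFDerivAt (by simp)
  set ff := hFstrict.toOpenPartialHomeomorph F with hffdef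
  have hffcoe : ⇑ff = F := hFstrict.toOpenPartialHomeomorph_coe
  set U : Set (ℝ×ℝ) := (V₁ ∩ δf⁻¹' {x : ℝ | x ≠ 0}) ∩ ff.source with hUdef
  have hUopen : IsOpen U := (hδcont.isOpen_inter_preimage hV₁open isOpen_ne).inter ff.open_source
  have h0U : c₀ ∈ U :=
    ⟨⟨h0V₁, by show δf c₀ ≠ 0; rw [hδ0]; norm_num⟩, hFstrict.mem_toOpenPartialHomeomorph_source⟩
  have hUV₁ : U ⊆ V₁ := fun p hp => hp.1.1
  have hUsrc : U ⊆ ff.source := fun p hp => hp.2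
  have hUU₀ : U ⊆ U₀ := fun p hp => hball2 (hUV₁ hp).1
  have hfU : ∀ p ∈ U, f p = (p.1:ℂ) * ((a p : ℂ) + Complex.I * (b p :ℂ)) := by
    intro p hp
    rw [← hfteq p (hUV₁ hp).1, hxg p, hgab p, Complex.real_smul]
  -- conclusion
  refine ⟨U, hUopen, h0U, hUU₀, a, b, hsa.contDiffOn, hsb.contDiffOn, hfU,
    fun p hp => (hUV₁ hp).2, F, fun p => rfl, hFsm.mono hUV₁, ?_, ?_, ?_, ?_, ?_, ?_⟩
  · rw [← hffcoe]
    exact ff.injOn.mono hUsrc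
  · rw [← hffcoe]
    exact ff.isOpen_image_of_subset_source hUopen hUsrc
  · refine ⟨ff.symm, ?_, ?_⟩
    · intro q hq
      obtain ⟨p, hp, rfl⟩ := hq
      have htarget : F p ∈ ff.target := by
        rw [← hffcoe]
        exact ff.map_source (hUsrc hp)
      have hsymmq : ff.symm (F p) = p := by
        conv_lhs => rw [← hffcoe]
        exact ff.left_inv (hUsrc hp)
      obtain ⟨ep, hep⟩ := toEquiv (fderiv ℝ F p) hp.1.2
      have hfdp : HasFDerivAt (⇑ff) ((ep : (ℝ×ℝ) →L[ℝ] (ℝ×ℝ))) (ff.symm (F p)) := by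
        rw [hsymmq, hffcoe, hep]
        exact ((hFca p (hUV₁ hp)).differentiableAt (by simp)).hasFDerivAt
      have hcdp : ContDiffAt ℝ (⊤:ℕ∞) (⇑ff) (ff.symm (F p)) := by
        rw [hsymmq, hffcoe]
        exact hFca p (hUV₁ hp)
      exact (ff.contDiffAt_symm htarget hfdp hcdp).contDiffWithinAt
    · intro p hp
      conv_lhs => rw [← hffcoe]
      exact ff.left_inv (hUsrc hp)
  · show F c₀ = c₀
    have h2 : F c₀ = (c₀.1 * a c₀, b c₀ / a c₀) := rfl
    rw [h2, hc₀1, ha00, hb00, hc₀]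
    norm_num
  · ext q
    constructor
    · rintro ⟨p, ⟨hpU, hp1⟩, rfl⟩
      refine ⟨⟨p, hpU, rfl⟩, ?_⟩
      show (F p).1 = 0
      have hp1' : p.1 = 0 := hp1
      simp [hFdef, hp1']
    · rintro ⟨⟨p, hpU, rfl⟩, hq1⟩
      refine ⟨p, ⟨hpU, ?_⟩, rfl⟩
      have h1 : p.1 * a p = 0 := hq1
      have hap : a p ≠ 0 := (hUV₁ hpU).2
      show p.1 = 0
      rcases mul_eq_zero.1 h1 with h | h
      · exact h
      · exact absurd h hap
  · intro p hp
    have h1 := hfU p hp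
    have hap : a p ≠ 0 := (hUV₁ hp).2
    have hk : kappa (F p) = (p.1 * a p, p.1 * b p) := by
      show ((F p).1, (F p).1 * (F p).2) = (p.1 * a p, p.1 * b p)
      have h2 : (F p).1 = p.1 * a p := rfl
      have h3 : (F p).2 = b p / a p := rfl
      rw [h2, h3, Prod.mk.injEq]
      refine ⟨rfl, ?_⟩
      field_simp
    rw [h1, hk]
    push_cast
    ring
end

section
/- Let U ⊆ ℝ² be an open neighbourhood of (0,0) and a, b : U → ℝ smooth with a(0,0) = 1 and b(0,0) = 0. Set u(x,y) = x·a(x,y) and v(x,y) = x·b(x,y). Suppose that the smooth functions (x,y) ↦ x·∂_x u(x,y) − ∂_y v(x,y) and (x,y) ↦ x·∂_x v(x,y) + ∂_y u(x,y) both vanish to infinite order at (0,0). Then (since a is nonvanishing near (0,0), b/a is smooth near (0,0)) one has ∂_y(b/a)(0,0) = 1. -/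
/-!
STATEMENT 6. Let `U ∋ (0,0)` be open, `a b : U → ℝ` smooth with `a(0,0) = 1`, `b(0,0) = 0`,
and set `u = x·a`, `v = x·b`.  If `x·∂ₓu − ∂_yv` and `x·∂ₓv + ∂_yu` vanish to infinite
order at `(0,0)`, then `∂_y(b/a)(0,0) = 1`.
-/

open Topology Filter


theorem stmt_6 (U : Set (ℝ × ℝ)) (hU : IsOpen U) (h0 : ((0 : ℝ), (0 : ℝ)) ∈ U)
    (a b : ℝ × ℝ → ℝ)
    (ha : ContDiffOn ℝ (⊤ : ℕ∞) a U) (hb : ContDiffOn ℝ (⊤ : ℕ∞) b U)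
    (ha0 : a ((0 : ℝ), (0 : ℝ)) = 1) (hb0 : b ((0 : ℝ), (0 : ℝ)) = 0)
    (u v : ℝ × ℝ → ℝ)
    (hu : ∀ p : ℝ × ℝ, u p = p.1 * a p) (hv : ∀ p : ℝ × ℝ, v p = p.1 * b p)
    (h1 : ∀ n : ℕ, iteratedFDeriv ℝ n
      (fun p : ℝ × ℝ => p.1 * fderiv ℝ u p ((1, 0) : ℝ × ℝ) - fderiv ℝ v p ((0, 1) : ℝ × ℝ))
      ((0 : ℝ), (0 : ℝ)) = 0)
    (h2 : ∀ n : ℕ, iteratedFDeriv ℝ n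
      (fun p : ℝ × ℝ => p.1 * fderiv ℝ v p ((1, 0) : ℝ × ℝ) + fderiv ℝ u p ((0, 1) : ℝ × ℝ))
      ((0 : ℝ), (0 : ℝ)) = 0) :
    fderiv ℝ (fun p : ℝ × ℝ => b p / a p) ((0 : ℝ), (0 : ℝ)) ((0, 1) : ℝ × ℝ) = 1 := by
  clear h2
  set p0 : ℝ × ℝ := ((0 : ℝ), (0 : ℝ)) with hp0def
  have hUnhds : U ∈ 𝓝 p0 := hU.mem_nhds h0
  have haC : ∀ p ∈ U, ContDiffAt ℝ (⊤ : ℕ∞) a p := fun p hp => ha.contDiffAt (hU.mem_nhds hp)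
  have hbC : ∀ p ∈ U, ContDiffAt ℝ (⊤ : ℕ∞) b p := fun p hp => hb.contDiffAt (hU.mem_nhds hp)
  set A : ℝ × ℝ → (ℝ × ℝ →L[ℝ] ℝ) := fderiv ℝ a with hAdef
  set B : ℝ × ℝ → (ℝ × ℝ →L[ℝ] ℝ) := fderiv ℝ b with hBdef
  have hu' : u = fun q : ℝ × ℝ => q.1 * a q := funext hu
  have hv' : v = fun q : ℝ × ℝ => q.1 * b q := funext hv
  -- derivative of u and v at points of U
  have hud : ∀ p ∈ U, HasFDerivAt u
      (p.1 • A p + a p • ContinuousLinearMap.fst ℝ ℝ ℝ) p := by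
    intro p hp
    rw [hu']
    exact hasFDerivAt_fst.mul ((haC p hp).differentiableAt (by simp)).hasFDerivAt
  have hvd : ∀ p ∈ U, HasFDerivAt v
      (p.1 • B p + b p • ContinuousLinearMap.fst ℝ ℝ ℝ) p := by
    intro p hp
    rw [hv']
    exact hasFDerivAt_fst.mul ((hbC p hp).differentiableAt (by simp)).hasFDerivAt
  -- smoothness of the derivative maps at p0
  have hAc : ContDiffAt ℝ (⊤ : ℕ∞) A p0 := (haC p0 h0).fderiv_right (le_refl _)
  have hBc : ContDiffAt ℝ (⊤ : ℕ∞) B p0 := (hbC p0 h0).fderiv_right (le_refl _)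
  have hAx : DifferentiableAt ℝ (fun p => A p (((1:ℝ), (0:ℝ)) : ℝ × ℝ)) p0 :=
    ((ContinuousLinearMap.apply ℝ ℝ (((1:ℝ), (0:ℝ)) : ℝ × ℝ)).differentiableAt).comp p0
      (hAc.differentiableAt (by simp))
  have hBy : DifferentiableAt ℝ (fun p => B p (((0:ℝ), (1:ℝ)) : ℝ × ℝ)) p0 :=
    ((ContinuousLinearMap.apply ℝ ℝ (((0:ℝ), (1:ℝ)) : ℝ × ℝ)).differentiableAt).comp p0
      (hBc.differentiableAt (by simp))
  -- the auxiliary function g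
  set g : ℝ × ℝ → ℝ :=
    fun p => a p + p.1 * A p (((1:ℝ), (0:ℝ)) : ℝ × ℝ) - B p (((0:ℝ), (1:ℝ)) : ℝ × ℝ) with hgdef
  have hgd : DifferentiableAt ℝ g p0 := by
    apply DifferentiableAt.sub _ hBy
    exact ((haC p0 h0).differentiableAt (by simp)).add (differentiableAt_fst.mul hAx)
  -- eventual equality of F with p ↦ p.1 * g p
  have hFeq : (fun p : ℝ × ℝ =>
      p.1 * fderiv ℝ u p ((1, 0) : ℝ × ℝ) - fderiv ℝ v p ((0, 1) : ℝ × ℝ))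
      =ᶠ[𝓝 p0] fun p => p.1 * g p := by
    filter_upwards [hUnhds] with p hp
    rw [(hud p hp).fderiv, (hvd p hp).fderiv]
    simp only [hgdef, ContinuousLinearMap.add_apply, ContinuousLinearMap.smul_apply,
      ContinuousLinearMap.coe_fst', smul_eq_mul]
    ring
  -- derivative of p ↦ p.1 * g p at p0
  have hGd : HasFDerivAt (fun p : ℝ × ℝ => p.1 * g p)
      (p0.1 • fderiv ℝ g p0 + g p0 • ContinuousLinearMap.fst ℝ ℝ ℝ) p0 :=
    hasFDerivAt_fst.mul hgd.hasFDerivAt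
  -- the infinite-order vanishing at order 1 gives g p0 = 0
  have hkey : g p0 = 0 := by
    have hF0 : fderiv ℝ (fun p : ℝ × ℝ =>
        p.1 * fderiv ℝ u p ((1, 0) : ℝ × ℝ) - fderiv ℝ v p ((0, 1) : ℝ × ℝ)) p0
        (((1 : ℝ), (0 : ℝ)) : ℝ × ℝ) = 0 := by
      have h11 := h1 1
      have := iteratedFDeriv_one_apply (𝕜 := ℝ)
        (f := fun p : ℝ × ℝ =>
          p.1 * fderiv ℝ u p ((1, 0) : ℝ × ℝ) - fderiv ℝ v p ((0, 1) : ℝ × ℝ))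
        (x := p0) (fun _ => (((1 : ℝ), (0 : ℝ)) : ℝ × ℝ))
      rw [h11] at this
      simpa using this.symm
    rw [hFeq.fderiv_eq, hGd.fderiv] at hF0
    simpa [hp0def] using hF0
  have hBy1 : B p0 (((0:ℝ), (1:ℝ)) : ℝ × ℝ) = 1 := by
    have h' : a p0 + p0.1 * A p0 (((1:ℝ), (0:ℝ)) : ℝ × ℝ) - B p0 (((0:ℝ), (1:ℝ)) : ℝ × ℝ) = 0 := hkey
    rw [ha0] at h'
    have h0' : p0.1 = 0 := rfl
    rw [h0'] at h'
    linarith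
  -- quotient rule along the vertical line
  have ha0' : a p0 ≠ 0 := by rw [ha0]; norm_num
  have hq : ContDiffAt ℝ (⊤ : ℕ∞) (fun p => b p / a p) p0 :=
    (hbC p0 h0).div (haC p0 h0) ha0'
  have hqd : HasFDerivAt (fun p => b p / a p)
      (fderiv ℝ (fun p => b p / a p) p0) p0 := (hq.differentiableAt (by simp)).hasFDerivAt
  have hγ : HasDerivAt (fun t : ℝ => (((0:ℝ), t) : ℝ × ℝ)) (((0:ℝ), (1:ℝ)) : ℝ × ℝ) 0 :=
    (hasDerivAt_const (0:ℝ) (0:ℝ)).prodMk (hasDerivAt_id (0:ℝ))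
  have hcomp : HasDerivAt (fun t : ℝ => b ((0:ℝ), t) / a ((0:ℝ), t))
      (fderiv ℝ (fun p => b p / a p) p0 (((0:ℝ), (1:ℝ)) : ℝ × ℝ)) 0 :=
    hqd.comp_hasDerivAt 0 hγ
  have hbcomp : HasDerivAt (fun t : ℝ => b ((0:ℝ), t)) (B p0 (((0:ℝ), (1:ℝ)) : ℝ × ℝ)) 0 :=
    ((hbC p0 h0).differentiableAt (by simp)).hasFDerivAt.comp_hasDerivAt 0 hγ
  have hacomp : HasDerivAt (fun t : ℝ => a ((0:ℝ), t)) (A p0 (((0:ℝ), (1:ℝ)) : ℝ × ℝ)) 0 :=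
    ((haC p0 h0).differentiableAt (by simp)).hasFDerivAt.comp_hasDerivAt 0 hγ
  have hdiv : HasDerivAt (fun t : ℝ => b ((0:ℝ), t) / a ((0:ℝ), t))
      ((B p0 (((0:ℝ), (1:ℝ)) : ℝ × ℝ) * a p0 - b p0 * A p0 (((0:ℝ), (1:ℝ)) : ℝ × ℝ)) / a p0 ^ 2)
      0 := hbcomp.div hacomp ha0'
  have := hcomp.unique hdiv
  rw [this, hBy1, ha0, hb0]
  norm_num
end

section
/- Fix n ≥ 0. Define g : ℝ² → ℂ by g(x,y) = x·e^{iy}, g̃ := g × id : ℝ²×ℝ^{2n} → ℂ×ℝ^{2n}, σ(x,y) := (−x, y+π), and σ̃ := σ × id : ℝ^{2n+2} → ℝ^{2n+2}. Let γ : ℝ^{2n+2} → ℂ be a smooth function with γ∘σ̃ = γ that vanishes to infinite order on Z := {0}×ℝ^{2n+1}. Then there exists a (unique) smooth function h : ℂ×ℝ^{2n} → ℂ with h∘g̃ = γ, and h vanishes to infinite order on Z′ := {0}×ℝ^{2n}. -/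
/-!
STATEMENT 8. With `g̃ = g × id : ℝ²×ℝ^{2n} → ℂ×ℝ^{2n}` (where `g(x,y) = x·e^{iy}`) and
`σ̃ = σ × id` (where `σ(x,y) = (−x, y+π)`): if `γ : ℝ^{2n+2} → ℂ` is smooth, `σ̃`-invariant
and vanishes to infinite order on `Z = {0}×ℝ^{2n+1}`, then there is a unique smooth
`h : ℂ×ℝ^{2n} → ℂ` with `h∘g̃ = γ`, and `h` vanishes to infinite order on `Z′ = {0}×ℝ^{2n}`.
-/

/-- `g̃ = g × id`, where `g(x,y) = x·e^{iy}`. -/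
noncomputable def gTilde (n : ℕ) : (ℝ × ℝ) × (Fin (2 * n) → ℝ) → ℂ × (Fin (2 * n) → ℝ) :=
  fun q => ((q.1.1 : ℂ) * Complex.exp (Complex.I * (q.1.2 : ℂ)), q.2)

/-- `σ̃ = σ × id`, where `σ(x,y) = (−x, y+π)`. -/
noncomputable def sigmaTilde (n : ℕ) :
    (ℝ × ℝ) × (Fin (2 * n) → ℝ) → (ℝ × ℝ) × (Fin (2 * n) → ℝ) :=
  fun q => ((-q.1.1, q.1.2 + Real.pi), q.2)

/-- Compatibility: the complex absolute value as an `AbsoluteValue`. -/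
noncomputable def Complex.abs : AbsoluteValue ℂ ℝ :=
  IsAbsoluteValue.toAbsoluteValue (norm : ℂ → ℝ)

theorem Complex.norm_eq_abs (z : ℂ) : ‖z‖ = Complex.abs z := rfl

theorem Complex.abs_ofReal (r : ℝ) : Complex.abs (r : ℂ) = |r| := by
  show ‖(r : ℂ)‖ = |r|
  simp

theorem Complex.abs_exp (z : ℂ) : Complex.abs (Complex.exp z) = Real.exp z.re :=
  Complex.norm_exp z

theorem Complex.abs_mul_exp_arg_mul_I (x : ℂ) :
    ↑(Complex.abs x) * Complex.exp (↑(Complex.arg x) * Complex.I) = x :=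
  Complex.norm_mul_exp_arg_mul_I x

open Complex Set Filter
open scoped Topology Real

set_option maxHeartbeats 1000000

noncomputable section

namespace Stmt8Aux

variable {V : Type} [NormedAddCommGroup V] [NormedSpace ℝ V]

/-! ### The abstract flat-extension lemma -/

section Extension

variable {G F : Type} [NormedAddCommGroup G] [NormedSpace ℝ G]
  [NormedAddCommGroup F] [NormedSpace ℝ F]

lemma diffAtU {h : G × V → F} {w : G × V} (hU : ContDiffAt ℝ (⊤ : ℕ∞) h w) (m : ℕ) :
    DifferentiableAt ℝ (iteratedFDeriv ℝ m h) w := by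
  obtain ⟨u, hu, hcd⟩ := hU.contDiffOn (m := ((m+1 : ℕ) : WithTop ℕ∞))
    (by exact_mod_cast le_top) (by simp)
  have hO : IsOpen (interior u) := isOpen_interior
  have hwO : w ∈ interior u := mem_interior_iff_mem_nhds.2 hu
  have hcd' : ContDiffOn ℝ ((m+1 : ℕ) : WithTop ℕ∞) h (interior u) := hcd.mono interior_subset
  have hdiff : DifferentiableOn ℝ (iteratedFDerivWithin ℝ m h (interior u)) (interior u) :=
    hcd'.differentiableOn_iteratedFDerivWithin (by exact_mod_cast lt_add_one m)
      hO.uniqueDiffOn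
  have heq : iteratedFDeriv ℝ m h =ᶠ[𝓝 w] iteratedFDerivWithin ℝ m h (interior u) :=
    Filter.eventuallyEq_of_mem (hO.mem_nhds hwO)
      (fun x hx => (iteratedFDerivWithin_of_isOpen m hO hx).symm)
  exact (((hdiff w hwO).differentiableAt (hO.mem_nhds hwO)).congr_of_eventuallyEq heq)

lemma extFlat {h : G × V → F}
    (hU : ∀ w : G × V, w.1 ≠ 0 → ContDiffAt ℝ (⊤ : ℕ∞) h w)
    (h0 : ∀ w : G × V, w.1 = 0 → h w = 0)
    (hlim : ∀ k : ℕ, ∀ p : G × V, p.1 = 0 → ∀ ε > (0:ℝ), ∃ δ > (0:ℝ),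
      ∀ w : G × V, w.1 ≠ 0 → ‖w - p‖ < δ → ‖iteratedFDeriv ℝ k h w‖ ≤ ε) :
    ContDiff ℝ (⊤ : ℕ∞) h ∧ ∀ w : G × V, w.1 = 0 → ∀ m : ℕ, iteratedFDeriv ℝ m h w = 0 := by
  have normfst : ∀ a : G, ∀ b : V, ‖a‖ ≤ ‖(a, b)‖ := fun a b => norm_fst_le (a, b)
  have hasD : ∀ (m : ℕ), (∀ p : G × V, p.1 = 0 → iteratedFDeriv ℝ m h p = 0) →
      ∀ p : G × V, p.1 = 0 → HasFDerivAt (iteratedFDeriv ℝ m h)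
        (0 : (G × V) →L[ℝ] (ContinuousMultilinearMap ℝ (fun _ : Fin m => G × V) F)) p := by
    intro m Pm p hp
    have contS : ∀ q : G × V, q.1 = 0 → ContinuousAt (iteratedFDeriv ℝ m h) q := by
      intro q hq
      rw [Metric.continuousAt_iff]
      intro ε hε
      obtain ⟨δ, hδ, hb⟩ := hlim m q hq (ε/2) (half_pos hε)
      refine ⟨δ, hδ, fun {w} hwδ => ?_⟩
      rw [dist_eq_norm, Pm q hq, sub_zero]
      by_cases hw1 : w.1 = 0
      · rw [Pm w hw1]; simpa using hε
      · exact lt_of_le_of_lt (hb w hw1 (by rwa [dist_eq_norm] at hwδ)) (half_lt_self hε)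
    have key : ∀ c : ℝ, 0 < c → ∀ᶠ w in 𝓝 p, ‖iteratedFDeriv ℝ m h w‖ ≤ c * ‖w - p‖ := by
      intro c hc
      obtain ⟨δ, hδ, hb⟩ := hlim (m+1) p hp c hc
      filter_upwards [Metric.ball_mem_nhds p hδ] with w hw
      rw [Metric.mem_ball, dist_eq_norm] at hw
      by_cases hw1 : w.1 = 0
      · rw [Pm w hw1]
        simp only [norm_zero]
        positivity
      · have hz : w.1 ≠ 0 := hw1
        have segEst : ∀ t : ℝ, t ∈ Ioc (0:ℝ) 1 →
            ‖iteratedFDeriv ℝ m h w - iteratedFDeriv ℝ m h (t • w.1, w.2)‖ ≤ c * ‖w - p‖ := by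
          intro t ht
          have hseg : ∀ ξ ∈ segment ℝ ((t • w.1, w.2) : G × V) w,
              ∃ τ : ℝ, τ ∈ Icc t 1 ∧ ξ = (τ • w.1, w.2) := by
            intro ξ hξ
            rw [segment_eq_image'] at hξ
            obtain ⟨θ, hθ, rfl⟩ := hξ
            refine ⟨t + θ * (1 - t), ⟨le_add_of_nonneg_right (by nlinarith [ht.2, hθ.1, hθ.2]),
              by nlinarith [ht.2, hθ.1, hθ.2]⟩, ?_⟩
            have : w - ((t • w.1, w.2) : G × V) = ((1 - t) • w.1, 0) := by
              ext
              · simp [sub_smul]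
              · simp
            rw [this]
            ext
            · simp [smul_smul, add_smul]
            · simp
          have hmem : ∀ ξ ∈ segment ℝ ((t • w.1, w.2) : G × V) w, ξ.1 ≠ 0 ∧ ‖ξ - p‖ < δ := by
            intro ξ hξ
            obtain ⟨τ, hτ, rfl⟩ := hseg ξ hξ
            have hτ0 : 0 < τ := lt_of_lt_of_le ht.1 hτ.1
            constructor
            · exact smul_ne_zero (ne_of_gt hτ0) hz
            · have h1 : ‖τ • w.1 - p.1‖ ≤ ‖w.1 - p.1‖ := by
                rw [hp, sub_zero, sub_zero, norm_smul, Real.norm_eq_abs,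
                  _root_.abs_of_pos hτ0]
                nlinarith [norm_nonneg w.1, hτ.2]
              have h2 : ‖((τ • w.1, w.2) : G × V) - p‖ ≤ ‖w - p‖ := by
                rw [Prod.norm_def, Prod.norm_def]
                apply max_le
                · exact le_trans h1 (le_max_left _ _)
                · exact le_max_right _ _
              exact lt_of_le_of_lt h2 hw
          have hdiffseg : ∀ ξ ∈ segment ℝ ((t • w.1, w.2) : G × V) w,
              DifferentiableAt ℝ (iteratedFDeriv ℝ m h) ξ :=
            fun ξ hξ => diffAtU (hU ξ (hmem ξ hξ).1) m
          have hbound : ∀ ξ ∈ segment ℝ ((t • w.1, w.2) : G × V) w,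
              ‖fderiv ℝ (iteratedFDeriv ℝ m h) ξ‖ ≤ c := by
            intro ξ hξ
            rw [norm_fderiv_iteratedFDeriv]
            exact hb ξ (hmem ξ hξ).1 (hmem ξ hξ).2
          have := Convex.norm_image_sub_le_of_norm_fderiv_le hdiffseg hbound
            (convex_segment _ _) (left_mem_segment ℝ _ _) (right_mem_segment ℝ _ _)
          refine le_trans this ?_
          have : w - ((t • w.1, w.2) : G × V) = ((1 - t) • w.1, 0) := by
            ext
            · simp [sub_smul]
            · simp
          rw [this]
          have h3 : ‖(((1 - t) • w.1, (0:V)) : G × V)‖ ≤ ‖w - p‖ := by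
            rw [Prod.norm_def]
            apply max_le
            · rw [norm_smul, Real.norm_eq_abs, _root_.abs_of_nonneg (by linarith [ht.2])]
              calc (1 - t) * ‖w.1‖ ≤ ‖w.1‖ := by nlinarith [norm_nonneg w.1, ht.1]
                _ = ‖w.1 - p.1‖ := by rw [hp, sub_zero]
                _ ≤ ‖w - p‖ := normfst _ _
            · simp [norm_nonneg]
          exact mul_le_mul_of_nonneg_left h3 (le_of_lt hc)
        have hcont0 : ContinuousAt (fun t : ℝ => iteratedFDeriv ℝ m h (t • w.1, w.2)) 0 := by
          have h1 : ContinuousAt (fun t : ℝ => ((t • w.1, w.2) : G × V)) 0 :=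
            ((continuous_id.smul continuous_const).prodMk continuous_const).continuousAt
          have h2 : ContinuousAt (iteratedFDeriv ℝ m h) (((0:ℝ) • w.1, w.2) : G × V) :=
            contS _ (by simp)
          simpa [Function.comp_def] using
            ContinuousAt.comp (f := fun t : ℝ => ((t • w.1, w.2) : G × V))
              (g := iteratedFDeriv ℝ m h) (x := (0:ℝ)) h2 h1
        have htend : Tendsto (fun t : ℝ => ‖iteratedFDeriv ℝ m h w -
            iteratedFDeriv ℝ m h (t • w.1, w.2)‖) (𝓝[>] (0:ℝ))
            (𝓝 ‖iteratedFDeriv ℝ m h w - iteratedFDeriv ℝ m h ((0:ℝ) • w.1, w.2)‖) := by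
          exact ((((hcont0.tendsto.const_sub _).norm)).mono_left nhdsWithin_le_nhds)
        have h0w : iteratedFDeriv ℝ m h (((0:ℝ) • w.1, w.2) : G × V) = 0 := Pm _ (by simp)
        rw [h0w, sub_zero] at htend
        refine le_of_tendsto htend ?_
        filter_upwards [Ioc_mem_nhdsGT_of_mem (by constructor <;> norm_num : (0:ℝ) ∈ Ico (0:ℝ) 1)]
          with t ht
        exact segEst t ht
    refine HasFDerivAt.of_isLittleO ?_
    rw [Pm p hp]
    simp only [sub_zero, ContinuousLinearMap.zero_apply]
    exact Asymptotics.isLittleO_iff.2 (fun {c} hc => (key c hc).mono (fun w hw => by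
      simpa using hw))
  have main : ∀ m : ℕ, (∀ p : G × V, p.1 = 0 → iteratedFDeriv ℝ m h p = 0) := by
    intro m
    induction m with
    | zero =>
        intro p hpp
        ext v
        simp [iteratedFDeriv_zero_apply, h0 p hpp]
    | succ m ih =>
        intro p hpp
        have h1 : fderiv ℝ (iteratedFDeriv ℝ m h) p = 0 := (hasD m ih p hpp).fderiv
        rw [iteratedFDeriv_succ_eq_comp_left]
        show (continuousMultilinearCurryLeftEquiv ℝ (fun _ : Fin (m+1) => G × V) F).symm
          (fderiv ℝ (iteratedFDeriv ℝ m h) p) = 0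
        rw [h1]
        exact LinearIsometryEquiv.map_zero _
  have diffAll : ∀ m : ℕ, Differentiable ℝ (iteratedFDeriv ℝ m h) := by
    intro m w
    by_cases hw : w.1 = 0
    · exact (hasD m (main m) w hw).differentiableAt
    · exact diffAtU (hU w hw) m
  exact ⟨contDiff_of_differentiable_iteratedFDeriv (fun m _ => diffAll m),
    fun w hw m => main m w hw⟩

end Extension

/-! ### The polar-coordinate section and the lift -/

/-- The section map `(z, v) ↦ ((|z|, arg z), v)`. -/
def secMap : ℂ × V → (ℝ × ℝ) × V :=
  fun w => ((Complex.abs w.1, Complex.arg w.1), w.2)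

/-- The lift of `γ` through polar coordinates. -/
def Lop (γ : (ℝ × ℝ) × V → ℂ) : ℂ × V → ℂ := fun w => γ (secMap w)

lemma contDiffAt_secMap {w : ℂ × V} (hw : w.1 ∈ slitPlane) :
    ContDiffAt ℝ (⊤ : ℕ∞) (secMap : ℂ × V → (ℝ × ℝ) × V) w := by
  have habs : (fun w : ℂ × V => Complex.abs w.1) = fun w : ℂ × V => ‖w.1‖ := by
    funext w; exact (Complex.norm_eq_abs _).symm
  have harg : (fun w : ℂ × V => Complex.arg w.1) =
      fun w : ℂ × V => (Complex.log w.1).im := by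
    funext w; exact (Complex.log_im _).symm
  have h1 : ContDiffAt ℝ (⊤ : ℕ∞) (fun w : ℂ × V => Complex.abs w.1) w := by
    rw [habs]
    exact (contDiffAt_norm ℂ (slitPlane_ne_zero hw)).comp w contDiff_fst.contDiffAt
  have h2 : ContDiffAt ℝ (⊤ : ℕ∞) (fun w : ℂ × V => Complex.arg w.1) w := by
    rw [harg]
    exact (Complex.imCLM.contDiff.contDiffAt).comp _
      (((Complex.contDiffAt_log hw).restrict_scalars ℝ).comp w contDiff_fst.contDiffAt)
  exact (h1.prodMk h2).prodMk contDiff_snd.contDiffAt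

/-! ### Invariance and the basic functional identities -/

section Invariance

variable (γ : (ℝ × ℝ) × V → ℂ)
variable (hσ : ∀ (x y : ℝ) (v : V), γ ((-x, y + π), v) = γ ((x, y), v))

include hσ

lemma hper : ∀ (x y : ℝ) (v : V), γ ((x, y + 2 * π), v) = γ ((x, y), v) := by
  intro x y v
  have h1 := hσ (-x) (y + π) v
  have h2 := hσ x y v
  rw [neg_neg] at h1
  calc γ ((x, y + 2 * π), v) = γ ((x, (y + π) + π), v) := by ring_nf
    _ = γ ((-x, y + π), v) := h1
    _ = γ ((x, y), v) := h2

lemma hperZ : ∀ (k : ℤ) (x y : ℝ) (v : V), γ ((x, y + k * (2 * π)), v) = γ ((x, y), v) := by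
  intro k x y v
  have hp : Function.Periodic (fun y : ℝ => γ ((x, y), v)) (2 * π) := fun y => hper γ hσ x y v
  exact (hp.int_mul k) y

lemma E1 : ∀ (z : ℂ) (v : V),
    γ ((Complex.abs z, Complex.arg z), v) = γ ((-Complex.abs z, Complex.arg (-z)), v) := by
  intro z v
  rcases eq_or_ne z 0 with rfl | hz
  · simp
  · have key : γ ((-Complex.abs z, Complex.arg (-z)), v)
        = γ ((Complex.abs z, Complex.arg (-z) - π), v) := by
      have := hσ (Complex.abs z) (Complex.arg (-z) - π) v
      rw [sub_add_cancel] at this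
      exact this
    rw [key]
    rcases lt_trichotomy z.im 0 with him | him | him
    · rw [Complex.arg_neg_eq_arg_add_pi_of_im_neg him, add_sub_cancel_right]
    · rcases lt_trichotomy z.re 0 with hre | hre | hre
      · have ha1 : Complex.arg z = π := Complex.arg_eq_pi_iff.2 ⟨hre, him⟩
        have ha2 : Complex.arg (-z) = 0 := by
          rw [Complex.arg_eq_zero_iff]
          constructor
          · simp [Complex.neg_re]; linarith
          · simp [Complex.neg_im, him]
        rw [ha1, ha2]
        have : (0 : ℝ) - π = π + (-1 : ℤ) * (2 * π) := by push_cast; ring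
        rw [this]
        exact (hperZ γ hσ (-1) (Complex.abs z) π v).symm
      · exact absurd (Complex.ext hre him) hz
      · have ha1 : Complex.arg z = 0 := Complex.arg_eq_zero_iff.2 ⟨le_of_lt hre, him⟩
        have ha2 : Complex.arg (-z) = π := by
          rw [Complex.arg_eq_pi_iff]
          constructor
          · simp [Complex.neg_re]; linarith
          · simp [Complex.neg_im, him]
        rw [ha1, ha2, sub_self]
    · rw [Complex.arg_neg_eq_arg_sub_pi_of_im_pos him]
      have : Complex.arg z - π - π = Complex.arg z + (-1 : ℤ) * (2 * π) := by push_cast; ring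
      rw [this]
      exact (hperZ γ hσ (-1) (Complex.abs z) (Complex.arg z) v).symm

lemma keyPos : ∀ x : ℝ, 0 < x → ∀ (y : ℝ) (v : V),
    Lop γ (((x : ℂ) * Complex.exp (Complex.I * (y : ℂ))), v) = γ ((x, y), v) := by
  intro x hx y v
  set z := (x : ℂ) * Complex.exp (Complex.I * (y : ℂ)) with hzdef
  have habs : Complex.abs z = x := by
    rw [hzdef, map_mul, Complex.abs_ofReal, Complex.abs_exp]
    simp [_root_.abs_of_pos hx]
  have harg : ∃ k : ℤ, Complex.arg z = y + k * (2 * π) := by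
    have h1 : (↑(Complex.abs z)) * Complex.exp (↑(Complex.arg z) * Complex.I) = z :=
      Complex.abs_mul_exp_arg_mul_I z
    rw [habs, hzdef] at h1
    have hx0 : (x : ℂ) ≠ 0 := by exact_mod_cast ne_of_gt hx
    have h2 : Complex.exp (↑(Complex.arg z) * Complex.I) =
        Complex.exp (Complex.I * (y : ℂ)) := mul_left_cancel₀ hx0 h1
    obtain ⟨k, hk⟩ := Complex.exp_eq_exp_iff_exists_int.1 h2
    refine ⟨k, ?_⟩
    have him := congrArg Complex.im hk
    simpa [Complex.add_im, Complex.mul_im, Complex.mul_re, Complex.I_re, Complex.I_im,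
      Complex.ofReal_re, Complex.ofReal_im, Complex.intCast_re, Complex.intCast_im] using him
  obtain ⟨k, hk⟩ := harg
  show γ ((Complex.abs z, Complex.arg z), v) = γ ((x, y), v)
  rw [habs, hk]
  exact hperZ γ hσ k x y v

lemma E2 (γ0 : ∀ (y : ℝ) (v : V), γ ((0, y), v) = 0) :
    ∀ (x y : ℝ) (v : V),
      Lop γ (((x : ℂ) * Complex.exp (Complex.I * (y : ℂ))), v) = γ ((x, y), v) := by
  intro x y v
  rcases lt_trichotomy x 0 with hx | hx | hx
  · have hrw : (x : ℂ) * Complex.exp (Complex.I * (y : ℂ)) =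
        ((-x : ℝ) : ℂ) * Complex.exp (Complex.I * ((y + π : ℝ) : ℂ)) := by
      push_cast
      rw [mul_add, Complex.exp_add, mul_comm Complex.I (π : ℂ), Complex.exp_pi_mul_I]
      ring
    rw [hrw, keyPos γ hσ (-x) (by linarith) (y + π) v, hσ x y v]
  · subst hx
    have : ((0 : ℝ) : ℂ) * Complex.exp (Complex.I * (y : ℂ)) = 0 := by simp
    rw [this]
    show γ ((Complex.abs 0, Complex.arg 0), v) = γ ((0, y), v)
    rw [map_zero, Complex.arg_zero, γ0, γ0]
  · exact keyPos γ hσ x hx y v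

end Invariance


/-! ### Quantitative flatness bounds -/

section Bounds

variable [FiniteDimensional ℝ V]

lemma flatBound (γ : (ℝ × ℝ) × V → ℂ) (hγ : ContDiff ℝ (⊤ : ℕ∞) γ)
    (hflat : ∀ q : (ℝ × ℝ) × V, q.1.1 = 0 → ∀ m : ℕ, iteratedFDeriv ℝ m γ q = 0)
    (N : ℕ) (v₀ : V) : ∀ m : ℕ, ∃ K : ℝ, 0 ≤ K ∧ ∀ x y : ℝ, ∀ v : V,
      |x| ≤ 1 → |y| ≤ 4 → ‖v - v₀‖ ≤ 1 →
      ‖iteratedFDeriv ℝ m γ ((x, y), v)‖ ≤ K * |x| ^ N := by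
  have hdiffall : ∀ m : ℕ, Differentiable ℝ (iteratedFDeriv ℝ m γ) := by
    intro m
    apply hγ.differentiable_iteratedFDeriv
    exact_mod_cast lt_top_iff_ne_top.2 (by simp : (m : ℕ∞) ≠ ⊤)
  induction N with
  | zero =>
      intro m
      have hcont : ContinuousOn (iteratedFDeriv ℝ m γ)
          ((Icc (-1:ℝ) 1 ×ˢ Icc (-4:ℝ) 4) ×ˢ Metric.closedBall v₀ 1) :=
        (hγ.continuous_iteratedFDeriv (m := m) (by exact_mod_cast le_top)).continuousOn
      obtain ⟨C, hC⟩ := ((isCompact_Icc.prod isCompact_Icc).prod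
        (isCompact_closedBall v₀ 1)).exists_bound_of_continuousOn hcont
      refine ⟨max C 0, le_max_right _ _, fun x y v hx hy hv => ?_⟩
      rw [pow_zero, mul_one]
      refine le_trans (hC ((x, y), v) ?_) (le_max_left _ _)
      rw [abs_le] at hx hy
      exact ⟨⟨⟨hx.1, hx.2⟩, ⟨hy.1, hy.2⟩⟩, Metric.mem_closedBall.2 (by
        rwa [dist_eq_norm])⟩
  | succ N ihN =>
      intro m
      obtain ⟨K, hK0, hK⟩ := ihN (m + 1)
      refine ⟨K, hK0, fun x y v hx hy hv => ?_⟩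
      have hseg : ∀ ξ ∈ segment ℝ (((0:ℝ), y), v) (((x, y), v) : (ℝ × ℝ) × V),
          ∃ τ : ℝ, τ ∈ Icc (0:ℝ) 1 ∧ ξ = ((τ * x, y), v) := by
        intro ξ hξ
        rw [segment_eq_image'] at hξ
        obtain ⟨θ, hθ, rfl⟩ := hξ
        refine ⟨θ, hθ, ?_⟩
        have : (((x, y), v) : (ℝ × ℝ) × V) - (((0:ℝ), y), v) = ((x, 0), 0) := by
          ext <;> simp
        rw [this]
        ext <;> simp [smul_eq_mul, mul_comm]
      have hbound : ∀ ξ ∈ segment ℝ (((0:ℝ), y), v) (((x, y), v) : (ℝ × ℝ) × V),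
          ‖fderiv ℝ (iteratedFDeriv ℝ m γ) ξ‖ ≤ K * |x| ^ N := by
        intro ξ hξ
        obtain ⟨τ, hτ, rfl⟩ := hseg ξ hξ
        rw [norm_fderiv_iteratedFDeriv]
        have h1 : |τ * x| ≤ |x| := by
          rw [abs_mul, _root_.abs_of_nonneg hτ.1]
          nlinarith [abs_nonneg x, hτ.2]
        refine le_trans (hK (τ * x) y v (le_trans h1 hx) hy hv) ?_
        exact mul_le_mul_of_nonneg_left (pow_le_pow_left₀ (abs_nonneg _) h1 N) hK0
      have hmvt := Convex.norm_image_sub_le_of_norm_fderiv_le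
        (f := iteratedFDeriv ℝ m γ) (fun ξ _ => hdiffall m ξ) hbound (convex_segment _ _)
        (left_mem_segment ℝ _ _) (right_mem_segment ℝ _ _)
      rw [hflat (((0:ℝ), y), v) rfl m, sub_zero] at hmvt
      have hnorm : ‖(((x, y), v) : (ℝ × ℝ) × V) - (((0:ℝ), y), v)‖ = |x| := by
        have : (((x, y), v) : (ℝ × ℝ) × V) - (((0:ℝ), y), v) = ((x, 0), 0) := by
          ext <;> simp
        rw [this, Prod.norm_def, Prod.norm_def]
        simp [Real.norm_eq_abs, abs_nonneg]
      rw [hnorm] at hmvt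
      calc ‖iteratedFDeriv ℝ m γ ((x, y), v)‖ ≤ K * |x| ^ N * |x| := hmvt
        _ = K * |x| ^ (N + 1) := by ring

lemma boundPos (η : (ℝ × ℝ) × V → ℂ) (hη : ContDiff ℝ (⊤ : ℕ∞) η)
    (hflat : ∀ q : (ℝ × ℝ) × V, q.1.1 = 0 → ∀ m : ℕ, iteratedFDeriv ℝ m η q = 0)
    (m : ℕ) (v₀ : V) :
    ∃ C : ℝ, 0 ≤ C ∧ ∀ (z : ℂ) (v : V), z ≠ 0 → 0 ≤ z.re → Complex.abs z ≤ 1 →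
      ‖v - v₀‖ ≤ 1 → ‖iteratedFDeriv ℝ m (Lop η) (z, v)‖ ≤ C * Complex.abs z := by
  classical
  set W : Set (ℂ × V) := {w : ℂ × V | w.1 ∈ slitPlane} with hWdef
  have hWopen : IsOpen W := isOpen_slitPlane.preimage continuous_fst
  have hWu : UniqueDiffOn ℝ W := hWopen.uniqueDiffOn
  have hsec : ContDiffOn ℝ (⊤ : ℕ∞) (secMap : ℂ × V → (ℝ × ℝ) × V) W :=
    fun w hw => (contDiffAt_secMap hw).contDiffWithinAt
  -- the compact arc
  set Karc : Set (ℂ × V) :=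
    (Metric.sphere (0:ℂ) 1 ∩ {u : ℂ | 0 ≤ u.re}) ×ˢ Metric.closedBall v₀ 1 with hKarcdef
  have hKcomp : IsCompact Karc :=
    ((isCompact_sphere 0 1).inter_right
      (isClosed_le continuous_const Complex.continuous_re)).prod
      (isCompact_closedBall v₀ 1)
  have hKW : Karc ⊆ W := by
    rintro ⟨u, v⟩ ⟨⟨hu1, hu2⟩, -⟩
    have hu2' : (0:ℝ) ≤ u.re := hu2
    have hu0 : u ≠ 0 := by
      intro h
      rw [h] at hu1
      simp at hu1
    show u ∈ slitPlane
    rw [mem_slitPlane_iff]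
    rcases lt_or_eq_of_le hu2' with h | h
    · exact Or.inl h
    · exact Or.inr (fun him => hu0 (Complex.ext_iff.2 ⟨by simp [← h], by simp [him]⟩))
  -- bounds on derivatives of the section on the arc
  have hBex : ∀ i : ℕ, ∃ B : ℝ, ∀ p ∈ Karc,
      ‖iteratedFDerivWithin ℝ i (secMap : ℂ × V → (ℝ × ℝ) × V) W p‖ ≤ B := by
    intro i
    obtain ⟨B, hB⟩ := hKcomp.exists_bound_of_continuousOn
      ((hsec.continuousOn_iteratedFDerivWithin (by exact_mod_cast le_top) hWu).mono hKW)
    exact ⟨B, hB⟩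
  choose B hB using hBex
  set D : ℝ := 1 + ∑ i ∈ Finset.range (m + 1), max (B i) 0 with hDdef
  have hD1 : 1 ≤ D := by
    have : (0:ℝ) ≤ ∑ i ∈ Finset.range (m + 1), max (B i) 0 :=
      Finset.sum_nonneg (fun i _ => le_max_right _ _)
    simp only [hDdef]; linarith
  have hDB : ∀ i, i ≤ m → B i ≤ D := by
    intro i hi
    have h1 : max (B i) 0 ≤ ∑ j ∈ Finset.range (m + 1), max (B j) 0 :=
      Finset.single_le_sum (f := fun j => max (B j) 0) (fun j _ => le_max_right _ _)
        (Finset.mem_range.2 (Nat.lt_succ_of_le hi))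
    have h2 : B i ≤ max (B i) 0 := le_max_left _ _
    simp only [hDdef]; linarith
  -- bounds on derivatives of η from flatness
  choose K hK0 hK using flatBound η hη hflat (m + 1) v₀
  set Kc : ℝ := 1 + ∑ i ∈ Finset.range (m + 1), K i with hKcdef
  have hKc0 : 0 < Kc := by
    have : (0:ℝ) ≤ ∑ i ∈ Finset.range (m + 1), K i :=
      Finset.sum_nonneg (fun i _ => hK0 i)
    simp only [hKcdef]; linarith
  have hKcK : ∀ i, i ≤ m → K i ≤ Kc := by
    intro i hi
    have h1 : K i ≤ ∑ j ∈ Finset.range (m + 1), K j :=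
      Finset.single_le_sum (f := fun j => K j) (fun j _ => hK0 j)
        (Finset.mem_range.2 (Nat.lt_succ_of_le hi))
    simp only [hKcdef]; linarith
  refine ⟨m.factorial * Kc * D ^ m, by positivity, ?_⟩
  intro z v hz hre habs1 hv
  set lam : ℝ := Complex.abs z with hlamdef
  have hlam0 : 0 < lam := Complex.abs.pos hz
  have hlam1 : lam ≤ 1 := habs1
  have hlaminv1 : 1 ≤ lam⁻¹ := (one_le_inv₀ hlam0).2 hlam1
  -- the linear maps
  set Mc : ℂ × V →L[ℝ] ℂ × V :=
    (lam⁻¹ • ContinuousLinearMap.id ℝ ℂ).prodMap (ContinuousLinearMap.id ℝ V) with hMcdef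
  set Tc : (ℝ × ℝ) × V →L[ℝ] (ℝ × ℝ) × V :=
    ((lam • ContinuousLinearMap.id ℝ ℝ).prodMap (ContinuousLinearMap.id ℝ ℝ)).prodMap
      (ContinuousLinearMap.id ℝ V) with hTcdef
  have hMcapp : ∀ w : ℂ × V, Mc w = (lam⁻¹ • w.1, w.2) := fun w => rfl
  have hTcapp : ∀ q : (ℝ × ℝ) × V, Tc q = ((lam * q.1.1, q.1.2), q.2) := by
    intro q
    show ((lam • q.1.1, q.1.2), q.2) = ((lam * q.1.1, q.1.2), q.2)
    rw [smul_eq_mul]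
  set Ψ : ℂ × V → ℂ := (η ∘ Tc) ∘ (secMap : ℂ × V → (ℝ × ℝ) × V) with hΨdef
  -- global identity
  have habs_smul : ∀ ζ : ℂ, Complex.abs (lam⁻¹ • ζ) = lam⁻¹ * Complex.abs ζ := by
    intro ζ
    rw [Complex.real_smul, map_mul, Complex.abs_ofReal, _root_.abs_of_pos (inv_pos.2 hlam0)]
  have harg_smul : ∀ ζ : ℂ, Complex.arg (lam⁻¹ • ζ) = Complex.arg ζ := by
    intro ζ
    rw [Complex.real_smul]
    exact Complex.arg_real_mul ζ (inv_pos.2 hlam0)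
  have hGlob : Lop η = Ψ ∘ Mc := by
    funext w
    show η (secMap w) = η (Tc (secMap (Mc w)))
    rw [hMcapp]
    show η (secMap w) = η (Tc ((Complex.abs (lam⁻¹ • w.1), Complex.arg (lam⁻¹ • w.1)), w.2))
    rw [hTcapp]
    simp only [habs_smul, harg_smul]
    rw [← mul_assoc, mul_inv_cancel₀ (ne_of_gt hlam0), one_mul]
    rfl
  -- membership facts
  have hzslit : z ∈ slitPlane := by
    rcases lt_or_eq_of_le hre with h | h
    · exact Or.inl h
    · exact Or.inr (fun him => hz (Complex.ext (by simpa using h.symm) (by simpa using him)))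
  have hzW : (z, v) ∈ W := hzslit
  set u : ℂ := lam⁻¹ • z with hudef
  have huabs : Complex.abs u = 1 := by
    rw [hudef, habs_smul, inv_mul_cancel₀ (ne_of_gt hlam0)]
  have hre_smul : ∀ ζ : ℂ, (lam⁻¹ • ζ).re = lam⁻¹ * ζ.re := by
    intro ζ; rw [Complex.real_smul]; simp [Complex.mul_re]
  have him_smul : ∀ ζ : ℂ, (lam⁻¹ • ζ).im = lam⁻¹ * ζ.im := by
    intro ζ; rw [Complex.real_smul]; simp [Complex.mul_im]
  have hure : 0 ≤ u.re := by
    rw [hudef, hre_smul]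
    positivity
  have huKarc : (u, v) ∈ Karc := by
    refine ⟨⟨?_, hure⟩, Metric.mem_closedBall.2 (by rwa [dist_eq_norm])⟩
    rw [Metric.mem_sphere, dist_zero_right, Complex.norm_eq_abs, huabs]
  have huW : (u, v) ∈ W := hKW huKarc
  have hMcz : Mc (z, v) = (u, v) := by rw [hMcapp]
  have hslit_smul : ∀ ζ : ℂ, lam⁻¹ • ζ ∈ slitPlane ↔ ζ ∈ slitPlane := by
    intro ζ
    have hinv : 0 < lam⁻¹ := inv_pos.2 hlam0
    rw [mem_slitPlane_iff, mem_slitPlane_iff, hre_smul, him_smul]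
    constructor
    · rintro (h | h)
      · exact Or.inl (by nlinarith)
      · exact Or.inr (fun h0 => h (by rw [h0, mul_zero]))
    · rintro (h | h)
      · exact Or.inl (by positivity)
      · exact Or.inr (mul_ne_zero (ne_of_gt hinv) h)
  have hMcW : Mc ⁻¹' W = W := by
    ext w
    simp only [mem_preimage, hMcapp, hWdef, mem_setOf_eq]
    exact hslit_smul w.1
  -- smoothness
  have hηT : ContDiff ℝ (⊤ : ℕ∞) (η ∘ Tc) := hη.comp Tc.contDiff
  have hΨsm : ContDiffOn ℝ (⊤ : ℕ∞) Ψ W := hηT.comp_contDiffOn hsec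
  -- step 1 : peel off the dilation on the right
  have hstep1 : iteratedFDeriv ℝ m (Lop η) (z, v)
      = (iteratedFDerivWithin ℝ m Ψ W (u, v)).compContinuousLinearMap (fun _ => Mc) := by
    have e1 : iteratedFDeriv ℝ m (Lop η) (z, v)
        = iteratedFDerivWithin ℝ m (Lop η) W (z, v) :=
      (iteratedFDerivWithin_of_isOpen m hWopen hzW).symm
    have e2 := Mc.iteratedFDerivWithin_comp_right (f := Ψ) hΨsm hWu
      (by rw [hMcW]; exact hWu) (x := (z, v)) (by rw [hMcz]; exact huW)
      (i := m) (by exact_mod_cast le_top)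
    rw [e1, hGlob]
    have e3 : iteratedFDerivWithin ℝ m (Ψ ∘ Mc) W (z, v)
        = iteratedFDerivWithin ℝ m (Ψ ∘ Mc) (Mc ⁻¹' W) (z, v) := by rw [hMcW]
    rw [e3, e2, hMcz]
  -- operator norms
  have hMcnorm : ‖Mc‖ ≤ lam⁻¹ := by
    refine ContinuousLinearMap.opNorm_le_bound _ (by positivity) (fun w => ?_)
    rw [hMcapp]
    simp only [Prod.norm_def]
    rw [norm_smul, Real.norm_eq_abs, _root_.abs_of_pos (inv_pos.2 hlam0)]
    apply max_le
    · exact mul_le_mul_of_nonneg_left (le_max_left _ _) (by positivity)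
    · exact le_trans (le_max_right ‖w.1‖ ‖w.2‖)
        (le_mul_of_one_le_left (le_max_of_le_right (norm_nonneg _)) hlaminv1)
  have hTcnorm : ‖Tc‖ ≤ 1 := by
    refine ContinuousLinearMap.opNorm_le_bound _ zero_le_one (fun q => ?_)
    rw [hTcapp, one_mul]
    simp only [Prod.norm_def]
    have h1 : ‖lam * q.1.1‖ ≤ ‖q.1.1‖ := by
      rw [Real.norm_eq_abs, Real.norm_eq_abs, abs_mul, _root_.abs_of_pos hlam0]
      nlinarith [abs_nonneg q.1.1]
    exact max_le_max (max_le_max h1 le_rfl) le_rfl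
  -- bound on the derivatives of η ∘ Tc at the relevant point
  have hC : ∀ i, i ≤ m →
      ‖iteratedFDerivWithin ℝ i (η ∘ Tc) univ (secMap ((u, v) : ℂ × V))‖
        ≤ Kc * lam ^ (m + 1) := by
    intro i hi
    rw [iteratedFDerivWithin_univ]
    rw [Tc.iteratedFDeriv_comp_right (f := η) hη (secMap ((u, v) : ℂ × V))
      (i := i) (by exact_mod_cast le_top)]
    refine le_trans (ContinuousMultilinearMap.norm_compContinuousLinearMap_le _ _) ?_
    have hb1 : ‖iteratedFDeriv ℝ i η (Tc (secMap ((u, v) : ℂ × V)))‖ ≤ K i * lam ^ (m+1) := by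
      have hpt : Tc (secMap ((u, v) : ℂ × V)) = ((lam, Complex.arg u), v) := by
        rw [hTcapp]
        show ((lam * Complex.abs u, Complex.arg u), v) = _
        rw [huabs, mul_one]
      rw [hpt]
      have h2 := hK i lam (Complex.arg u) v
        (by rw [_root_.abs_of_pos hlam0]; exact hlam1)
        (le_trans (Complex.abs_arg_le_pi u) Real.pi_le_four) hv
      rwa [_root_.abs_of_pos hlam0] at h2
    have hb2 : (∏ _j : Fin i, ‖Tc‖) ≤ 1 := by
      rw [Finset.prod_const, Finset.card_univ, Fintype.card_fin]
      exact pow_le_one₀ (norm_nonneg _) hTcnorm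
    calc ‖iteratedFDeriv ℝ i η (Tc (secMap ((u, v) : ℂ × V)))‖ * ∏ _j : Fin i, ‖Tc‖
        ≤ (K i * lam ^ (m+1)) * 1 := by
          refine mul_le_mul hb1 hb2 (Finset.prod_nonneg (fun j _ => norm_nonneg _)) ?_
          nlinarith [hK0 i, pow_pos hlam0 (m+1)]
      _ = K i * lam ^ (m+1) := mul_one _
      _ ≤ Kc * lam ^ (m+1) := by nlinarith [hKcK i hi, pow_pos hlam0 (m+1)]
  -- bound on section derivatives
  have hDbound : ∀ i, 1 ≤ i → i ≤ m →
      ‖iteratedFDerivWithin ℝ i (secMap : ℂ × V → (ℝ × ℝ) × V) W ((u, v) : ℂ × V)‖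
        ≤ D ^ i := by
    intro i h1 h2
    calc ‖iteratedFDerivWithin ℝ i (secMap : ℂ × V → (ℝ × ℝ) × V) W ((u, v) : ℂ × V)‖
        ≤ B i := hB i (u, v) huKarc
      _ ≤ D := hDB i h2
      _ ≤ D ^ i := le_self_pow₀ (by linarith) (by omega)
  -- the composition bound
  have hcomp := norm_iteratedFDerivWithin_comp_le (𝕜 := ℝ) (g := η ∘ Tc)
    (f := (secMap : ℂ × V → (ℝ × ℝ) × V)) (n := m) (s := W)
    (t := (univ : Set ((ℝ × ℝ) × V)))
    hηT.contDiffOn hsec (by exact_mod_cast le_top) uniqueDiffOn_univ hWu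
    (mapsTo_univ _ _) huW hC hDbound
  -- conclusion
  have hD0 : (0:ℝ) < D := lt_of_lt_of_le one_pos hD1
  rw [hstep1]
  refine le_trans (ContinuousMultilinearMap.norm_compContinuousLinearMap_le _ _) ?_
  have hMm : (∏ _j : Fin m, ‖Mc‖) ≤ lam⁻¹ ^ m := by
    rw [Finset.prod_const, Finset.card_univ, Fintype.card_fin]
    exact pow_le_pow_left₀ (norm_nonneg _) hMcnorm m
  have hmain := mul_le_mul hcomp hMm
    (Finset.prod_nonneg (fun j _ => norm_nonneg _))
    (by positivity)
  refine le_trans hmain ?_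
  have halg : lam ^ (m+1) * lam⁻¹ ^ m = lam := by
    rw [pow_succ, inv_pow]
    field_simp
  calc (m.factorial : ℝ) * (Kc * lam ^ (m + 1)) * D ^ m * lam⁻¹ ^ m
      = (m.factorial : ℝ) * Kc * D ^ m * (lam ^ (m+1) * lam⁻¹ ^ m) := by ring
    _ = (m.factorial : ℝ) * Kc * D ^ m * lam := by rw [halg]
    _ ≤ (m.factorial : ℝ) * Kc * D ^ m * lam := le_rfl


/-! ### The flip and the negative half-plane -/

def Rflip : (ℝ × ℝ) × V →L[ℝ] (ℝ × ℝ) × V :=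
  ((-(ContinuousLinearMap.id ℝ ℝ)).prodMap (ContinuousLinearMap.id ℝ ℝ)).prodMap
    (ContinuousLinearMap.id ℝ V)

lemma Rflip_apply (q : (ℝ × ℝ) × V) : (Rflip : (ℝ × ℝ) × V →L[ℝ] (ℝ × ℝ) × V) q
    = ((-q.1.1, q.1.2), q.2) := rfl

def negW : (ℂ × V) ≃ₗᵢ[ℝ] ℂ × V where
  toLinearEquiv := (LinearEquiv.neg ℝ).prodCongr (LinearEquiv.refl ℝ V)
  norm_map' := fun w => by
    show ‖(-w.1, w.2)‖ = ‖w‖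
    rw [Prod.norm_def, Prod.norm_def, norm_neg]

lemma negW_apply (w : ℂ × V) : (negW : (ℂ × V) ≃ₗᵢ[ℝ] ℂ × V) w = (-w.1, w.2) := rfl

variable [FiniteDimensional ℝ V]

lemma flip_flat (γ : (ℝ × ℝ) × V → ℂ) (hγ : ContDiff ℝ (⊤ : ℕ∞) γ)
    (hflat : ∀ q : (ℝ × ℝ) × V, q.1.1 = 0 → ∀ m : ℕ, iteratedFDeriv ℝ m γ q = 0) :
    ∀ q : (ℝ × ℝ) × V, q.1.1 = 0 → ∀ k : ℕ,
      iteratedFDeriv ℝ k (γ ∘ (Rflip : (ℝ × ℝ) × V →L[ℝ] (ℝ × ℝ) × V)) q = 0 := by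
  intro q hq k
  rw [ContinuousLinearMap.iteratedFDeriv_comp_right (Rflip : (ℝ × ℝ) × V →L[ℝ] (ℝ × ℝ) × V)
    hγ q (by exact_mod_cast le_top)]
  have h1 : iteratedFDeriv ℝ k γ ((Rflip : (ℝ × ℝ) × V →L[ℝ] (ℝ × ℝ) × V) q) = 0 :=
    hflat _ (by rw [Rflip_apply]; simpa using hq) k
  rw [h1]
  ext v
  simp

lemma hId (γ : (ℝ × ℝ) × V → ℂ)
    (hσ : ∀ (x y : ℝ) (v : V), γ ((-x, y + π), v) = γ ((x, y), v)) :
    (Lop γ : ℂ × V → ℂ)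
      = (Lop (γ ∘ (Rflip : (ℝ × ℝ) × V →L[ℝ] (ℝ × ℝ) × V)))
        ∘ (negW : (ℂ × V) ≃ₗᵢ[ℝ] ℂ × V) := by
  funext w
  have habsneg : Complex.abs (-w.1) = Complex.abs w.1 := by
    rw [← Complex.norm_eq_abs, ← Complex.norm_eq_abs, norm_neg]
  show γ ((Complex.abs w.1, Complex.arg w.1), w.2)
    = (γ ∘ (Rflip : (ℝ × ℝ) × V →L[ℝ] (ℝ × ℝ) × V))
        ((Complex.abs (-w.1), Complex.arg (-w.1)), w.2)
  show γ ((Complex.abs w.1, Complex.arg w.1), w.2)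
    = γ ((Rflip : (ℝ × ℝ) × V →L[ℝ] (ℝ × ℝ) × V) ((Complex.abs (-w.1), Complex.arg (-w.1)), w.2))
  rw [Rflip_apply, habsneg]
  exact E1 γ hσ w.1 w.2

lemma boundAll (γ : (ℝ × ℝ) × V → ℂ) (hγ : ContDiff ℝ (⊤ : ℕ∞) γ)
    (hflat : ∀ q : (ℝ × ℝ) × V, q.1.1 = 0 → ∀ m : ℕ, iteratedFDeriv ℝ m γ q = 0)
    (hσ : ∀ (x y : ℝ) (v : V), γ ((-x, y + π), v) = γ ((x, y), v))
    (m : ℕ) (v₀ : V) :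
    ∃ C : ℝ, 0 ≤ C ∧ ∀ (z : ℂ) (v : V), z ≠ 0 → Complex.abs z ≤ 1 →
      ‖v - v₀‖ ≤ 1 → ‖iteratedFDeriv ℝ m (Lop γ) (z, v)‖ ≤ C * Complex.abs z := by
  have hγfsm : ContDiff ℝ (⊤ : ℕ∞) (γ ∘ (Rflip : (ℝ × ℝ) × V →L[ℝ] (ℝ × ℝ) × V)) :=
    hγ.comp (Rflip : (ℝ × ℝ) × V →L[ℝ] (ℝ × ℝ) × V).contDiff
  obtain ⟨C₁, hC₁0, hC₁⟩ := boundPos γ hγ hflat m v₀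
  obtain ⟨C₂, hC₂0, hC₂⟩ := boundPos (γ ∘ (Rflip : (ℝ × ℝ) × V →L[ℝ] (ℝ × ℝ) × V)) hγfsm
    (flip_flat γ hγ hflat) m v₀
  refine ⟨max C₁ C₂, le_trans hC₁0 (le_max_left _ _), ?_⟩
  intro z v hz habs hv
  rcases le_or_gt 0 z.re with h | h
  · exact le_trans (hC₁ z v hz h habs hv)
      (mul_le_mul_of_nonneg_right (le_max_left _ _) (Complex.abs.nonneg _))
  · have habsneg : Complex.abs (-z) = Complex.abs z := by
      rw [← Complex.norm_eq_abs, ← Complex.norm_eq_abs, norm_neg]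
    have h1 : ‖iteratedFDeriv ℝ m (Lop γ) (z, v)‖
        = ‖iteratedFDeriv ℝ m
            (Lop (γ ∘ (Rflip : (ℝ × ℝ) × V →L[ℝ] (ℝ × ℝ) × V))) (-z, v)‖ := by
      rw [hId γ hσ]
      have := (negW : (ℂ × V) ≃ₗᵢ[ℝ] ℂ × V).norm_iteratedFDeriv_comp_right
        (Lop (γ ∘ (Rflip : (ℝ × ℝ) × V →L[ℝ] (ℝ × ℝ) × V))) ((z, v) : ℂ × V) m
      rw [this, negW_apply]
    rw [h1]
    have h2 := hC₂ (-z) v (neg_ne_zero.2 hz)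
      (by simp only [Complex.neg_re]; linarith) (by rwa [habsneg]) hv
    rw [habsneg] at h2
    exact le_trans h2 (mul_le_mul_of_nonneg_right (le_max_right _ _) (Complex.abs.nonneg _))

lemma contDiffAt_Lop (γ : (ℝ × ℝ) × V → ℂ) (hγ : ContDiff ℝ (⊤ : ℕ∞) γ)
    (hσ : ∀ (x y : ℝ) (v : V), γ ((-x, y + π), v) = γ ((x, y), v))
    {w : ℂ × V} (hw : w.1 ≠ 0) : ContDiffAt ℝ (⊤ : ℕ∞) (Lop γ) w := by
  by_cases hs : w.1 ∈ slitPlane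
  · exact hγ.contDiffAt.comp w (contDiffAt_secMap hs)
  · have hs' := hs
    rw [mem_slitPlane_iff] at hs'
    push_neg at hs'
    have hres : w.1.re < 0 := by
      rcases lt_or_eq_of_le hs'.1 with h | h
      · exact h
      · exact absurd (Complex.ext_iff.2 ⟨by simpa using h, by simpa using hs'.2⟩) hw
    have hnegslit : -w.1 ∈ slitPlane := Or.inl (by simp only [Complex.neg_re]; linarith)
    rw [hId γ hσ]
    have hγfsm : ContDiff ℝ (⊤ : ℕ∞) (γ ∘ (Rflip : (ℝ × ℝ) × V →L[ℝ] (ℝ × ℝ) × V)) :=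
      hγ.comp (Rflip : (ℝ × ℝ) × V →L[ℝ] (ℝ × ℝ) × V).contDiff
    have hinner : ContDiffAt ℝ (⊤ : ℕ∞)
        (Lop (γ ∘ (Rflip : (ℝ × ℝ) × V →L[ℝ] (ℝ × ℝ) × V)))
        ((negW : (ℂ × V) ≃ₗᵢ[ℝ] ℂ × V) w) := by
      refine hγfsm.contDiffAt.comp _ (contDiffAt_secMap ?_)
      rw [negW_apply]
      exact hnegslit
    exact hinner.comp w ((negW : (ℂ × V) ≃ₗᵢ[ℝ] ℂ × V).contDiff.contDiffAt)

end Bounds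

end Stmt8Aux

theorem stmt_8 (n : ℕ) (γ : (ℝ × ℝ) × (Fin (2 * n) → ℝ) → ℂ)
    (hγ : ContDiff ℝ (⊤ : ℕ∞) γ)
    (hinv : γ ∘ sigmaTilde n = γ)
    (hvan : ∀ q : (ℝ × ℝ) × (Fin (2 * n) → ℝ), q.1.1 = 0 →
      ∀ m : ℕ, iteratedFDeriv ℝ m γ q = 0) :
    ∃! h : ℂ × (Fin (2 * n) → ℝ) → ℂ,
      ContDiff ℝ (⊤ : ℕ∞) h ∧
      (∀ q : (ℝ × ℝ) × (Fin (2 * n) → ℝ), h (gTilde n q) = γ q) ∧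
      (∀ w : ℂ × (Fin (2 * n) → ℝ), w.1 = 0 → ∀ m : ℕ, iteratedFDeriv ℝ m h w = 0) := by
  classical
  have hσ : ∀ (x y : ℝ) (v : Fin (2 * n) → ℝ), γ ((-x, y + π), v) = γ ((x, y), v) := by
    intro x y v
    exact congrFun hinv ((x, y), v)
  have γ0 : ∀ (y : ℝ) (v : Fin (2 * n) → ℝ), γ ((0, y), v) = 0 := by
    intro y v
    have h1 := hvan ((0, y), v) rfl 0
    have h2 : γ ((0, y), v) = iteratedFDeriv ℝ 0 γ ((0, y), v) (fun _ => 0) :=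
      (iteratedFDeriv_zero_apply _).symm
    rw [h1] at h2
    simpa using h2
  have h0 : ∀ w : ℂ × (Fin (2 * n) → ℝ), w.1 = 0 → Stmt8Aux.Lop γ w = 0 := by
    intro w hw
    show γ ((Complex.abs w.1, Complex.arg w.1), w.2) = 0
    rw [hw, map_zero, Complex.arg_zero]
    exact γ0 0 w.2
  have hU : ∀ w : ℂ × (Fin (2 * n) → ℝ), w.1 ≠ 0 →
      ContDiffAt ℝ (⊤ : ℕ∞) (Stmt8Aux.Lop γ) w :=
    fun w hw => Stmt8Aux.contDiffAt_Lop γ hγ hσ hw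
  have hlim : ∀ k : ℕ, ∀ p : ℂ × (Fin (2 * n) → ℝ), p.1 = 0 → ∀ ε > (0:ℝ), ∃ δ > (0:ℝ),
      ∀ w : ℂ × (Fin (2 * n) → ℝ), w.1 ≠ 0 → ‖w - p‖ < δ →
        ‖iteratedFDeriv ℝ k (Stmt8Aux.Lop γ) w‖ ≤ ε := by
    intro k p hp ε hε
    obtain ⟨C, hC0, hC⟩ := Stmt8Aux.boundAll γ hγ hvan hσ k p.2
    refine ⟨min 1 (ε / (C + 1)), by positivity, ?_⟩
    intro w hw1 hwp
    have habsle : Complex.abs w.1 ≤ ‖w - p‖ := by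
      rw [← Complex.norm_eq_abs]
      have hfst : w.1 = (w - p).1 := by rw [Prod.fst_sub, hp, sub_zero]
      rw [hfst]
      exact norm_fst_le _
    have hble : ‖w.2 - p.2‖ ≤ ‖w - p‖ := norm_snd_le (w - p)
    have h1 : Complex.abs w.1 ≤ 1 :=
      le_trans habsle (le_trans (le_of_lt hwp) (min_le_left _ _))
    have h2 : ‖w.2 - p.2‖ ≤ 1 :=
      le_trans hble (le_trans (le_of_lt hwp) (min_le_left _ _))
    have h3 := hC w.1 w.2 hw1 h1 h2
    have h4 : Complex.abs w.1 ≤ ε / (C + 1) :=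
      le_trans habsle (le_trans (le_of_lt hwp) (min_le_right _ _))
    have h5 : ‖iteratedFDeriv ℝ k (Stmt8Aux.Lop γ) w‖ ≤ C * Complex.abs w.1 := by
      simpa only [Prod.mk.eta] using h3
    calc ‖iteratedFDeriv ℝ k (Stmt8Aux.Lop γ) w‖ ≤ C * Complex.abs w.1 := h5
      _ ≤ C * (ε / (C + 1)) := mul_le_mul_of_nonneg_left h4 hC0
      _ ≤ ε := by
          have hC1 : (0:ℝ) < C + 1 := by linarith
          rw [mul_div_assoc' C ε (C + 1), div_le_iff₀ hC1]
          nlinarith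
  obtain ⟨hsmooth, hflat'⟩ := Stmt8Aux.extFlat hU h0 hlim
  have hg : ∀ q : (ℝ × ℝ) × (Fin (2 * n) → ℝ), Stmt8Aux.Lop γ (gTilde n q) = γ q := by
    intro q
    obtain ⟨⟨x, y⟩, v⟩ := q
    exact Stmt8Aux.E2 γ hσ γ0 x y v
  refine ⟨Stmt8Aux.Lop γ, ⟨hsmooth, hg, hflat'⟩, ?_⟩
  rintro h' ⟨h's, h'g, h'v⟩
  funext w
  have hsec : gTilde n ((Complex.abs w.1, Complex.arg w.1), w.2) = w := by
    show ((Complex.abs w.1 : ℂ) * Complex.exp (Complex.I * (Complex.arg w.1 : ℂ)), w.2) = w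
    have hz : (Complex.abs w.1 : ℂ) * Complex.exp (Complex.I * (Complex.arg w.1 : ℂ)) = w.1 := by
      rw [mul_comm Complex.I ((Complex.arg w.1 : ℂ))]
      exact Complex.abs_mul_exp_arg_mul_I w.1
    rw [hz]
  have heq := h'g ((Complex.abs w.1, Complex.arg w.1), w.2)
  rw [hsec] at heq
  rw [heq]
  rfl
end
end

section
/- Fix n ≥ 0 and coordinates (z₀,…,z_n) on ℂ^{n+1}. Let γ : ℂ^{n+1} → ℂ be smooth (as a function on ℝ^{2n+2}) and vanish to infinite order on Z′ := {0}×ℂⁿ. Then there exist smooth functions γ₁, γ₂ : ℂ^{n+1} → ℂ, each vanishing to infinite order on Z′, such that γ(z₀,…,z_n) = z₀·γ₁(z₀,…,z_n) and γ(z₀,…,z_n) = conj(z₀)·γ₂(z₀,…,z_n) for all (z₀,…,z_n) ∈ ℂ^{n+1}. -/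
/-!
A function `f` flat along `z₀ = 0` is `O(‖z₀‖ ^ N)` near that hyperplane for every `N`: applied
to all derivatives at once, this follows inductively on `N` from the mean value inequality in the
`z₀`-direction. Consequently `f / z₀ ^ a` is `O(‖z₀‖ ^ 2)`, hence has derivative `0` on the
hyperplane, while off it the quotient rule gives
`d (f / z₀ ^ a) = df / z₀ ^ a - a • (dz₀ • f) / z₀ ^ (a + 1)`, again a combination of quotients of
flat functions by powers of `z₀`. Induction on the order of differentiation, over all codomains at
once, shows that `f / z₀ ^ a` is smooth and flat. Then `γ₁ = γ / z₀` and `γ₂ = conj (conj γ / z₀)`.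
-/

open Set Metric Asymptotics Topology ContDiff

section

variable {𝕜 E F G : Type*} [NontriviallyNormedField 𝕜]
  [NormedAddCommGroup E] [NormedSpace 𝕜 E] [NormedAddCommGroup F] [NormedSpace 𝕜 F]
  [NormedAddCommGroup G] [NormedSpace 𝕜 G] {f : E → F} {s : Set E}

variable (𝕜) in
def FlatOn (f : E → F) (s : Set E) : Prop :=
  ∀ x ∈ s, ∀ m : ℕ, iteratedFDeriv 𝕜 m f x = 0

namespace FlatOn

theorem apply_eq_zero (hf : FlatOn 𝕜 f s) {x : E} (hx : x ∈ s) : f x = 0 := by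
  simpa using congrArg norm (hf x hx 0)

theorem fderiv (hf : FlatOn 𝕜 f s) : FlatOn 𝕜 (fderiv 𝕜 f) s := fun x hx m =>
  norm_eq_zero.1 <| by rw [norm_iteratedFDeriv_fderiv, hf x hx, norm_zero]

theorem clm_comp (hf : FlatOn 𝕜 f s) (hf' : ContDiff 𝕜 ∞ f) (L : F →L[𝕜] G) :
    FlatOn 𝕜 (L ∘ f) s := fun x hx m => by
  rw [L.iteratedFDeriv_comp_left hf'.contDiffAt (by exact_mod_cast le_top), hf x hx]
  ext; simp

end FlatOn

end

theorem hasDerivAt_inv_pow {𝕜 : Type*} [NontriviallyNormedField 𝕜] (a : ℕ) {x : 𝕜}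
    (hx : x ≠ 0) : HasDerivAt (fun y : 𝕜 => (y ^ a)⁻¹) (-(a : 𝕜) * (x ^ (a + 1))⁻¹) x := by
  have h := hasDerivAt_zpow (-(a : ℤ)) x (Or.inl hx)
  rw [show -(a : ℤ) - 1 = -((a + 1 : ℕ) : ℤ) by push_cast; ring] at h
  simp only [zpow_neg, zpow_natCast, Int.cast_neg, Int.cast_natCast] at h
  exact h

section Product

variable {E₁ E₂ F : Type*} [NormedAddCommGroup E₁] [NormedSpace ℝ E₁]
  [NormedAddCommGroup E₂] [NormedSpace ℝ E₂] [NormedAddCommGroup F] [NormedSpace ℝ F]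
  {f : E₁ × E₂ → F}

theorem isBigO_iteratedFDeriv_norm_fst_pow (hf' : ContDiff ℝ ∞ f)
    (hf : FlatOn ℝ f {z | z.1 = 0}) {z : E₁ × E₂} (hz : z.1 = 0) (N k : ℕ) :
    iteratedFDeriv ℝ k f =O[𝓝 z] fun w => ‖w.1‖ ^ N := by
  induction N generalizing k with
  | zero =>
    simpa using
      (hf'.continuous_iteratedFDeriv (by exact_mod_cast le_top)).continuousAt.isBigO_one ℝ
  | succ N ih =>
    obtain ⟨C, hC0, hC⟩ := (ih (k + 1)).exists_nonneg
    obtain ⟨r, hr, hball⟩ := Metric.eventually_nhds_iff_ball.1 hC.bound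
    refine IsBigO.of_bound C (Metric.eventually_nhds_iff_ball.2 ⟨r, hr, fun w hw => ?_⟩)
    -- mean value inequality from `(0, w.2)`, where the derivative vanishes, to `w`
    set s := ball z r ∩ closedBall (0 : E₁) ‖w.1‖ ×ˢ univ
    have hs : Convex ℝ s := (convex_ball z r).inter ((convex_closedBall 0 _).prod convex_univ)
    have hp : ((0 : E₁), w.2) ∈ s := by
      refine ⟨?_, by simp⟩
      rw [mem_ball, Prod.dist_eq, hz] at hw ⊢
      simpa using (le_max_right _ _).trans_lt hw
    have key := hs.norm_image_sub_le_of_norm_fderiv_le (C := C * ‖w.1‖ ^ N)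
      (fun x _ => (hf'.differentiable_iteratedFDeriv
        (by exact_mod_cast ENat.natCast_lt_top _)).differentiableAt)
      (fun x hx => by
        have hx₁ : ‖x.1‖ ≤ ‖w.1‖ := mem_closedBall_zero_iff.1 hx.2.1
        rw [norm_fderiv_iteratedFDeriv]
        refine (hball x hx.1).trans ?_
        simp only [norm_pow, norm_norm]
        gcongr) hp ⟨hw, by simp⟩
    have hwp : w - (0, w.2) = (w.1, 0) := by ext <;> simp
    rw [hf (0, w.2) rfl, sub_zero, hwp] at key
    simpa [Prod.norm_def, pow_succ, mul_assoc] using key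

theorem isBigO_norm_fst_pow (hf' : ContDiff ℝ ∞ f)
    (hf : FlatOn ℝ f {z | z.1 = 0}) {z : E₁ × E₂} (hz : z.1 = 0) (N : ℕ) :
    f =O[𝓝 z] fun w => ‖w.1‖ ^ N := by
  have h := (isBigO_iteratedFDeriv_norm_fst_pow hf' hf hz N 0).norm_left
  simp only [norm_iteratedFDeriv_zero] at h
  exact h.of_norm_left

end Product

noncomputable section DivFstPow

universe u

-- A single universe, so that the inductions over codomains can pass from `F` to `ℂ × E →L[ℝ] F`.
variable {E F : Type u} [NormedAddCommGroup E] [NormedSpace ℝ E]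
  [NormedAddCommGroup F] [NormedSpace ℂ F]

/-- `f / z₀ ^ a`, junk on `z₀ = 0`, where it is only applied to functions vanishing there. -/
def fstPowInvSMul (a : ℕ) (f : ℂ × E → F) (z : ℂ × E) : F := (z.1 ^ a)⁻¹ • f z

variable (E F) in
def fstSMulRight : F →L[ℝ] (ℂ × E →L[ℝ] F) :=
  ((ContinuousLinearMap.lsmul ℝ ℂ).comp (ContinuousLinearMap.fst ℝ ℂ E)).flip

@[simp]
theorem fstSMulRight_apply (v : F) (w : ℂ × E) : fstSMulRight E F v w = w.1 • v := rfl

theorem isBigO_fstPowInvSMul {f : ℂ × E → F} (hf' : ContDiff ℝ ∞ f)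
    (hf : FlatOn ℝ f {z | z.1 = 0}) {z : ℂ × E} (hz : z.1 = 0) (a N : ℕ) :
    fstPowInvSMul a f =O[𝓝 z] fun w => ‖w.1‖ ^ N := by
  obtain ⟨C, hC0, hC⟩ := (isBigO_norm_fst_pow hf' hf hz (N + a)).exists_nonneg
  refine IsBigO.of_bound C (hC.bound.mono fun w hw => ?_)
  rcases eq_or_ne w.1 0 with hw0 | hw0
  · simp [fstPowInvSMul, hf.apply_eq_zero (x := w) hw0]
    positivity
  · have : 0 < ‖w.1‖ := norm_pos_iff.2 hw0
    rw [fstPowInvSMul, norm_smul, norm_inv, norm_pow, inv_mul_le_iff₀ (by positivity)]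
    simpa [pow_add, mul_comm, mul_left_comm] using hw

theorem hasFDerivAt_fstPowInvSMul {f : ℂ × E → F} (hf' : ContDiff ℝ ∞ f)
    (hf : FlatOn ℝ f {z | z.1 = 0}) (a : ℕ) (z : ℂ × E) :
    HasFDerivAt (fstPowInvSMul a f) (fstPowInvSMul a (fderiv ℝ f) z
      - (a : ℂ) • fstPowInvSMul (a + 1) (fstSMulRight E F ∘ f) z) z := by
  rcases eq_or_ne z.1 0 with hz | hz
  · have hD : fstPowInvSMul a (fderiv ℝ f) z
        - (a : ℂ) • fstPowInvSMul (a + 1) (fstSMulRight E F ∘ f) z = 0 := by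
      simp [fstPowInvSMul, hf.fderiv.apply_eq_zero (x := z) hz, hf.apply_eq_zero (x := z) hz]
    rw [hD]
    refine IsBigO.hasFDerivAt (n := 2) ?_ one_lt_two
    refine (isBigO_fstPowInvSMul hf' hf hz a 2).trans (IsBigO.of_bound 1 ?_)
    filter_upwards with w
    have : ‖w.1‖ ≤ ‖w - z‖ := by simpa [hz] using norm_fst_le (w - z)
    simp only [norm_pow, norm_norm, one_mul]
    gcongr
  · have hc : HasFDerivAt (fun w : ℂ × E => (w.1 ^ a)⁻¹)
        ((-(a : ℂ) * (z.1 ^ (a + 1))⁻¹) • ContinuousLinearMap.fst ℝ ℂ E) z :=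
      (hasDerivAt_inv_pow a hz).comp_hasFDerivAt z (hasFDerivAt_fst)
    refine (hc.smul (hf'.differentiable (by simp) z).hasFDerivAt).congr_fderiv ?_
    refine ContinuousLinearMap.ext fun w => ?_
    simp [fstPowInvSMul]
    module

theorem fderiv_fstPowInvSMul {f : ℂ × E → F} (hf' : ContDiff ℝ ∞ f)
    (hf : FlatOn ℝ f {z | z.1 = 0}) (a : ℕ) :
    fderiv ℝ (fstPowInvSMul a f) = fstPowInvSMul a (fderiv ℝ f)
      - (a : ℂ) • fstPowInvSMul (a + 1) (fstSMulRight E F ∘ f) :=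
  funext fun z => (hasFDerivAt_fstPowInvSMul hf' hf a z).fderiv

theorem contDiff_fstPowInvSMul {f : ℂ × E → F} (hf' : ContDiff ℝ ∞ f)
    (hf : FlatOn ℝ f {z | z.1 = 0}) (a k : ℕ) : ContDiff ℝ k (fstPowInvSMul a f) := by
  induction k generalizing F f a with
  | zero =>
    exact contDiff_zero.2 <| continuous_iff_continuousAt.2 fun z =>
      (hasFDerivAt_fstPowInvSMul hf' hf a z).continuousAt
  | succ k ih =>
    rw [Nat.cast_succ, contDiff_succ_iff_fderiv]
    refine ⟨fun z => (hasFDerivAt_fstPowInvSMul hf' hf a z).differentiableAt, by simp, ?_⟩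
    rw [fderiv_fstPowInvSMul hf' hf]
    exact (ih (hf'.fderiv_right (by simp)) hf.fderiv a).sub
      ((ih ((fstSMulRight E F).contDiff.comp hf') (hf.clm_comp hf' _) (a + 1)).const_smul (a : ℂ))

theorem flatOn_fstPowInvSMul {f : ℂ × E → F} (hf' : ContDiff ℝ ∞ f)
    (hf : FlatOn ℝ f {z | z.1 = 0}) (a : ℕ) : FlatOn ℝ (fstPowInvSMul a f) {z | z.1 = 0} := by
  intro z hz m
  induction m generalizing F f a with
  | zero =>
    rw [← norm_eq_zero, norm_iteratedFDeriv_zero]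
    simp [fstPowInvSMul, hf.apply_eq_zero hz]
  | succ m ih =>
    have hf₁ : ContDiff ℝ ∞ (fderiv ℝ f) := hf'.fderiv_right (by simp)
    have hf₂ : ContDiff ℝ ∞ (fstSMulRight E F ∘ f) := (fstSMulRight E F).contDiff.comp hf'
    have hg₁ := contDiff_fstPowInvSMul hf₁ hf.fderiv a m
    have hg₂ := contDiff_fstPowInvSMul hf₂ (hf.clm_comp hf' _) (a + 1) m
    have hg₂' : ContDiff ℝ m ((a : ℂ) • fstPowInvSMul (a + 1) (fstSMulRight E F ∘ f)) :=
      hg₂.const_smul (a : ℂ)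
    rw [← norm_eq_zero, ← norm_iteratedFDeriv_fderiv, fderiv_fstPowInvSMul hf' hf,
      iteratedFDeriv_sub_apply hg₁.contDiffAt hg₂'.contDiffAt,
      iteratedFDeriv_const_smul_apply hg₂.contDiffAt, ih hf₁ hf.fderiv, ih hf₂ (hf.clm_comp hf' _)]
    simp

theorem fst_pow_smul_fstPowInvSMul {f : ℂ × E → F} (hf : FlatOn ℝ f {z | z.1 = 0}) (a : ℕ)
    (z : ℂ × E) : z.1 ^ a • fstPowInvSMul a f z = f z := by
  rcases eq_or_ne z.1 0 with hz | hz
  · simp [fstPowInvSMul, hf.apply_eq_zero (x := z) hz]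
  · simp [fstPowInvSMul, smul_smul, hz]

end DivFstPow

theorem stmt_10 (n : ℕ) (γ : ℂ × (Fin n → ℂ) → ℂ)
    (hγ : ContDiff ℝ (⊤ : ℕ∞) γ)
    (hvan : ∀ z : ℂ × (Fin n → ℂ), z.1 = 0 → ∀ m : ℕ, iteratedFDeriv ℝ m γ z = 0) :
    ∃ γ₁ γ₂ : ℂ × (Fin n → ℂ) → ℂ,
      ContDiff ℝ (⊤ : ℕ∞) γ₁ ∧ ContDiff ℝ (⊤ : ℕ∞) γ₂ ∧
      (∀ z : ℂ × (Fin n → ℂ), z.1 = 0 → ∀ m : ℕ, iteratedFDeriv ℝ m γ₁ z = 0) ∧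
      (∀ z : ℂ × (Fin n → ℂ), z.1 = 0 → ∀ m : ℕ, iteratedFDeriv ℝ m γ₂ z = 0) ∧
      (∀ z : ℂ × (Fin n → ℂ), γ z = z.1 * γ₁ z) ∧
      (∀ z : ℂ × (Fin n → ℂ), γ z = (starRingEnd ℂ) z.1 * γ₂ z) := by
  have hflat : FlatOn ℝ γ {z | z.1 = 0} := hvan
  set conj : ℂ →L[ℝ] ℂ := Complex.conjCLE.toContinuousLinearMap
  have hγc : ContDiff ℝ ∞ (conj ∘ γ) := conj.contDiff.comp hγ
  have hflatc : FlatOn ℝ (conj ∘ γ) {z | z.1 = 0} := hflat.clm_comp hγ conj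
  have hsmooth₂ := contDiff_infty.2 (contDiff_fstPowInvSMul hγc hflatc 1)
  refine ⟨fstPowInvSMul 1 γ, conj ∘ fstPowInvSMul 1 (conj ∘ γ),
    contDiff_infty.2 (contDiff_fstPowInvSMul hγ hflat 1), conj.contDiff.comp hsmooth₂,
    flatOn_fstPowInvSMul hγ hflat 1,
    (flatOn_fstPowInvSMul hγc hflatc 1).clm_comp hsmooth₂ conj, fun z => ?_, fun z => ?_⟩
  · simpa using (fst_pow_smul_fstPowInvSMul hflat 1 z).symm
  · simpa [conj] using congrArg (starRingEnd ℂ) (fst_pow_smul_fstPowInvSMul hflatc 1 z).symm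
end

section
/- Let f : ℂ → ℂ be entire (complex-differentiable on all of ℂ) with f(x) ∈ ℝ for every x ∈ ℝ. Let U ⊆ ℝ² be an open set containing ℝ×{0} such that for every (x,y) ∈ U the vertical segment {x}×[min(0,y), max(0,y)] is contained in U. Let h : U → ℂ be smooth with h(x,0) = x whenever (x,0) ∈ U and ∂_y h(x,y) = i·f(h(x,y)) for all (x,y) ∈ U. Then f(x)·∂_x h(x,y) = f(h(x,y)) for all (x,y) ∈ U; consequently (1/2)·(f(x)·∂_x h − i·∂_y h)(x,y) = f(h(x,y)) and (1/2)·(f(x)·∂_x h + i·∂_y h)(x,y) = 0 on U, i.e. the vector field (1/2)(f(x)∂_x − i∂_y) is h-related to the holomorphic vector field f(z)∂_z. -/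
/-!
Fix `x` and follow the vertical segment from `(x, 0)` to `(x, y)`. Both
`α t = f x · ∂ₓh (x, t)` and `β t = f (h (x, t))` solve the linear ODE `z' = i f'(h (x, t)) z`:
`β` by the chain rule and the flow equation, `α` by differentiating the flow equation in `x` and
exchanging the order of the partial derivatives. Since `h (x, 0) = x` they agree at `t = 0`, hence
at `t = y` by uniqueness for linear ODEs. The other two identities follow by substituting
`∂_y h = i f(h)`.
-/

open Set

section LinearODE

variable {𝕜 E : Type*} [NormedField 𝕜] [NormedAddCommGroup E] [NormedSpace 𝕜 E]
  [NormedSpace ℝ E]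

theorem eq_of_hasDerivAt_smul_of_forall_mem_uIcc {c : ℝ → 𝕜} {f g : ℝ → E} {a b : ℝ}
    (hc : ContinuousOn c (uIcc a b))
    (hf : ∀ t ∈ uIcc a b, HasDerivAt f (c t • f t) t)
    (hg : ∀ t ∈ uIcc a b, HasDerivAt g (c t • g t) t)
    (ha : f a = g a) : f b = g b := by
  obtain ⟨K, hK⟩ := isCompact_uIcc.exists_bound_of_continuousOn hc
  have hlip : ∀ t ∈ uIcc a b, LipschitzOnWith K.toNNReal (c t • · : E → E) univ := fun t ht =>
    ((lipschitzWith_smul (c t)).weaken <| by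
      simpa using Real.toNNReal_le_toNNReal (hK t ht)).lipschitzOnWith
  have hfc : ContinuousOn f (uIcc a b) := HasDerivAt.continuousOn hf
  have hgc : ContinuousOn g (uIcc a b) := HasDerivAt.continuousOn hg
  rcases le_total a b with hab | hba
  · rw [uIcc_of_le hab] at hlip hf hg hfc hgc
    exact ODE_solution_unique_of_mem_Icc_right (fun t ht => hlip t (Ico_subset_Icc_self ht))
      hfc (fun t ht => (hf t (Ico_subset_Icc_self ht)).hasDerivWithinAt) (fun _ _ => trivial)
      hgc (fun t ht => (hg t (Ico_subset_Icc_self ht)).hasDerivWithinAt) (fun _ _ => trivial)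
      ha (right_mem_Icc.2 hab)
  · rw [uIcc_of_ge hba] at hlip hf hg hfc hgc
    exact ODE_solution_unique_of_mem_Icc_left (fun t ht => hlip t (Ioc_subset_Icc_self ht))
      hfc (fun t ht => (hf t (Ioc_subset_Icc_self ht)).hasDerivWithinAt) (fun _ _ => trivial)
      hgc (fun t ht => (hg t (Ioc_subset_Icc_self ht)).hasDerivWithinAt) (fun _ _ => trivial)
      ha (left_mem_Icc.2 hba)

end LinearODE

section Partials

variable {E F : Type*} [NormedAddCommGroup E] [NormedSpace ℝ E]
  [NormedAddCommGroup F] [NormedSpace ℝ F]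

theorem HasFDerivAt.hasDerivAt_fst_slice {g : ℝ × E → F} {L : ℝ × E →L[ℝ] F} {s : ℝ} {y : E}
    (hg : HasFDerivAt g L (s, y)) : HasDerivAt (fun r => g (r, y)) (L (1, 0)) s :=
  (hg.comp_hasDerivAt s ((hasDerivAt_id s).prodMk (hasDerivAt_const s y))).congr_deriv (by simp)

theorem HasFDerivAt.hasDerivAt_snd_slice {g : E × ℝ → F} {L : E × ℝ →L[ℝ] F} {x : E} {t : ℝ}
    (hg : HasFDerivAt g L (x, t)) : HasDerivAt (fun r => g (x, r)) (L (0, 1)) t :=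
  (hg.comp_hasDerivAt t ((hasDerivAt_const t x).prodMk (hasDerivAt_id t))).congr_deriv (by simp)

theorem ContDiffAt.fderiv_fderiv_apply_comm {h : E → F} {q : E} (hh : ContDiffAt ℝ 2 h q)
    (v w : E) :
    fderiv ℝ (fun p => fderiv ℝ h p v) q w = fderiv ℝ (fun p => fderiv ℝ h p w) q v := by
  have hD : DifferentiableAt ℝ (fderiv ℝ h) q :=
    (hh.fderiv_right (m := 1) le_rfl).differentiableAt one_ne_zero
  rw [fderiv_clm_apply hD (differentiableAt_const v),
    fderiv_clm_apply hD (differentiableAt_const w)]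
  simpa using hh.isSymmSndFDerivAt (by simp) w v

end Partials

section ImaginaryTimeFlow

open Filter Topology

variable {f : ℂ → ℂ} {U : Set (ℝ × ℝ)} {h : ℝ × ℝ → ℂ}

theorem hasDerivAt_fderiv_one_zero_of_flow (hf : Differentiable ℂ f) (hU : IsOpen U)
    (hh : ContDiffOn ℝ 2 h U) (hode : ∀ p ∈ U, fderiv ℝ h p (0, 1) = Complex.I * f (h p))
    {x t : ℝ} (hxt : (x, t) ∈ U) :
    HasDerivAt (fun s => fderiv ℝ h (x, s) (1, 0))
      (Complex.I * deriv f (h (x, t)) * fderiv ℝ h (x, t) (1, 0)) t := by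
  have hC2 : ContDiffAt ℝ 2 h (x, t) := hh.contDiffAt (hU.mem_nhds hxt)
  have hD : HasFDerivAt h (fderiv ℝ h (x, t)) (x, t) :=
    (hC2.differentiableAt two_ne_zero).hasFDerivAt
  have hDx : DifferentiableAt ℝ (fun p => fderiv ℝ h p (1, 0)) (x, t) :=
    ((hC2.fderiv_right (m := 1) le_rfl).differentiableAt one_ne_zero).clm_apply
      (differentiableAt_const _)
  have hode' : (fun p => fderiv ℝ h p (0, 1)) =ᶠ[𝓝 (x, t)] fun p => Complex.I * f (h p) :=
    eventuallyEq_of_mem (hU.mem_nhds hxt) hode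
  have hmixed : fderiv ℝ (fun p => fderiv ℝ h p (1, 0)) (x, t) (0, 1) =
      Complex.I * deriv f (h (x, t)) * fderiv ℝ h (x, t) (1, 0) := by
    have hflow : HasFDerivAt (fun p => Complex.I * f (h p))
        (Complex.I • deriv f (h (x, t)) • fderiv ℝ h (x, t)) (x, t) :=
      ((hf _).hasDerivAt.comp_hasFDerivAt (x, t) hD).const_mul Complex.I
    rw [hC2.fderiv_fderiv_apply_comm, hode'.fderiv_eq, hflow.fderiv]
    simp [mul_assoc]
  exact hmixed ▸ hDx.hasFDerivAt.hasDerivAt_snd_slice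

theorem hasDerivAt_comp_of_flow (hf : Differentiable ℂ f) (hU : IsOpen U)
    (hh : ContDiffOn ℝ 2 h U) (hode : ∀ p ∈ U, fderiv ℝ h p (0, 1) = Complex.I * f (h p))
    {x t : ℝ} (hxt : (x, t) ∈ U) :
    HasDerivAt (fun s => f (h (x, s))) (Complex.I * deriv f (h (x, t)) * f (h (x, t))) t := by
  have hD : HasFDerivAt h (fderiv ℝ h (x, t)) (x, t) :=
    ((hh.contDiffAt (hU.mem_nhds hxt)).differentiableAt two_ne_zero).hasFDerivAt
  have hchain := (hf _).hasDerivAt.comp t hD.hasDerivAt_snd_slice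
  rw [hode _ hxt] at hchain
  exact hchain.congr_deriv (by ring)

theorem mul_fderiv_one_zero_eq_of_flow (hf : Differentiable ℂ f) (hU : IsOpen U)
    (hax : ∀ x : ℝ, (x, (0 : ℝ)) ∈ U) (hseg : ∀ p ∈ U, ∀ t ∈ uIcc (0 : ℝ) p.2, (p.1, t) ∈ U)
    (hh : ContDiffOn ℝ 2 h U) (hinit : ∀ x : ℝ, h (x, 0) = x)
    (hode : ∀ p ∈ U, fderiv ℝ h p (0, 1) = Complex.I * f (h p)) {p : ℝ × ℝ} (hp : p ∈ U) :
    f p.1 * fderiv ℝ h p (1, 0) = f (h p) := by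
  obtain ⟨x, y⟩ := p
  have hmem : ∀ t ∈ uIcc 0 y, (x, t) ∈ U := hseg _ hp
  have haxis : fderiv ℝ h (x, 0) (1, 0) = 1 := by
    have hD := ((hh.contDiffAt (hU.mem_nhds (hax x))).differentiableAt two_ne_zero).hasFDerivAt
    refine hD.hasDerivAt_fst_slice.unique ?_
    simp only [hinit]
    exact Complex.ofRealCLM.hasDerivAt.congr_deriv (by simp)
  have hc : ContinuousOn (fun t => Complex.I * deriv f (h (x, t))) (uIcc 0 y) :=
    continuousOn_const.mul <| (hf.contDiff (n := 1)).continuous_deriv le_rfl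
      |>.comp_continuousOn <| hh.continuousOn.comp (by fun_prop) hmem
  refine eq_of_hasDerivAt_smul_of_forall_mem_uIcc (f := fun t => f x * fderiv ℝ h (x, t) (1, 0))
    hc (fun t ht => ?_)
    (fun t ht => hasDerivAt_comp_of_flow hf hU hh hode (hmem t ht)) (by simp [haxis, hinit])
  exact ((hasDerivAt_fderiv_one_zero_of_flow hf hU hh hode (hmem t ht)).const_mul _).congr_deriv
    (by simp only [smul_eq_mul]; ring)

end ImaginaryTimeFlow

theorem stmt_14_general (f : ℂ → ℂ) (hf : Differentiable ℂ f)
    (U : Set (ℝ × ℝ)) (hU : IsOpen U) (hax : ∀ x : ℝ, (x, (0 : ℝ)) ∈ U)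
    (hseg : ∀ p ∈ U, ∀ t ∈ Set.uIcc (0 : ℝ) p.2, (p.1, t) ∈ U)
    (h : ℝ × ℝ → ℂ) (hh : ContDiffOn ℝ (⊤ : ℕ∞) h U)
    (hinit : ∀ x : ℝ, (x, (0 : ℝ)) ∈ U → h (x, 0) = (x : ℂ))
    (hode : ∀ p ∈ U, fderiv ℝ h p ((0, 1) : ℝ × ℝ) = Complex.I * f (h p)) :
    ∀ p ∈ U,
      f (p.1 : ℂ) * fderiv ℝ h p ((1, 0) : ℝ × ℝ) = f (h p) ∧
      (1 / 2 : ℂ) * (f (p.1 : ℂ) * fderiv ℝ h p ((1, 0) : ℝ × ℝ)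
        - Complex.I * fderiv ℝ h p ((0, 1) : ℝ × ℝ)) = f (h p) ∧
      (1 / 2 : ℂ) * (f (p.1 : ℂ) * fderiv ℝ h p ((1, 0) : ℝ × ℝ)
        + Complex.I * fderiv ℝ h p ((0, 1) : ℝ × ℝ)) = 0 := by
  intro p hp
  have hrel := mul_fderiv_one_zero_eq_of_flow hf hU hax hseg (hh.of_le (by norm_cast))
    (fun x => hinit x (hax x)) hode hp
  rw [hrel, hode p hp]
  refine ⟨rfl, ?_, ?_⟩
  · linear_combination (-f (h p) / 2) * Complex.I_sq
  · linear_combination (f (h p) / 2) * Complex.I_sq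

theorem stmt_14 (f : ℂ → ℂ) (hf : Differentiable ℂ f)
    (hreal : ∀ x : ℝ, (f (x : ℂ)).im = 0)
    (U : Set (ℝ × ℝ)) (hU : IsOpen U) (hax : ∀ x : ℝ, (x, (0 : ℝ)) ∈ U)
    (hseg : ∀ p ∈ U, ∀ t ∈ Set.uIcc (0 : ℝ) p.2, (p.1, t) ∈ U)
    (h : ℝ × ℝ → ℂ) (hh : ContDiffOn ℝ (⊤ : ℕ∞) h U)
    (hinit : ∀ x : ℝ, (x, (0 : ℝ)) ∈ U → h (x, 0) = (x : ℂ))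
    (hode : ∀ p ∈ U, fderiv ℝ h p ((0, 1) : ℝ × ℝ) = Complex.I * f (h p)) :
    ∀ p ∈ U,
      f (p.1 : ℂ) * fderiv ℝ h p ((1, 0) : ℝ × ℝ) = f (h p) ∧
      (1 / 2 : ℂ) * (f (p.1 : ℂ) * fderiv ℝ h p ((1, 0) : ℝ × ℝ)
        - Complex.I * fderiv ℝ h p ((0, 1) : ℝ × ℝ)) = f (h p) ∧
      (1 / 2 : ℂ) * (f (p.1 : ℂ) * fderiv ℝ h p ((1, 0) : ℝ × ℝ)
        + Complex.I * fderiv ℝ h p ((0, 1) : ℝ × ℝ)) = 0 :=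
  stmt_14_general f hf U hU hax hseg h hh hinit hode
end

section
/- Fix an integer k ≥ 2 and define g_k : ℝ² → ℂ by g_k(x,y) = x·(1 − i·(k−1)·x^{k−1}·y)^{−1/(k−1)}, where w ↦ w^{−1/(k−1)} is the principal branch of the complex power (well-defined and smooth here since Re(1 − i(k−1)x^{k−1}y) = 1 > 0 for all real x, y). Then g_k is smooth and for every (x,y) ∈ ℝ²: x^k·∂_x g_k(x,y) + i·∂_y g_k(x,y) = 0 and x^k·∂_x g_k(x,y) − i·∂_y g_k(x,y) = 2·g_k(x,y)^k; i.e. the vector field (1/2)(x^k∂_x − i∂_y) is g_k-related to the holomorphic vector field z^k∂_z. -/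
/-!
STATEMENT 16.  For an integer `k ≥ 2`, `g_k(x,y) = x·(1 − i(k−1)x^{k−1}y)^{−1/(k−1)}`
(principal branch of the complex power) is smooth and satisfies
`x^k∂ₓg_k + i∂_yg_k = 0` and `x^k∂ₓg_k − i∂_yg_k = 2·g_k^k`,
i.e. `(1/2)(x^k∂ₓ − i∂_y)` is `g_k`-related to the holomorphic vector field `z^k∂_z`.
-/

/-- `g_k(x,y) = x·(1 − i(k−1)x^{k−1}y)^{−1/(k−1)}`, with the principal-branch complex
power `w ^ (c : ℂ)`. -/
noncomputable def gPow (k : ℕ) : ℝ × ℝ → ℂ := fun p =>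
  (p.1 : ℂ) *
    ((1 - Complex.I * ((k : ℂ) - 1) * ((p.1 : ℂ)) ^ (k - 1) * (p.2 : ℂ))
      ^ (-(1 : ℂ) / ((k : ℂ) - 1)))

theorem stmt_16 (k : ℕ) (hk : 2 ≤ k) :
    ContDiff ℝ (⊤ : ℕ∞) (gPow k) ∧
    ∀ p : ℝ × ℝ,
      (p.1 : ℂ) ^ k * fderiv ℝ (gPow k) p ((1, 0) : ℝ × ℝ)
        + Complex.I * fderiv ℝ (gPow k) p ((0, 1) : ℝ × ℝ) = 0 ∧
      (p.1 : ℂ) ^ k * fderiv ℝ (gPow k) p ((1, 0) : ℝ × ℝ)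
        - Complex.I * fderiv ℝ (gPow k) p ((0, 1) : ℝ × ℝ) = 2 * (gPow k p) ^ k := by
  obtain ⟨m, rfl⟩ : ∃ m, k = m + 2 := ⟨k - 2, by omega⟩
  set c : ℂ := -(1:ℂ)/(((m+2 : ℕ) : ℂ) - 1) with hc
  set u : ℝ × ℝ → ℂ := fun p =>
    1 - Complex.I * (((m+2 : ℕ) : ℂ) - 1) * ((p.1:ℂ)^(m+2-1) * (p.2:ℂ)) with hu
  have hgeq : gPow (m+2) = fun p => (p.1 : ℂ) * u p ^ c := by
    funext p
    simp only [gPow, hu, hc]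
    ring_nf
  have hure : ∀ p : ℝ × ℝ, (u p).re = 1 := by
    intro p
    have : u p = 1 - Complex.I * ((((m:ℝ)+1) * p.1^(m+1) * p.2 : ℝ) : ℂ) := by
      simp only [hu]; push_cast; ring
    rw [this]
    simp only [Complex.sub_re, Complex.one_re, Complex.mul_re, Complex.I_re,
      Complex.I_im, Complex.ofReal_re, Complex.ofReal_im]
    ring
  have hslit : ∀ p : ℝ × ℝ, u p ∈ Complex.slitPlane := fun p =>
    Or.inl (by rw [hure p]; norm_num)
  have hu0 : ∀ p : ℝ × ℝ, u p ≠ 0 := fun p => Complex.slitPlane_ne_zero (hslit p)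
  have hM : (((m+2 : ℕ) : ℂ) - 1) ≠ 0 := by
    have h1 : (((m+2 : ℕ) : ℂ) - 1) = ((m+1 : ℕ) : ℂ) := by push_cast; ring
    rw [h1]
    exact_mod_cast Nat.succ_ne_zero m
  have hcK : c * (((m+2 : ℕ) : ℂ) - 1) = -1 := by
    rw [hc]; exact div_mul_cancel₀ _ hM
  have hUc : ∀ p : ℝ × ℝ, u p ^ c = u p ^ (c-1) * u p := by
    intro p
    have h1 : u p ^ (c-1+1) = u p ^ (c-1) * u p ^ (1:ℂ) := Complex.cpow_add _ _ (hu0 p)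
    rw [sub_add_cancel, Complex.cpow_one] at h1
    exact h1
  set X : ℝ × ℝ →L[ℝ] ℂ := Complex.ofRealCLM.comp (ContinuousLinearMap.fst ℝ ℝ ℝ) with hXdef
  set Y : ℝ × ℝ →L[ℝ] ℂ := Complex.ofRealCLM.comp (ContinuousLinearMap.snd ℝ ℝ ℝ) with hYdef
  have hX : ∀ p : ℝ × ℝ, HasFDerivAt (fun q : ℝ × ℝ => ((q.1 : ℂ))) X p :=
    fun p => X.hasFDerivAt
  have hY : ∀ p : ℝ × ℝ, HasFDerivAt (fun q : ℝ × ℝ => ((q.2 : ℂ))) Y p :=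
    fun p => Y.hasFDerivAt
  have hU : ∀ p : ℝ × ℝ, HasFDerivAt u
      (-((Complex.I * (((m+2 : ℕ) : ℂ) - 1)) •
        (((p.1:ℂ)^(m+2-1)) • Y +
          ((p.2:ℂ)) • (((((m+2-1 : ℕ)) : ℂ) * (p.1:ℂ)^(m+2-1-1)) • X)))) p := by
    intro p
    have hpow : HasFDerivAt (fun q : ℝ × ℝ => ((q.1:ℂ))^(m+2-1))
        (((((m+2-1 : ℕ)) : ℂ) * (p.1:ℂ)^(m+2-1-1)) • X) p :=
      by have h := (hasDerivAt_pow (m+2-1) ((p.1 : ℂ))).comp_hasFDerivAt p (hX p); exact h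
    exact ((hpow.mul (hY p)).const_mul (Complex.I * (((m+2 : ℕ) : ℂ) - 1))).const_sub 1
  have hG : ∀ p : ℝ × ℝ, HasFDerivAt (gPow (m+2))
      ((p.1 : ℂ) • ((c * u p ^ (c - 1)) •
          (-((Complex.I * (((m+2 : ℕ) : ℂ) - 1)) •
            (((p.1:ℂ)^(m+2-1)) • Y +
              ((p.2:ℂ)) • (((((m+2-1 : ℕ)) : ℂ) * (p.1:ℂ)^(m+2-1-1)) • X)))))
        + (u p ^ c) • X) p := by
    intro p
    rw [hgeq]
    have hcp : HasFDerivAt (fun q : ℝ × ℝ => u q ^ c)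
        ((c * u p ^ (c - 1)) •
          (-((Complex.I * (((m+2 : ℕ) : ℂ) - 1)) •
            (((p.1:ℂ)^(m+2-1)) • Y +
              ((p.2:ℂ)) • (((((m+2-1 : ℕ)) : ℂ) * (p.1:ℂ)^(m+2-1-1)) • X))))) p :=
      (Complex.hasStrictDerivAt_cpow_const (hslit p)).hasDerivAt.comp_hasFDerivAt p (hU p)
    exact (hX p).mul hcp
  constructor
  · -- smoothness
    rw [hgeq, contDiff_iff_contDiffAt]
    intro p
    have hXc : ContDiffAt ℝ (⊤ : ℕ∞) (fun q : ℝ × ℝ => ((q.1:ℂ))) p :=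
      (Complex.ofRealCLM.contDiff.comp contDiff_fst).contDiffAt
    have hYc : ContDiffAt ℝ (⊤ : ℕ∞) (fun q : ℝ × ℝ => ((q.2:ℂ))) p :=
      (Complex.ofRealCLM.contDiff.comp contDiff_snd).contDiffAt
    have huc : ContDiffAt ℝ (⊤ : ℕ∞) u p := by
      apply ContDiffAt.sub contDiffAt_const
      exact ContDiffAt.mul contDiffAt_const ((hXc.pow (m+2-1)).mul hYc)
    have hcpOn : ContDiffOn ℝ (⊤ : ℕ∞) (fun w : ℂ => w ^ c) Complex.slitPlane := by
      have hdiff : DifferentiableOn ℂ (fun w : ℂ => w ^ c) Complex.slitPlane := fun w hw =>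
        ((Complex.hasStrictDerivAt_cpow_const hw).hasDerivAt.differentiableAt).differentiableWithinAt
      exact (hdiff.contDiffOn Complex.isOpen_slitPlane).restrict_scalars ℝ
    exact hXc.mul
      ((hcpOn.contDiffAt (Complex.isOpen_slitPlane.mem_nhds (hslit p))).comp p huc)
  · intro p
    rw [(hG p).fderiv]
    have e1 : m + 2 - 1 = m + 1 := rfl
    have e2 : m + 2 - 1 - 1 = m := rfl
    have hcK' : c * ((m : ℂ) + 1) = -1 := by
      have : (((m+2 : ℕ) : ℂ) - 1) = (m : ℂ) + 1 := by push_cast; ring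
      rw [← this]; exact hcK
    have hUp : u p = 1 - Complex.I * ((m:ℂ)+1) * ((p.1:ℂ)^(m+1) * (p.2:ℂ)) := by
      simp only [hu, e1]; push_cast; ring
    have hpowk : (u p ^ c) ^ (m+2) = u p ^ (c - 1) := by
      rw [← Complex.cpow_nat_mul]
      congr 1
      push_cast
      push_cast at hcK'
      linear_combination hcK'
    simp only [ContinuousLinearMap.add_apply, ContinuousLinearMap.coe_smul',
      Pi.smul_apply, ContinuousLinearMap.neg_apply, hXdef, hYdef,
      ContinuousLinearMap.coe_comp', Function.comp_apply,
      ContinuousLinearMap.coe_fst', ContinuousLinearMap.coe_snd',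
      Complex.ofRealCLM_apply, smul_eq_mul, Complex.ofReal_one, Complex.ofReal_zero,
      mul_zero, mul_one, zero_add, add_zero, e1, e2]
    have hxe : (p.1:ℂ)^(m+2-1) = (p.1:ℂ)^(m+1) := by rw [e1]
    have hce : (((m+2:ℕ)) : ℂ) = (m:ℂ)+2 := by push_cast; ring
    constructor
    · rw [hUc p]
      push_cast
      linear_combination (-((u p ^ (c-1))*Complex.I*((m:ℂ)+1)*(p.2:ℂ)*(p.1:ℂ)^(m+2)*(p.1:ℂ)^(m+1))
          - Complex.I^2*(u p ^ (c-1))*(p.1:ℂ)^(m+2)) * hcK'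
        + ((p.1:ℂ)^(m+2)*(u p ^ (c-1))) * Complex.I_sq
        + ((p.1:ℂ)^(m+2)) * hUp
        + ((p.1:ℂ)^2*(p.1:ℂ)^m*((m:ℂ)+1)*Complex.I*(p.2:ℂ)*(1 - u p ^ (c-1))) * hxe
        + ((p.1:ℂ)^2*(p.1:ℂ)^m*(p.1:ℂ)^(m+2-1)*Complex.I*(p.2:ℂ)*(1 - u p ^ (c-1))) * hce
    · rw [hgeq]
      simp only
      rw [mul_pow, hpowk, hUc p]
      push_cast
      linear_combination (-((u p ^ (c-1))*Complex.I*((m:ℂ)+1)*(p.2:ℂ)*(p.1:ℂ)^(m+2)*(p.1:ℂ)^(m+1))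
          + Complex.I^2*(u p ^ (c-1))*(p.1:ℂ)^(m+2)) * hcK'
        + (-(p.1:ℂ)^(m+2)*(u p ^ (c-1))) * Complex.I_sq
        + ((p.1:ℂ)^(m+2)) * hUp
        + ((p.1:ℂ)^2*(p.1:ℂ)^m*((m:ℂ)+1)*Complex.I*(p.2:ℂ)*(1 - u p ^ (c-1))) * hxe
        + ((p.1:ℂ)^2*(p.1:ℂ)^m*(p.1:ℂ)^(m+2-1)*Complex.I*(p.2:ℂ)*(1 - u p ^ (c-1))) * hce
end
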